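/- arXiv:2408.14365 — 11 statements merged into one kernel-verified Lean document; each statement's English description precedes it below -/
import Mathlib

section
/- For all integers n ≥ 0, the number of partitions of n with more odd parts than even parts is at least the number of partitions of n with more even parts than odd parts. -/
/-- The number of parts of the multiset `μ` congruent to `a` modulo `m`. -/
def countRes (m a : ℕ) (μ : Multiset ℕ) : ℕ :=
  (μ.filter (fun p => p % m = a % m)).card

namespace ParityBiasAux

/-- odd parts -/
def oddsOf (s : Multiset ℕ) : Multiset ℕ := s.filter (fun p => p % 2 = 1)
/-- even parts -/
def evensOf (s : Multiset ℕ) : Multiset ℕ := s.filter (fun p => p % 2 = 0)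

lemma odds_add_evens (s : Multiset ℕ) : oddsOf s + evensOf s = s := by
  rw [oddsOf, evensOf]
  rw [show (s.filter (fun p => p % 2 = 0)) = s.filter (fun p => ¬ p % 2 = 1) by
    apply Multiset.filter_congr; intro x _; constructor <;> omega]
  exact Multiset.filter_add_not _ s

lemma sum_map_pred (s : Multiset ℕ) (h : ∀ p ∈ s, 1 ≤ p) :
    (s.map (· - 1)).sum + Multiset.card s = s.sum := by
  induction s using Multiset.induction_on with
  | empty => simp
  | cons a s ih =>
      simp only [Multiset.map_cons, Multiset.sum_cons, Multiset.card_cons]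
      have ha : 1 ≤ a := h a (Multiset.mem_cons_self a s)
      have := ih (fun p hp => h p (Multiset.mem_cons_of_mem hp))
      omega

lemma sum_map_succ (s : Multiset ℕ) :
    (s.map (· + 1)).sum = s.sum + Multiset.card s := by
  induction s using Multiset.induction_on with
  | empty => simp
  | cons a s ih =>
      simp only [Multiset.map_cons, Multiset.sum_cons, Multiset.card_cons]
      omega

/-- the multiset of the image partition -/
def phiParts (s : Multiset ℕ) : Multiset ℕ :=
  (oddsOf s).map (· + 1) +
    ((evensOf s).map (· - 1) +
      Multiset.replicate (Multiset.card (evensOf s) - Multiset.card (oddsOf s)) 1)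

lemma evens_phiParts (s : Multiset ℕ) (hpos : ∀ p ∈ s, 0 < p) :
    evensOf (phiParts s) = (oddsOf s).map (· + 1) := by
  rw [phiParts, evensOf, Multiset.filter_add, Multiset.filter_add]
  have h1 : Multiset.filter (fun p => p % 2 = 0) ((oddsOf s).map (· + 1))
      = (oddsOf s).map (· + 1) := by
    apply Multiset.filter_eq_self.2
    intro a ha
    obtain ⟨b, hb, rfl⟩ := Multiset.mem_map.1 ha
    have := (Multiset.mem_filter.1 hb).2
    omega
  have h2 : Multiset.filter (fun p => p % 2 = 0) ((evensOf s).map (· - 1))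
      = 0 := by
    apply Multiset.filter_eq_nil.2
    intro a ha
    obtain ⟨b, hb, rfl⟩ := Multiset.mem_map.1 ha
    have h3 := (Multiset.mem_filter.1 hb).2
    have h4 := hpos b (Multiset.mem_filter.1 hb).1
    omega
  have h3 : Multiset.filter (fun p => p % 2 = 0)
      (Multiset.replicate (Multiset.card (evensOf s) - Multiset.card (oddsOf s)) 1) = 0 := by
    apply Multiset.filter_eq_nil.2
    intro a ha
    have := Multiset.eq_of_mem_replicate ha
    omega
  rw [h1, h2, h3, add_zero, add_zero]

lemma odds_phiParts (s : Multiset ℕ) (hpos : ∀ p ∈ s, 0 < p) :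
    oddsOf (phiParts s) = (evensOf s).map (· - 1) +
      Multiset.replicate (Multiset.card (evensOf s) - Multiset.card (oddsOf s)) 1 := by
  rw [phiParts, oddsOf, Multiset.filter_add, Multiset.filter_add]
  have h1 : Multiset.filter (fun p => p % 2 = 1) ((oddsOf s).map (· + 1)) = 0 := by
    apply Multiset.filter_eq_nil.2
    intro a ha
    obtain ⟨b, hb, rfl⟩ := Multiset.mem_map.1 ha
    have := (Multiset.mem_filter.1 hb).2
    omega
  have h2 : Multiset.filter (fun p => p % 2 = 1) ((evensOf s).map (· - 1))
      = (evensOf s).map (· - 1) := by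
    apply Multiset.filter_eq_self.2
    intro a ha
    obtain ⟨b, hb, rfl⟩ := Multiset.mem_map.1 ha
    have h3 := (Multiset.mem_filter.1 hb).2
    have h4 := hpos b (Multiset.mem_filter.1 hb).1
    omega
  have h3 : Multiset.filter (fun p => p % 2 = 1)
      (Multiset.replicate (Multiset.card (evensOf s) - Multiset.card (oddsOf s)) 1)
      = Multiset.replicate (Multiset.card (evensOf s) - Multiset.card (oddsOf s)) 1 := by
    apply Multiset.filter_eq_self.2
    intro a ha
    have := Multiset.eq_of_mem_replicate ha
    omega
  rw [h1, h2, h3, zero_add]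

lemma phiParts_sum {n : ℕ} (lam : n.Partition)
    (h : Multiset.card (oddsOf lam.parts) < Multiset.card (evensOf lam.parts)) :
    (phiParts lam.parts).sum = n := by
  have hsplit : (oddsOf lam.parts).sum + (evensOf lam.parts).sum = n := by
    rw [← Multiset.sum_add, odds_add_evens, lam.parts_sum]
  have hpred : ((evensOf lam.parts).map (· - 1)).sum + Multiset.card (evensOf lam.parts)
      = (evensOf lam.parts).sum := by
    apply sum_map_pred
    intro p hp
    exact lam.parts_pos (Multiset.mem_filter.1 hp).1
  rw [phiParts, Multiset.sum_add, Multiset.sum_add, sum_map_succ,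
    Multiset.sum_replicate, smul_eq_mul, mul_one]
  omega

lemma phiParts_pos {n : ℕ} (lam : n.Partition) :
    ∀ p ∈ phiParts lam.parts, 0 < p := by
  intro p hp
  rw [phiParts] at hp
  rcases Multiset.mem_add.1 hp with h | h
  · obtain ⟨b, hb, rfl⟩ := Multiset.mem_map.1 h
    omega
  rcases Multiset.mem_add.1 h with h | h
  · obtain ⟨b, hb, rfl⟩ := Multiset.mem_map.1 h
    have h3 := (Multiset.mem_filter.1 hb).2
    have h4 := lam.parts_pos (Multiset.mem_filter.1 hb).1
    omega
  · have := Multiset.eq_of_mem_replicate h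
    omega

/-- The injection. -/
def phi {n : ℕ} (lam : n.Partition) : n.Partition :=
  if h : Multiset.card (oddsOf lam.parts) < Multiset.card (evensOf lam.parts) then
    ⟨phiParts lam.parts, fun hi => phiParts_pos lam _ hi, phiParts_sum lam h⟩
  else lam

lemma countRes_odd (s : Multiset ℕ) :
    countRes 2 1 s = Multiset.card (oddsOf s) := rfl

lemma countRes_even (s : Multiset ℕ) :
    countRes 2 2 s = Multiset.card (evensOf s) := by
  simp only [countRes, evensOf, Nat.reduceMod]

lemma map_pred_inj (s t : Multiset ℕ) (hs : ∀ p ∈ s, 1 ≤ p) (ht : ∀ p ∈ t, 1 ≤ p)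
    (h : s.map (· - 1) = t.map (· - 1)) : s = t := by
  have key : ∀ u : Multiset ℕ, (∀ p ∈ u, 1 ≤ p) → (u.map (· - 1)).map (· + 1) = u := by
    intro u hu
    rw [Multiset.map_map]
    calc u.map ((· + 1) ∘ (· - 1)) = u.map id := by
          apply Multiset.map_congr rfl
          intro x hx
          have := hu x hx
          simp only [Function.comp_apply, id_eq]
          omega
      _ = u := Multiset.map_id u
  rw [← key s hs, ← key t ht, h]

end ParityBiasAux

open ParityBiasAux in
/-- For every `n ≥ 0`, the number of partitions of `n` with more odd parts than
even parts is at least the number of partitions of `n` with more even parts than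
odd parts. -/
theorem parity_bias_partitions (n : ℕ) :
    (Finset.univ.filter (fun lam : n.Partition =>
        countRes 2 1 lam.parts < countRes 2 2 lam.parts)).card ≤
    (Finset.univ.filter (fun lam : n.Partition =>
        countRes 2 2 lam.parts < countRes 2 1 lam.parts)).card := by
  apply Finset.card_le_card_of_injOn phi
  · intro lam hlam
    rw [Finset.mem_coe, Finset.mem_filter] at hlam ⊢
    refine ⟨Finset.mem_univ _, ?_⟩
    have h : Multiset.card (oddsOf lam.parts) < Multiset.card (evensOf lam.parts) := by
      rw [countRes_odd, countRes_even] at hlam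
      exact hlam.2
    rw [phi, dif_pos h]
    rw [countRes_odd, countRes_even]
    simp only
    rw [evens_phiParts lam.parts (fun p hp => lam.parts_pos hp),
      odds_phiParts lam.parts (fun p hp => lam.parts_pos hp)]
    simp only [Multiset.card_map, Multiset.card_add, Multiset.card_replicate]
    omega
  · intro a ha b hb hab
    rw [Finset.coe_filter, Set.mem_setOf_eq] at ha hb
    have hA : Multiset.card (oddsOf a.parts) < Multiset.card (evensOf a.parts) := by
      rw [countRes_odd, countRes_even] at ha; exact ha.2
    have hB : Multiset.card (oddsOf b.parts) < Multiset.card (evensOf b.parts) := by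
      rw [countRes_odd, countRes_even] at hb; exact hb.2
    rw [phi, dif_pos hA, phi, dif_pos hB] at hab
    have hparts : phiParts a.parts = phiParts b.parts := congrArg Nat.Partition.parts hab
    have hposa : ∀ p ∈ a.parts, 0 < p := fun p hp => a.parts_pos hp
    have hposb : ∀ p ∈ b.parts, 0 < p := fun p hp => b.parts_pos hp
    -- odds agree
    have hevens : (oddsOf a.parts).map (· + 1) = (oddsOf b.parts).map (· + 1) := by
      rw [← evens_phiParts a.parts hposa, ← evens_phiParts b.parts hposb, hparts]
    have hodds_eq : oddsOf a.parts = oddsOf b.parts :=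
      Multiset.map_injective (fun x y h => by omega) hevens
    -- cardinalities agree
    have hodds : (evensOf a.parts).map (· - 1) +
        Multiset.replicate (Multiset.card (evensOf a.parts) - Multiset.card (oddsOf a.parts)) 1
        = (evensOf b.parts).map (· - 1) +
        Multiset.replicate (Multiset.card (evensOf b.parts) - Multiset.card (oddsOf b.parts)) 1 := by
      rw [← odds_phiParts a.parts hposa, ← odds_phiParts b.parts hposb, hparts]
    have hcard := congrArg Multiset.card hodds
    simp only [Multiset.card_add, Multiset.card_map, Multiset.card_replicate] at hcard
    have hocard : Multiset.card (oddsOf a.parts) = Multiset.card (oddsOf b.parts) := by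
      rw [hodds_eq]
    have hecard : Multiset.card (evensOf a.parts) = Multiset.card (evensOf b.parts) := by
      omega
    rw [hocard, hecard] at hodds
    have hmap : (evensOf a.parts).map (· - 1) = (evensOf b.parts).map (· - 1) :=
      add_right_cancel hodds
    have hevens_eq : evensOf a.parts = evensOf b.parts := by
      apply map_pred_inj _ _ ?_ ?_ hmap
      · intro p hp; exact a.parts_pos (Multiset.mem_filter.1 hp).1
      · intro p hp; exact b.parts_pos (Multiset.mem_filter.1 hp).1
    apply Nat.Partition.ext
    rw [← odds_add_evens a.parts, ← odds_add_evens b.parts, hodds_eq, hevens_eq]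
end

section
/- Let m ≥ 2 be an integer. For all n ≥ 0, the number of partitions of n with more parts congruent to 1 mod m than parts congruent to 0 mod m is at least the number of partitions of n with more parts congruent to 0 mod m than parts congruent to 1 mod m. -/
/-- Swap the residues 0 and 1 mod `m`. -/
def fswap (m p : ℕ) : ℕ :=
  if p % m = 0 then p - (m - 1) else if p % m = 1 then p + (m - 1) else p

lemma fswap_mod0 {m p : ℕ} (hm : 2 ≤ m) (hp : p % m = 0) (hp0 : p ≠ 0) :
    (p - (m - 1)) % m = 1 := by
  obtain ⟨k, rfl⟩ := Nat.dvd_of_mod_eq_zero hp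
  obtain ⟨j, rfl⟩ : ∃ j, k = j + 1 := ⟨k - 1, by rcases k with _ | k <;> simp_all⟩
  have h1 : m * (j + 1) - (m - 1) = m * j + 1 := by
    have := Nat.mul_le_mul_left m (Nat.le_add_left 1 j)
    rw [Nat.mul_add, Nat.mul_one]
    omega
  rw [h1, Nat.add_comm, Nat.add_mul_mod_self_left]
  exact Nat.mod_eq_of_lt hm

lemma fswap_mod1 {m p : ℕ} (hm : 2 ≤ m) (hp : p % m = 1) :
    (p + (m - 1)) % m = 0 := by
  have h := Nat.div_add_mod p m
  have h1 : p + (m - 1) = m * (p / m + 1) := by rw [Nat.mul_add, Nat.mul_one]; omega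
  rw [h1, Nat.mul_mod_right]

lemma fswap_ge {m p : ℕ} (hm : 2 ≤ m) (hp0 : p ≠ 0) (hp : p % m = 0) : m ≤ p :=
  Nat.le_of_dvd (Nat.pos_of_ne_zero hp0) (Nat.dvd_of_mod_eq_zero hp)

lemma one_mod {m : ℕ} (hm : 2 ≤ m) : 1 % m = 1 := Nat.mod_eq_of_lt hm

lemma fswap_involutive {m : ℕ} (hm : 2 ≤ m) : Function.Involutive (fswap m) := by
  intro p
  unfold fswap
  rcases eq_or_ne (p % m) 0 with h0 | h0
  · rcases eq_or_ne p 0 with rfl | hp0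
    · simp
    · have hge := fswap_ge hm hp0 h0
      have h1 := fswap_mod0 hm h0 hp0
      rw [if_pos h0, if_neg (by omega), if_pos h1]
      omega
  · rcases eq_or_ne (p % m) 1 with h1 | h1
    · have h2 := fswap_mod1 hm h1
      rw [if_neg h0, if_pos h1, if_pos h2]
      have : p % m < m := Nat.mod_lt _ (by omega)
      omega
    · rw [if_neg h0, if_neg h1, if_neg h0, if_neg h1]

lemma fswap_inj {m : ℕ} (hm : 2 ≤ m) : Function.Injective (fswap m) :=
  (fswap_involutive hm).injective

lemma fswap_pos {m : ℕ} (hm : 2 ≤ m) {p : ℕ} (hp : 0 < p) : 0 < fswap m p := by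
  unfold fswap
  rcases eq_or_ne (p % m) 0 with h0 | h0
  · have := fswap_ge hm (by omega) h0
    rw [if_pos h0]; omega
  · rw [if_neg h0]; split <;> omega

/-- Key sum identity. -/
lemma fswap_sum {m : ℕ} (hm : 2 ≤ m) (s : Multiset ℕ) (hs : ∀ p ∈ s, 0 < p) :
    (s.map (fswap m)).sum + (s.filter (fun p => p % m = 0)).card * (m - 1)
      = s.sum + (s.filter (fun p => p % m = 1)).card * (m - 1) := by
  induction s using Multiset.induction_on with
  | empty => simp
  | cons p s ih =>
    have hp : 0 < p := hs p (Multiset.mem_cons_self _ _)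
    have ih' := ih (fun q hq => hs q (Multiset.mem_cons_of_mem hq))
    rw [Multiset.map_cons, Multiset.sum_cons, Multiset.sum_cons,
      Multiset.filter_cons, Multiset.filter_cons]
    rcases eq_or_ne (p % m) 0 with h0 | h0
    · have hge := fswap_ge hm (by omega) h0
      have hf : fswap m p = p - (m - 1) := if_pos h0
      rw [hf, if_pos h0, if_neg (by omega)]
      simp only [Multiset.card_add, Multiset.card_singleton, Multiset.card_zero, zero_add,
        Nat.add_mul, Nat.one_mul]
      omega
    · rcases eq_or_ne (p % m) 1 with h1 | h1
      · have hf : fswap m p = p + (m - 1) := by rw [fswap, if_neg h0, if_pos h1]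
        rw [hf, if_neg h0, if_pos h1]
        simp only [Multiset.card_add, Multiset.card_singleton, Multiset.card_zero, zero_add,
          Nat.add_mul, Nat.one_mul]
        omega
      · have hf : fswap m p = p := by rw [fswap, if_neg h0, if_neg h1]
        rw [hf, if_neg h0, if_neg h1]
        simp only [Multiset.card_zero, zero_add]
        omega

/-- Counting parts ≡ 0 after the swap. -/
lemma fswap_count0 {m : ℕ} (hm : 2 ≤ m) (s : Multiset ℕ) (hs : ∀ p ∈ s, 0 < p) :
    ((s.map (fswap m)).filter (fun p => p % m = 0)).card
      = (s.filter (fun p => p % m = 1)).card := by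
  induction s using Multiset.induction_on with
  | empty => simp
  | cons p s ih =>
    have hp : 0 < p := hs p (Multiset.mem_cons_self _ _)
    have ih' := ih (fun q hq => hs q (Multiset.mem_cons_of_mem hq))
    rw [Multiset.map_cons, Multiset.filter_cons, Multiset.filter_cons]
    rcases eq_or_ne (p % m) 0 with h0 | h0
    · have hf : fswap m p = p - (m - 1) := if_pos h0
      have := fswap_mod0 hm h0 (by omega)
      rw [hf, if_neg (by omega), if_neg (by omega)]
      simpa using ih'
    · rcases eq_or_ne (p % m) 1 with h1 | h1
      · have hf : fswap m p = p + (m - 1) := by rw [fswap, if_neg h0, if_pos h1]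
        have := fswap_mod1 hm h1
        rw [hf, if_pos (by omega), if_pos h1]
        simpa using ih'
      · have hf : fswap m p = p := by rw [fswap, if_neg h0, if_neg h1]
        rw [hf, if_neg h0, if_neg h1]
        simpa using ih'

/-- Counting parts ≡ 1 after the swap. -/
lemma fswap_count1 {m : ℕ} (hm : 2 ≤ m) (s : Multiset ℕ) (hs : ∀ p ∈ s, 0 < p) :
    ((s.map (fswap m)).filter (fun p => p % m = 1)).card
      = (s.filter (fun p => p % m = 0)).card := by
  induction s using Multiset.induction_on with
  | empty => simp
  | cons p s ih =>
    have hp : 0 < p := hs p (Multiset.mem_cons_self _ _)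
    have ih' := ih (fun q hq => hs q (Multiset.mem_cons_of_mem hq))
    rw [Multiset.map_cons, Multiset.filter_cons, Multiset.filter_cons]
    rcases eq_or_ne (p % m) 0 with h0 | h0
    · have hf : fswap m p = p - (m - 1) := if_pos h0
      have := fswap_mod0 hm h0 (by omega)
      rw [hf, if_pos (by omega), if_pos h0]
      simpa using ih'
    · rcases eq_or_ne (p % m) 1 with h1 | h1
      · have hf : fswap m p = p + (m - 1) := by rw [fswap, if_neg h0, if_pos h1]
        have := fswap_mod1 hm h1
        rw [hf, if_neg (by omega), if_neg h0]
        simpa using ih'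
      · have hf : fswap m p = p := by rw [fswap, if_neg h0, if_neg h1]
        rw [hf, if_neg h1, if_neg h0]
        simpa using ih'

lemma filter_replicate_one_mod0 {m : ℕ} (hm : 2 ≤ m) (d : ℕ) :
    (Multiset.replicate d 1).filter (fun p => p % m = 0) = 0 := by
  rw [Multiset.filter_eq_nil]
  intro a ha
  rw [Multiset.eq_of_mem_replicate ha]
  simp [one_mod hm]

lemma filter_replicate_one_mod1 {m : ℕ} (hm : 2 ≤ m) (d : ℕ) :
    (Multiset.replicate d 1).filter (fun p => p % m = 1) = Multiset.replicate d 1 := by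
  rw [Multiset.filter_eq_self]
  intro a ha
  rw [Multiset.eq_of_mem_replicate ha]
  simp [one_mod hm]

section main
variable {m : ℕ} (hm : 2 ≤ m) {n : ℕ}

/-- abbreviations for the two counts -/
def c0 (m : ℕ) (s : Multiset ℕ) : ℕ := (s.filter (fun p => p % m = 0)).card
def c1 (m : ℕ) (s : Multiset ℕ) : ℕ := (s.filter (fun p => p % m = 1)).card

lemma countRes_m (hm : 2 ≤ m) (s : Multiset ℕ) : countRes m m s = c0 m s := by
  simp [countRes, c0, Nat.mod_self]

lemma countRes_1 (hm : 2 ≤ m) (s : Multiset ℕ) : countRes m 1 s = c1 m s := by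
  simp [countRes, c1, one_mod hm]

/-- The new multiset of parts. -/
def newParts (m : ℕ) (s : Multiset ℕ) : Multiset ℕ :=
  s.map (fswap m) + Multiset.replicate ((c0 m s - c1 m s) * (m - 1)) 1

lemma newParts_pos (hm : 2 ≤ m) (s : Multiset ℕ) (hs : ∀ p ∈ s, 0 < p) :
    ∀ q ∈ newParts m s, 0 < q := by
  intro q hq
  rw [newParts, Multiset.mem_add] at hq
  rcases hq with hq | hq
  · obtain ⟨p, hp, rfl⟩ := Multiset.mem_map.mp hq
    exact fswap_pos hm (hs p hp)
  · rw [Multiset.eq_of_mem_replicate hq]; exact one_pos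

lemma newParts_sum (hm : 2 ≤ m) (s : Multiset ℕ) (hs : ∀ p ∈ s, 0 < p)
    (hlt : c1 m s ≤ c0 m s) : (newParts m s).sum = s.sum := by
  have key := fswap_sum hm s hs
  have h1 : (newParts m s).sum = (s.map (fswap m)).sum + (c0 m s - c1 m s) * (m - 1) := by
    simp [newParts, Multiset.sum_replicate]
  have h2 : (c0 m s - c1 m s) * (m - 1) + c1 m s * (m - 1) = c0 m s * (m - 1) := by
    rw [← Nat.add_mul]; congr 1; omega
  unfold c0 c1 at h1 h2
  omega

lemma newParts_c0 (hm : 2 ≤ m) (s : Multiset ℕ) (hs : ∀ p ∈ s, 0 < p) :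
    c0 m (newParts m s) = c1 m s := by
  rw [c0, newParts, Multiset.filter_add, filter_replicate_one_mod0 hm]
  simpa [c1] using fswap_count0 hm s hs

lemma newParts_c1 (hm : 2 ≤ m) (s : Multiset ℕ) (hs : ∀ p ∈ s, 0 < p) :
    c1 m (newParts m s) = c0 m s + (c0 m s - c1 m s) * (m - 1) := by
  rw [c1, newParts, Multiset.filter_add, filter_replicate_one_mod1 hm,
    Multiset.card_add, Multiset.card_replicate]
  congr 1
  exact fswap_count1 hm s hs

/-- The injection on partitions. -/
noncomputable def F (hm : 2 ≤ m) (lam : n.Partition) : n.Partition :=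
  if h : c1 m lam.parts < c0 m lam.parts then
    { parts := newParts m lam.parts
      parts_pos := fun hi => newParts_pos hm lam.parts (fun p hp => lam.parts_pos hp) _ hi
      parts_sum := by
        rw [newParts_sum hm lam.parts (fun p hp => lam.parts_pos hp) (le_of_lt h)]
        exact lam.parts_sum }
  else lam

lemma F_parts (hm : 2 ≤ m) (lam : n.Partition) (h : c1 m lam.parts < c0 m lam.parts) :
    (F hm lam).parts = newParts m lam.parts := by
  rw [F, dif_pos h]

end main

/-- For `m ≥ 2` and every `n ≥ 0`, the number of partitions of `n` with more
parts `≡ 1 (mod m)` than parts `≡ 0 (mod m)` is at least the number of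
partitions of `n` with more parts `≡ 0 (mod m)` than parts `≡ 1 (mod m)`. -/
theorem bias_one_vs_zero_mod_m (m : ℕ) (hm : 2 ≤ m) (n : ℕ) :
    (Finset.univ.filter (fun lam : n.Partition =>
        countRes m 1 lam.parts < countRes m m lam.parts)).card ≤
    (Finset.univ.filter (fun lam : n.Partition =>
        countRes m m lam.parts < countRes m 1 lam.parts)).card := by
  apply Finset.card_le_card_of_injOn (F hm)
  · intro lam hlam
    rw [Finset.mem_coe, Finset.mem_filter] at hlam ⊢
    rw [countRes_1 hm, countRes_m hm] at hlam
    have h := hlam.2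
    have hpos : ∀ p ∈ lam.parts, 0 < p := fun p hp => lam.parts_pos hp
    refine ⟨Finset.mem_univ _, ?_⟩
    rw [countRes_1 hm, countRes_m hm, F_parts hm lam h,
      newParts_c0 hm _ hpos, newParts_c1 hm _ hpos]
    have : 0 < (c0 m lam.parts - c1 m lam.parts) * (m - 1) :=
      Nat.mul_pos (by omega) (by omega)
    omega
  · intro lam1 h1 lam2 h2 heq
    simp only [Finset.coe_filter, Set.mem_setOf_eq, Finset.mem_univ, true_and,
      countRes_1 hm, countRes_m hm] at h1 h2
    have hp1 : ∀ p ∈ lam1.parts, 0 < p := fun p hp => lam1.parts_pos hp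
    have hp2 : ∀ p ∈ lam2.parts, 0 < p := fun p hp => lam2.parts_pos hp
    have hparts : newParts m lam1.parts = newParts m lam2.parts := by
      rw [← F_parts hm lam1 h1, ← F_parts hm lam2 h2, heq]
    -- equal c1 counts
    have hc1 : c1 m lam1.parts = c1 m lam2.parts := by
      have := congrArg (c0 m) hparts
      rwa [newParts_c0 hm _ hp1, newParts_c0 hm _ hp2] at this
    -- equal c0 counts
    have hc0 : c0 m lam1.parts = c0 m lam2.parts := by
      have h := congrArg (c1 m) hparts
      rw [newParts_c1 hm _ hp1, newParts_c1 hm _ hp2] at h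
      set a := c0 m lam1.parts
      set b := c0 m lam2.parts
      set c := c1 m lam1.parts
      have hca : c < a := h1
      have hcb : c < b := by rw [hc1]; exact h2
      rw [← hc1] at h
      have ha : a + (a - c) * (m - 1) = c + (a - c) * m := by
        have : (a - c) * m = (a - c) * (m - 1) + (a - c) := by
          rw [← Nat.mul_succ]; congr 1; omega
        omega
      have hb : b + (b - c) * (m - 1) = c + (b - c) * m := by
        have : (b - c) * m = (b - c) * (m - 1) + (b - c) := by
          rw [← Nat.mul_succ]; congr 1; omega
        omega
      rw [ha, hb] at h
      have : (a - c) * m = (b - c) * m := by omega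
      have := Nat.eq_of_mul_eq_mul_right (show 0 < m by omega) this
      omega
    -- cancel the replicate part
    have hmap : lam1.parts.map (fswap m) = lam2.parts.map (fswap m) := by
      rw [newParts, newParts, hc0, hc1] at hparts
      exact add_right_cancel hparts
    exact Nat.Partition.ext (Multiset.map_injective (fswap_inj hm) hmap)
end

section
/- Let a, b, m be integers with 1 ≤ a < b ≤ m. Then for all n ≥ 0, the number of overpartitions of n in which the parts congruent to a mod m (counted with overlined and non-overlined parts together) outnumber the parts congruent to b mod m is at least the number of overpartitions of n in which the parts congruent to b mod m outnumber the parts congruent to a mod m. -/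
/-- The number of overpartitions of `n`, modeled as pairs `(λ, μ)` of a
partition `λ` and a distinct-parts partition `μ` with `|λ| + |μ| = n`, in which
the parts congruent to `a` mod `m` outnumber the parts congruent to `b` mod `m`. -/
def overBias (a b m n : ℕ) : ℕ :=
  ∑ kl ∈ Finset.HasAntidiagonal.antidiagonal n,
    ((Finset.univ : Finset (kl.1.Partition × kl.2.Partition)).filter
      (fun p => p.2.parts.Nodup ∧
        countRes m b p.1.parts + countRes m b p.2.parts <
          countRes m a p.1.parts + countRes m a p.2.parts)).card

/-!
Let `σ` add `b - a` to the positive integers `≡ a` and subtract it from those `≡ b (mod m)`.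
Because `b ≤ m`, a positive `p ≡ b` satisfies `p ≥ b`, so `σ` is an involution of the positive
integers exchanging the two residue classes. Applied to both components of an overpartition
`(λ, μ)` it exchanges the numbers `A` and `B` of parts `≡ a` and `≡ b`, keeps the parts of `μ`
distinct, and lowers the size by `(b - a)(B - A)`. When `B > A`, adding `(b - a)(B - A)` parts `1`
to `λ` (never `≡ b`, as `1 < b ≤ m`) restores the size and yields an overpartition with more parts
`≡ a` than `≡ b`. This is injective: the image has `(1 + c)(B - A)` more parts `≡ a` than `≡ b`,
with `c = b - a` if `1 ≡ a` and `c = 0` otherwise, so it determines `B - A` and hence `(λ, μ)`.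
-/

open Finset

namespace OverpartitionBias

section ResidueSwap

variable {m a b p : ℕ}

theorem le_of_mod_eq_mod (hbm : b ≤ m) (hp : 0 < p) (h : p % m = b % m) : b ≤ p := by
  rcases hbm.lt_or_eq with hbm | rfl
  · rw [Nat.mod_eq_of_lt hbm] at h
    exact h.ge.trans (Nat.mod_le p m)
  · rw [Nat.mod_self] at h
    exact Nat.le_of_dvd hp (Nat.dvd_of_mod_eq_zero h)

theorem mod_ne_mod_of_lt (ha : 0 < a) (hab : a < b) (hbm : b ≤ m) : a % m ≠ b % m := fun h =>
  absurd (le_of_mod_eq_mod hbm ha h) (not_le.mpr hab)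

def residueSwap (m a b p : ℕ) : ℕ :=
  if p % m = a % m then p + (b - a) else if p % m = b % m then p - (b - a) else p

theorem residueSwap_cases (ha : 0 < a) (hab : a < b) (hbm : b ≤ m) (hp : 0 < p) :
    (p % m = a % m ∧ residueSwap m a b p = p + (b - a) ∧ residueSwap m a b p % m = b % m) ∨
    (p % m = b % m ∧ b ≤ p ∧ residueSwap m a b p + (b - a) = p ∧
      residueSwap m a b p % m = a % m) ∨
    (p % m ≠ a % m ∧ p % m ≠ b % m ∧ residueSwap m a b p = p) := by
  by_cases hpa : p % m = a % m
  · refine .inl ⟨hpa, if_pos hpa, ?_⟩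
    rw [residueSwap, if_pos hpa]
    have h := Nat.ModEq.add_right (b - a) hpa
    rwa [Nat.add_sub_cancel' hab.le] at h
  by_cases hpb : p % m = b % m
  · have hbp := le_of_mod_eq_mod hbm hp hpb
    have hswap : residueSwap m a b p + (b - a) = p := by
      rw [residueSwap, if_neg hpa, if_pos hpb]
      omega
    refine .inr (.inl ⟨hpb, hbp, hswap, Nat.ModEq.add_right_cancel' (b - a) ?_⟩)
    rwa [hswap, Nat.add_sub_cancel' hab.le]
  · exact .inr (.inr ⟨hpa, hpb, by rw [residueSwap, if_neg hpa, if_neg hpb]⟩)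

theorem residueSwap_pos (ha : 0 < a) (hab : a < b) (hbm : b ≤ m) (hp : 0 < p) :
    0 < residueSwap m a b p := by
  rcases residueSwap_cases ha hab hbm hp with ⟨-, h, -⟩ | ⟨-, hbp, h, -⟩ | ⟨-, -, h⟩ <;> omega

theorem residueSwap_residueSwap (ha : 0 < a) (hab : a < b) (hbm : b ≤ m) (hp : 0 < p) :
    residueSwap m a b (residueSwap m a b p) = p := by
  have hne := mod_ne_mod_of_lt ha hab hbm
  have hq := residueSwap_pos ha hab hbm hp
  rcases residueSwap_cases ha hab hbm hp with h | h | ⟨-, -, h⟩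
  · rcases residueSwap_cases ha hab hbm hq with h' | h' | h' <;> omega
  · rcases residueSwap_cases ha hab hbm hq with h' | h' | h' <;> omega
  · rw [h, h]

theorem residueSwap_mod_eq_left_iff (ha : 0 < a) (hab : a < b) (hbm : b ≤ m) (hp : 0 < p) :
    residueSwap m a b p % m = a % m ↔ p % m = b % m := by
  have hne := mod_ne_mod_of_lt ha hab hbm
  rcases residueSwap_cases ha hab hbm hp with h | h | ⟨hpa, hpb, h⟩
  · omega
  · omega
  · rw [h]; exact iff_of_false hpa hpb

theorem residueSwap_mod_eq_right_iff (ha : 0 < a) (hab : a < b) (hbm : b ≤ m) (hp : 0 < p) :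
    residueSwap m a b p % m = b % m ↔ p % m = a % m := by
  have hne := mod_ne_mod_of_lt ha hab hbm
  rcases residueSwap_cases ha hab hbm hp with h | h | ⟨hpa, hpb, h⟩
  · omega
  · omega
  · rw [h]; exact iff_of_false hpb hpa

theorem residueSwap_add_mul_ite (ha : 0 < a) (hab : a < b) (hbm : b ≤ m) (hp : 0 < p) :
    residueSwap m a b p + (b - a) * (if p % m = b % m then 1 else 0) =
      p + (b - a) * (if p % m = a % m then 1 else 0) := by
  have hne := mod_ne_mod_of_lt ha hab hbm
  rcases residueSwap_cases ha hab hbm hp with h | h | h <;> split_ifs <;> omega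

end ResidueSwap

section CountRes

variable {m a b : ℕ} {s : Multiset ℕ}

theorem countRes_cons (c p : ℕ) (s : Multiset ℕ) :
    countRes m c (p ::ₘ s) = countRes m c s + if p % m = c % m then 1 else 0 := by
  simp only [countRes, ← Multiset.countP_eq_card_filter, Multiset.countP_cons]

theorem countRes_add (c : ℕ) (s t : Multiset ℕ) :
    countRes m c (s + t) = countRes m c s + countRes m c t := by
  simp only [countRes, Multiset.filter_add, Multiset.card_add]

theorem countRes_replicate (c k x : ℕ) :
    countRes m c (Multiset.replicate k x) = if x % m = c % m then k else 0 := by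
  induction k with
  | zero => simp [countRes]
  | succ k ih => split_ifs at ih ⊢ <;> simp_all [Multiset.replicate_succ, countRes_cons]

theorem countRes_map_residueSwap_left (ha : 0 < a) (hab : a < b) (hbm : b ≤ m)
    (hs : ∀ p ∈ s, 0 < p) : countRes m a (s.map (residueSwap m a b)) = countRes m b s := by
  rw [countRes, countRes, Multiset.filter_map, Multiset.card_map]
  exact congrArg _ (Multiset.filter_congr fun p hp =>
    residueSwap_mod_eq_left_iff ha hab hbm (hs p hp))

theorem countRes_map_residueSwap_right (ha : 0 < a) (hab : a < b) (hbm : b ≤ m)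
    (hs : ∀ p ∈ s, 0 < p) : countRes m b (s.map (residueSwap m a b)) = countRes m a s := by
  rw [countRes, countRes, Multiset.filter_map, Multiset.card_map]
  exact congrArg _ (Multiset.filter_congr fun p hp =>
    residueSwap_mod_eq_right_iff ha hab hbm (hs p hp))

theorem sum_map_residueSwap_add (ha : 0 < a) (hab : a < b) (hbm : b ≤ m)
    (hs : ∀ p ∈ s, 0 < p) :
    (s.map (residueSwap m a b)).sum + (b - a) * countRes m b s =
      s.sum + (b - a) * countRes m a s := by
  induction s using Multiset.induction_on with
  | empty => simp [countRes]
  | cons p s ih =>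
    have hp := residueSwap_add_mul_ite ha hab hbm (hs p (Multiset.mem_cons_self p s))
    have ih := ih fun q hq => hs q (Multiset.mem_cons_of_mem hq)
    simp only [Multiset.map_cons, Multiset.sum_cons, countRes_cons, mul_add]
    linarith

theorem map_residueSwap_map_residueSwap (ha : 0 < a) (hab : a < b) (hbm : b ≤ m)
    (hs : ∀ p ∈ s, 0 < p) : (s.map (residueSwap m a b)).map (residueSwap m a b) = s := by
  rw [Multiset.map_map]
  exact (Multiset.map_congr rfl fun p hp => residueSwap_residueSwap ha hab hbm (hs p hp)).trans
    s.map_id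

theorem nodup_map_residueSwap (ha : 0 < a) (hab : a < b) (hbm : b ≤ m)
    (hs : ∀ p ∈ s, 0 < p) (hnd : s.Nodup) : (s.map (residueSwap m a b)).Nodup :=
  hnd.map_on fun p hp q hq hpq => by
    rw [← residueSwap_residueSwap ha hab hbm (hs p hp), hpq,
      residueSwap_residueSwap ha hab hbm (hs q hq)]

end CountRes

abbrev PartitionPair : Type := Σ kl : ℕ × ℕ, kl.1.Partition × kl.2.Partition

namespace PartitionPair

def withSize (n : ℕ) : Finset PartitionPair :=
  (HasAntidiagonal.antidiagonal n).sigma fun _ => univ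

@[simp]
theorem mem_withSize {n : ℕ} {x : PartitionPair} : x ∈ withSize n ↔ x.1.1 + x.1.2 = n := by
  simp [withSize]

def ofParts (s t : Multiset ℕ) (hs : ∀ p ∈ s, 0 < p) (ht : ∀ p ∈ t, 0 < p) : PartitionPair :=
  ⟨(s.sum, t.sum), ⟨s, hs _, rfl⟩, ⟨t, ht _, rfl⟩⟩

theorem ext {x y : PartitionPair} (h₁ : x.2.1.parts = y.2.1.parts)
    (h₂ : x.2.2.parts = y.2.2.parts) : x = y := by
  obtain ⟨⟨k, l⟩, lam, mu⟩ := x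
  obtain ⟨⟨k', l'⟩, lam', mu'⟩ := y
  obtain rfl : k = k' := lam.parts_sum.symm.trans ((congrArg _ h₁).trans lam'.parts_sum)
  obtain rfl : l = l' := mu.parts_sum.symm.trans ((congrArg _ h₂).trans mu'.parts_sum)
  obtain rfl := Nat.Partition.ext h₁
  obtain rfl := Nat.Partition.ext h₂
  rfl

end PartitionPair

def residueCount (m c : ℕ) (x : PartitionPair) : ℕ :=
  countRes m c x.2.1.parts + countRes m c x.2.2.parts

theorem overBias_eq_card (a b m n : ℕ) :
    overBias a b m n = #{x ∈ PartitionPair.withSize n |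
      x.2.2.parts.Nodup ∧ residueCount m b x < residueCount m a x} := by
  rw [PartitionPair.withSize, filter_sigma, card_sigma]
  rfl

section BiasSwap

variable {m a b : ℕ}

def excess (m a b : ℕ) (x : PartitionPair) : ℕ :=
  residueCount m b x - residueCount m a x

theorem residueCount_eq_add_excess {x : PartitionPair}
    (hx : residueCount m a x ≤ residueCount m b x) :
    residueCount m b x = residueCount m a x + excess m a b x :=
  (Nat.add_sub_of_le hx).symm

def biasSwap (ha : 0 < a) (hab : a < b) (hbm : b ≤ m) (x : PartitionPair) : PartitionPair :=
  PartitionPair.ofParts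
    (x.2.1.parts.map (residueSwap m a b) + Multiset.replicate ((b - a) * excess m a b x) 1)
    (x.2.2.parts.map (residueSwap m a b))
    (fun p hp => by
      rcases Multiset.mem_add.mp hp with hp | hp
      · obtain ⟨q, hq, rfl⟩ := Multiset.mem_map.mp hp
        exact residueSwap_pos ha hab hbm (x.2.1.parts_pos hq)
      · rw [Multiset.eq_of_mem_replicate hp]
        exact Nat.one_pos)
    (fun p hp => by
      obtain ⟨q, hq, rfl⟩ := Multiset.mem_map.mp hp
      exact residueSwap_pos ha hab hbm (x.2.2.parts_pos hq))

variable (ha : 0 < a) (hab : a < b) (hbm : b ≤ m) {x : PartitionPair}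

theorem residueCount_right_biasSwap :
    residueCount m b (biasSwap ha hab hbm x) = residueCount m a x := by
  have h1b : 1 % m ≠ b % m := mod_ne_mod_of_lt Nat.one_pos (by omega) hbm
  simp only [residueCount, biasSwap, PartitionPair.ofParts, countRes_add, countRes_replicate,
    if_neg h1b, add_zero, countRes_map_residueSwap_right ha hab hbm fun _ => x.2.1.parts_pos,
    countRes_map_residueSwap_right ha hab hbm fun _ => x.2.2.parts_pos]

theorem residueCount_left_biasSwap (hx : residueCount m a x ≤ residueCount m b x) :
    residueCount m a (biasSwap ha hab hbm x) = residueCount m b (biasSwap ha hab hbm x) +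
      (1 + if 1 % m = a % m then b - a else 0) * excess m a b x := by
  rw [residueCount_right_biasSwap, add_mul, one_mul, ← add_assoc,
    ← residueCount_eq_add_excess hx]
  simp only [residueCount, biasSwap, PartitionPair.ofParts, countRes_add, countRes_replicate,
    countRes_map_residueSwap_left ha hab hbm fun _ => x.2.1.parts_pos,
    countRes_map_residueSwap_left ha hab hbm fun _ => x.2.2.parts_pos]
  split_ifs <;> ring

theorem size_biasSwap (hx : residueCount m a x ≤ residueCount m b x) :
    (biasSwap ha hab hbm x).1.1 + (biasSwap ha hab hbm x).1.2 = x.1.1 + x.1.2 := by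
  have hfst := sum_map_residueSwap_add ha hab hbm fun _ => x.2.1.parts_pos
  have hsnd := sum_map_residueSwap_add ha hab hbm fun _ => x.2.2.parts_pos
  have hexcess : (b - a) * residueCount m b x =
      (b - a) * residueCount m a x + (b - a) * excess m a b x := by
    rw [← mul_add, ← residueCount_eq_add_excess hx]
  simp only [biasSwap, PartitionPair.ofParts, Multiset.sum_add, Multiset.sum_replicate,
    smul_eq_mul, mul_one]
  simp only [residueCount, mul_add] at hexcess
  linarith [x.2.1.parts_sum, x.2.2.parts_sum]

theorem nodup_biasSwap (hx : x.2.2.parts.Nodup) : (biasSwap ha hab hbm x).2.2.parts.Nodup :=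
  nodup_map_residueSwap ha hab hbm (fun _ => x.2.2.parts_pos) hx

theorem biasSwap_injOn :
    Set.InjOn (biasSwap ha hab hbm) {x | residueCount m a x ≤ residueCount m b x} := by
  intro x hx y hy hxy
  have hexcess : excess m a b x = excess m a b y := by
    have h := congrArg (residueCount m a) hxy
    rw [residueCount_left_biasSwap ha hab hbm hx, residueCount_left_biasSwap ha hab hbm hy,
      hxy] at h
    exact Nat.eq_of_mul_eq_mul_left (by omega) (Nat.add_left_cancel h)
  have hfst : x.2.1.parts.map (residueSwap m a b) = y.2.1.parts.map (residueSwap m a b) := by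
    have h := congrArg (fun z => z.2.1.parts) hxy
    simpa only [biasSwap, PartitionPair.ofParts, hexcess, add_left_inj] using h
  have hsnd : x.2.2.parts.map (residueSwap m a b) = y.2.2.parts.map (residueSwap m a b) :=
    congrArg (fun z => z.2.2.parts) hxy
  refine PartitionPair.ext ?_ ?_
  · rw [← map_residueSwap_map_residueSwap ha hab hbm fun _ => x.2.1.parts_pos, hfst,
      map_residueSwap_map_residueSwap ha hab hbm fun _ => y.2.1.parts_pos]
  · rw [← map_residueSwap_map_residueSwap ha hab hbm fun _ => x.2.2.parts_pos, hsnd,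
      map_residueSwap_map_residueSwap ha hab hbm fun _ => y.2.2.parts_pos]

end BiasSwap

end OverpartitionBias

open OverpartitionBias

/-- For `1 ≤ a < b ≤ m` and all `n ≥ 0`, among overpartitions of `n`, those in
which parts `≡ a (mod m)` outnumber parts `≡ b (mod m)` are at least as
numerous as those in which parts `≡ b (mod m)` outnumber parts `≡ a (mod m)`. -/
theorem overpartition_residue_bias (a b m : ℕ) (ha : 1 ≤ a) (hab : a < b)
    (hbm : b ≤ m) (n : ℕ) :
    overBias b a m n ≤ overBias a b m n := by
  rw [overBias_eq_card, overBias_eq_card]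
  refine card_le_card_of_injOn (biasSwap ha hab hbm) ?_
    ((biasSwap_injOn ha hab hbm).mono fun x hx => (mem_filter.mp hx).2.2.le)
  intro x hx
  simp only [coe_filter, Set.mem_ofPred_eq, PartitionPair.mem_withSize] at hx ⊢
  obtain ⟨hsize, hnodup, hlt⟩ := hx
  refine ⟨(size_biasSwap ha hab hbm hlt.le).trans hsize, nodup_biasSwap ha hab hbm hnodup, ?_⟩
  have hexcess : 0 < excess m a b x := Nat.sub_pos_of_lt hlt
  rw [residueCount_left_biasSwap ha hab hbm hlt.le]
  exact Nat.lt_add_of_pos_right (Nat.mul_pos (by omega) hexcess)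
end

section
/- Let a, b, m be integers with 1 ≤ a < b ≤ m, and define p_n(a,b,m;x,y) = Σ x^{ℓ(λ)} y^{ℓ(μ)} over pairs (λ,μ) of a partition λ and a distinct-parts partition μ with |λ|+|μ| = n and ℓ_{a,m}(λ)+ℓ_{a,m}(μ) > ℓ_{b,m}(λ)+ℓ_{b,m}(μ). Then for all real x ≥ 1, y ≥ 0, and all n ≥ 0, p_n(a,b,m;x,y) ≥ p_n(b,a,m;x,y). -/
/-- The residue-weighted biased partition function
`p_n(a,b,m;x,y) = Σ x^{ℓ(λ)} y^{ℓ(μ)}`, summed over pairs `(λ, μ)` of a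
partition `λ` and a distinct-parts partition `μ` with `|λ| + |μ| = n` and
`ℓ_{a,m}(λ) + ℓ_{a,m}(μ) > ℓ_{b,m}(λ) + ℓ_{b,m}(μ)`. -/
noncomputable def pw (a b m : ℕ) (x y : ℝ) (n : ℕ) : ℝ :=
  ∑ kl ∈ Finset.HasAntidiagonal.antidiagonal n,
    ∑ p ∈ (Finset.univ : Finset (kl.1.Partition × kl.2.Partition)).filter
        (fun p => p.2.parts.Nodup ∧
          countRes m b p.1.parts + countRes m b p.2.parts <
            countRes m a p.1.parts + countRes m a p.2.parts),
      x ^ Multiset.card p.1.parts * y ^ Multiset.card p.2.parts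

set_option linter.unusedSectionVars false

namespace WRB

open Multiset

/-- The residue swap map. -/
def sw (a b m v : ℕ) : ℕ :=
  if v % m = a % m then v + (b - a) else if v % m = b % m then v - (b - a) else v

section
variable {a b m : ℕ} (ha : 1 ≤ a) (hab : a < b) (hbm : b ≤ m)
include ha hab hbm

lemma hma : a % m = a := Nat.mod_eq_of_lt (by omega)

lemma hDm : (b - a) % m = b - a := Nat.mod_eq_of_lt (by omega)

lemma hbma : b % m ≠ a % m := by
  rcases lt_or_eq_of_le hbm with h | h
  · rw [Nat.mod_eq_of_lt h, hma ha hab hbm]; omega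
  · subst h; rw [Nat.mod_self, hma ha hab hbm]; omega

lemma hDb : (b - a) % m ≠ b % m := by
  rw [hDm ha hab hbm]
  rcases lt_or_eq_of_le hbm with h | h
  · rw [Nat.mod_eq_of_lt h]; omega
  · subst h; rw [Nat.mod_self]; omega

lemma swa {v : ℕ} (hv : v % m = a % m) : sw a b m v = v + (b - a) := by
  rw [sw, if_pos hv]

lemma mod_vD {v : ℕ} (hv : v % m = a % m) : (v + (b - a)) % m = b % m := by
  have h1 : v % m = a := by rw [hv, hma ha hab hbm]
  rw [Nat.add_mod, h1, hDm ha hab hbm]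
  have h2 : a + (b - a) = b := by omega
  rw [h2]

lemma b_le {v : ℕ} (hv : v % m = b % m) (hp : 0 < v) : b ≤ v := by
  rcases lt_or_eq_of_le hbm with h | h
  · rw [Nat.mod_eq_of_lt h] at hv
    calc b = v % m := hv.symm
    _ ≤ v := Nat.mod_le v m
  · subst h; rw [Nat.mod_self] at hv
    exact Nat.le_of_dvd hp (Nat.dvd_of_mod_eq_zero hv)

lemma modsub {v : ℕ} (hv : v % m = b % m) (hp : 0 < v) : (v - (b - a)) % m = a % m := by
  have hbv := b_le ha hab hbm hv hp
  have hdvd : m ∣ v - b := (Nat.modEq_iff_dvd' hbv).mp hv.symm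
  obtain ⟨t, ht⟩ := hdvd
  have hveq : v - (b - a) = m * t + a := by omega
  rw [hveq, Nat.mul_add_mod]

lemma swb {v : ℕ} (hv : v % m = b % m) : sw a b m v = v - (b - a) := by
  rw [sw, if_neg, if_pos hv]
  rw [hv]; exact hbma ha hab hbm

lemma swo {v : ℕ} (h1 : v % m ≠ a % m) (h2 : v % m ≠ b % m) : sw a b m v = v := by
  rw [sw, if_neg h1, if_neg h2]

lemma sw_pos {v : ℕ} (hp : 0 < v) : 0 < sw a b m v := by
  by_cases h1 : v % m = a % m
  · rw [swa ha hab hbm h1]; omega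
  · by_cases h2 : v % m = b % m
    · rw [swb ha hab hbm h2]
      have := b_le ha hab hbm h2 hp; omega
    · rw [swo ha hab hbm h1 h2]; exact hp

lemma sw_sw {v : ℕ} (hp : 0 < v) : sw a b m (sw a b m v) = v := by
  by_cases h1 : v % m = a % m
  · rw [swa ha hab hbm h1, swb ha hab hbm (mod_vD ha hab hbm h1)]; omega
  · by_cases h2 : v % m = b % m
    · rw [swb ha hab hbm h2, swa ha hab hbm (modsub ha hab hbm h2 hp)]
      have := b_le ha hab hbm h2 hp; omega
    · rw [swo ha hab hbm h1 h2, swo ha hab hbm h1 h2]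

lemma sw_mod_a_iff {v : ℕ} (hp : 0 < v) : sw a b m v % m = a % m ↔ v % m = b % m := by
  by_cases h1 : v % m = a % m
  · rw [swa ha hab hbm h1, mod_vD ha hab hbm h1]
    constructor
    · intro h; exact absurd h (hbma ha hab hbm)
    · intro h; rw [h1] at h; exact absurd h.symm (hbma ha hab hbm)
  · by_cases h2 : v % m = b % m
    · rw [swb ha hab hbm h2, modsub ha hab hbm h2 hp]; simp [h2]
    · rw [swo ha hab hbm h1 h2]; simp [h1, h2]

lemma sw_mod_b_iff {v : ℕ} (hp : 0 < v) : sw a b m v % m = b % m ↔ v % m = a % m := by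
  by_cases h1 : v % m = a % m
  · rw [swa ha hab hbm h1, mod_vD ha hab hbm h1]; simp [h1]
  · by_cases h2 : v % m = b % m
    · rw [swb ha hab hbm h2, modsub ha hab hbm h2 hp]
      constructor
      · intro h; exact absurd h.symm (hbma ha hab hbm)
      · intro h; exact absurd h h1
    · rw [swo ha hab hbm h1 h2]; simp [h1, h2]


omit ha hab hbm in
lemma countRes_cons (c x : ℕ) (s : Multiset ℕ) :
    countRes m c (x ::ₘ s) = (if x % m = c % m then 1 else 0) + countRes m c s := by
  simp only [countRes, Multiset.filter_cons]
  split <;> simp [Nat.add_comm]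

omit ha hab hbm in
lemma countRes_add (c : ℕ) (s t : Multiset ℕ) :
    countRes m c (s + t) = countRes m c s + countRes m c t := by
  simp [countRes, Multiset.filter_add]

omit ha hab hbm in
lemma countRes_replicate (c K d : ℕ) :
    countRes m c (Multiset.replicate K d) = if d % m = c % m then K else 0 := by
  induction K with
  | zero => simp [countRes]
  | succ K ih =>
    rw [Multiset.replicate_succ, countRes_cons, ih]
    split <;> omega

lemma countRes_map_a (s : Multiset ℕ) (hs : ∀ p ∈ s, 0 < p) :
    countRes m a (s.map (sw a b m)) = countRes m b s := by
  induction s using Multiset.induction_on with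
  | empty => simp [countRes]
  | cons x s ih =>
    have hx : 0 < x := hs x (Multiset.mem_cons_self x s)
    rw [Multiset.map_cons, countRes_cons, countRes_cons,
      ih (fun p hp => hs p (Multiset.mem_cons_of_mem hp))]
    congr 1
    simp only [sw_mod_a_iff ha hab hbm hx]

lemma countRes_map_b (s : Multiset ℕ) (hs : ∀ p ∈ s, 0 < p) :
    countRes m b (s.map (sw a b m)) = countRes m a s := by
  induction s using Multiset.induction_on with
  | empty => simp [countRes]
  | cons x s ih =>
    have hx : 0 < x := hs x (Multiset.mem_cons_self x s)
    rw [Multiset.map_cons, countRes_cons, countRes_cons,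
      ih (fun p hp => hs p (Multiset.mem_cons_of_mem hp))]
    congr 1
    simp only [sw_mod_b_iff ha hab hbm hx]

lemma sum_map_sw (s : Multiset ℕ) (hs : ∀ p ∈ s, 0 < p) :
    (s.map (sw a b m)).sum + (b - a) * countRes m b s
      = s.sum + (b - a) * countRes m a s := by
  induction s using Multiset.induction_on with
  | empty => simp [countRes]
  | cons x s ih =>
    have hx : 0 < x := hs x (Multiset.mem_cons_self x s)
    have ih' := ih (fun p hp => hs p (Multiset.mem_cons_of_mem hp))
    rw [Multiset.map_cons, Multiset.sum_cons, Multiset.sum_cons, countRes_cons, countRes_cons]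
    set CA := countRes m a s with hCA
    set CB := countRes m b s with hCB
    set PA := (b - a) * CA with hPA
    set PB := (b - a) * CB with hPB
    by_cases h1 : x % m = a % m
    · have hne : ¬ (x % m = b % m) := by
        rw [h1]; intro h; exact hbma ha hab hbm h.symm
      rw [swa ha hab hbm h1, if_pos h1, if_neg hne]
      rw [Nat.mul_add, Nat.mul_add, Nat.mul_one, Nat.mul_zero, ← hPA, ← hPB]
      omega
    · by_cases h2 : x % m = b % m
      · rw [swb ha hab hbm h2, if_neg h1, if_pos h2]
        rw [Nat.mul_add, Nat.mul_add, Nat.mul_one, Nat.mul_zero, ← hPA, ← hPB]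
        have := b_le ha hab hbm h2 hx
        omega
      · rw [swo ha hab hbm h1 h2, if_neg h1, if_neg h2]
        rw [Nat.mul_add, Nat.mul_add, Nat.mul_zero, ← hPA, ← hPB]
        omega

lemma map_map_sw (s : Multiset ℕ) (hs : ∀ p ∈ s, 0 < p) :
    (s.map (sw a b m)).map (sw a b m) = s := by
  rw [Multiset.map_map]
  have : s.map (sw a b m ∘ sw a b m) = s.map id :=
    Multiset.map_congr rfl (fun x hx => sw_sw ha hab hbm (hs x hx))
  rw [this, Multiset.map_id]

lemma map_sw_pos (s : Multiset ℕ) (hs : ∀ p ∈ s, 0 < p) :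
    ∀ p ∈ s.map (sw a b m), 0 < p := by
  intro p hp
  obtain ⟨q, hq, rfl⟩ := Multiset.mem_map.mp hp
  exact sw_pos ha hab hbm (hs q hq)

lemma map_sw_nodup (s : Multiset ℕ) (hs : ∀ p ∈ s, 0 < p) (hnd : s.Nodup) :
    (s.map (sw a b m)).Nodup := by
  refine Multiset.Nodup.map_on ?_ hnd
  intro u hu v hv huv
  have := congrArg (sw a b m) huv
  rwa [sw_sw ha hab hbm (hs u hu), sw_sw ha hab hbm (hs v hv)] at this

lemma map_sw_inj (s t : Multiset ℕ) (hs : ∀ p ∈ s, 0 < p) (ht : ∀ p ∈ t, 0 < p)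
    (h : s.map (sw a b m) = t.map (sw a b m)) : s = t := by
  have := congrArg (Multiset.map (sw a b m)) h
  rwa [map_map_sw ha hab hbm s hs, map_map_sw ha hab hbm t ht] at this


end

/-- The index type for the double sums in `pw`. -/
abbrev Idx := Σ kl : ℕ × ℕ, kl.1.Partition × kl.2.Partition

def Kof (a b m : ℕ) (z : Idx) : ℕ :=
  (countRes m b z.2.1.parts + countRes m b z.2.2.parts)
    - (countRes m a z.2.1.parts + countRes m a z.2.2.parts)

def Lof (a b m : ℕ) (z : Idx) : Multiset ℕ :=
  z.2.1.parts.map (sw a b m) + Multiset.replicate (Kof a b m z) (b - a)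

def Mof (a b m : ℕ) (z : Idx) : Multiset ℕ := z.2.2.parts.map (sw a b m)

section
variable {a b m : ℕ} (ha : 1 ≤ a) (hab : a < b) (hbm : b ≤ m)
include ha hab hbm

lemma Lof_pos (z : Idx) : ∀ i ∈ Lof a b m z, 0 < i := by
  intro i hi
  rcases Multiset.mem_add.mp hi with h | h
  · exact map_sw_pos ha hab hbm _ (fun p hp => z.2.1.parts_pos hp) i h
  · rw [Multiset.eq_of_mem_replicate h]; omega

lemma Mof_pos (z : Idx) : ∀ i ∈ Mof a b m z, 0 < i :=
  map_sw_pos ha hab hbm _ (fun p hp => z.2.2.parts_pos hp)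

end

/-- The injection used to compare the two biased sums. -/
def Fm (a b m : ℕ) (ha : 1 ≤ a) (hab : a < b) (hbm : b ≤ m) (z : Idx) : Idx :=
  ⟨((Lof a b m z).sum, (Mof a b m z).sum),
   ⟨⟨Lof a b m z, fun {i} hi => Lof_pos ha hab hbm z i hi, rfl⟩,
    ⟨Mof a b m z, fun {i} hi => Mof_pos ha hab hbm z i hi, rfl⟩⟩⟩

section
variable {a b m : ℕ} (ha : 1 ≤ a) (hab : a < b) (hbm : b ≤ m)
include ha hab hbm

lemma Fm_mem (n : ℕ) (z : Idx)
    (hz : z ∈ (Finset.HasAntidiagonal.antidiagonal n).sigma (fun kl =>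
      (Finset.univ : Finset (kl.1.Partition × kl.2.Partition)).filter
        (fun p => p.2.parts.Nodup ∧
          countRes m a p.1.parts + countRes m a p.2.parts <
            countRes m b p.1.parts + countRes m b p.2.parts))) :
    Fm a b m ha hab hbm z ∈ (Finset.HasAntidiagonal.antidiagonal n).sigma (fun kl =>
      (Finset.univ : Finset (kl.1.Partition × kl.2.Partition)).filter
        (fun p => p.2.parts.Nodup ∧
          countRes m b p.1.parts + countRes m b p.2.parts <
            countRes m a p.1.parts + countRes m a p.2.parts)) := by
  rw [Finset.mem_sigma, Finset.mem_filter] at hz ⊢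
  obtain ⟨h1, -, hnd, hlt⟩ := hz
  set p := z.2.1 with hpdef
  set q := z.2.2 with hqdef
  have hp : ∀ i ∈ p.parts, 0 < i := fun i hi => p.parts_pos hi
  have hq : ∀ i ∈ q.parts, 0 < i := fun i hi => q.parts_pos hi
  refine ⟨?_, Finset.mem_univ _, ?_, ?_⟩
  · -- sizes sum to n
    rw [Finset.HasAntidiagonal.mem_antidiagonal]
    show (Lof a b m z).sum + (Mof a b m z).sum = n
    have e1 := sum_map_sw ha hab hbm p.parts hp
    have e2 := sum_map_sw ha hab hbm q.parts hq
    have hsum : z.1.1 + z.1.2 = n := Finset.HasAntidiagonal.mem_antidiagonal.mp h1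
    have hps : p.parts.sum = z.1.1 := p.parts_sum
    have hqs : q.parts.sum = z.1.2 := q.parts_sum
    have hK : Kof a b m z + (countRes m a p.parts + countRes m a q.parts)
        = countRes m b p.parts + countRes m b q.parts := by
      rw [Kof, ← hpdef, ← hqdef]; omega
    rw [Lof, Mof, Multiset.sum_add, Multiset.sum_replicate, smul_eq_mul, ← hpdef, ← hqdef]
    zify [hab.le] at e1 e2 hK hsum hps hqs ⊢
    linear_combination e1 + e2 + ((b : ℤ) - (a : ℤ)) * hK + hps + hqs + hsum
  · -- distinctness
    exact map_sw_nodup ha hab hbm q.parts hq hnd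
  · -- residue count condition
    show countRes m b (Lof a b m z) + countRes m b (Mof a b m z) <
      countRes m a (Lof a b m z) + countRes m a (Mof a b m z)
    have l1 : countRes m b (Lof a b m z) = countRes m a p.parts := by
      rw [Lof, countRes_add, countRes_map_b ha hab hbm p.parts hp, countRes_replicate,
        if_neg (hDb ha hab hbm), Nat.add_zero]
    have l2 : countRes m b p.parts ≤ countRes m a (Lof a b m z) := by
      rw [Lof, countRes_add, countRes_map_a ha hab hbm p.parts hp]
      exact Nat.le_add_right _ _
    have l3 : countRes m a (Mof a b m z) = countRes m b q.parts := by
      rw [Mof, countRes_map_a ha hab hbm q.parts hq]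
    have l4 : countRes m b (Mof a b m z) = countRes m a q.parts := by
      rw [Mof, countRes_map_b ha hab hbm q.parts hq]
    omega


lemma Fm_inj (n : ℕ) (z₁ z₂ : Idx)
    (h1 : z₁ ∈ (Finset.HasAntidiagonal.antidiagonal n).sigma (fun kl =>
      (Finset.univ : Finset (kl.1.Partition × kl.2.Partition)).filter
        (fun p => p.2.parts.Nodup ∧
          countRes m a p.1.parts + countRes m a p.2.parts <
            countRes m b p.1.parts + countRes m b p.2.parts)))
    (h2 : z₂ ∈ (Finset.HasAntidiagonal.antidiagonal n).sigma (fun kl =>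
      (Finset.univ : Finset (kl.1.Partition × kl.2.Partition)).filter
        (fun p => p.2.parts.Nodup ∧
          countRes m a p.1.parts + countRes m a p.2.parts <
            countRes m b p.1.parts + countRes m b p.2.parts)))
    (h : Fm a b m ha hab hbm z₁ = Fm a b m ha hab hbm z₂) : z₁ = z₂ := by
  obtain ⟨⟨k₁, l₁⟩, p₁, q₁⟩ := z₁
  obtain ⟨⟨k₂, l₂⟩, p₂, q₂⟩ := z₂
  rw [Finset.mem_sigma, Finset.mem_filter] at h1 h2
  obtain ⟨-, -, -, hlt₁⟩ := h1
  obtain ⟨-, -, -, hlt₂⟩ := h2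
  have hp₁ : ∀ i ∈ p₁.parts, 0 < i := fun i hi => p₁.parts_pos hi
  have hq₁ : ∀ i ∈ q₁.parts, 0 < i := fun i hi => q₁.parts_pos hi
  have hp₂ : ∀ i ∈ p₂.parts, 0 < i := fun i hi => p₂.parts_pos hi
  have hq₂ : ∀ i ∈ q₂.parts, 0 < i := fun i hi => q₂.parts_pos hi
  have hL : Lof a b m ⟨(k₁, l₁), (p₁, q₁)⟩ = Lof a b m ⟨(k₂, l₂), (p₂, q₂)⟩ :=
    congrArg (fun w : Idx => w.2.1.parts) h
  have hM : q₁.parts.map (sw a b m) = q₂.parts.map (sw a b m) :=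
    congrArg (fun w : Idx => w.2.2.parts) h
  have hq : q₁.parts = q₂.parts := map_sw_inj ha hab hbm _ _ hq₁ hq₂ hM
  have c1 := congrArg (countRes m a) hL
  have c2 := congrArg (countRes m b) hL
  rw [Lof, Lof, countRes_add, countRes_add] at c1 c2
  dsimp only at c1 c2 hlt₁ hlt₂
  rw [countRes_map_a ha hab hbm _ hp₁, countRes_map_a ha hab hbm _ hp₂,
    countRes_replicate, countRes_replicate] at c1
  rw [countRes_map_b ha hab hbm _ hp₁, countRes_map_b ha hab hbm _ hp₂,
    countRes_replicate, countRes_replicate,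
    if_neg (hDb ha hab hbm), if_neg (hDb ha hab hbm)] at c2
  have hK₁ : Kof a b m ⟨(k₁, l₁), (p₁, q₁)⟩ + (countRes m a p₁.parts + countRes m a q₁.parts)
      = countRes m b p₁.parts + countRes m b q₁.parts := by
    rw [Kof]; dsimp only; omega
  have hK₂ : Kof a b m ⟨(k₂, l₂), (p₂, q₂)⟩ + (countRes m a p₂.parts + countRes m a q₂.parts)
      = countRes m b p₂.parts + countRes m b q₂.parts := by
    rw [Kof]; dsimp only; omega
  have hQa : countRes m a q₁.parts = countRes m a q₂.parts := by rw [hq]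
  have hQb : countRes m b q₁.parts = countRes m b q₂.parts := by rw [hq]
  have hKK : Kof a b m ⟨(k₁, l₁), (p₁, q₁)⟩ = Kof a b m ⟨(k₂, l₂), (p₂, q₂)⟩ := by
    by_cases hc : (b - a) % m = a % m
    · rw [if_pos hc, if_pos hc] at c1; omega
    · rw [if_neg hc, if_neg hc] at c1; omega
  have hL2 := hL
  rw [Lof, Lof, hKK] at hL2
  have hL' : p₁.parts.map (sw a b m) = p₂.parts.map (sw a b m) := add_right_cancel hL2
  have hpp : p₁.parts = p₂.parts := map_sw_inj ha hab hbm _ _ hp₁ hp₂ hL'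
  have t1 : p₁.parts.sum = k₁ := p₁.parts_sum
  have t2 : p₂.parts.sum = k₂ := p₂.parts_sum
  have u1 : q₁.parts.sum = l₁ := q₁.parts_sum
  have u2 : q₂.parts.sum = l₂ := q₂.parts_sum
  have hk : k₁ = k₂ := by rw [← t1, ← t2, hpp]
  have hl : l₁ = l₂ := by rw [← u1, ← u2, hq]
  subst hk; subst hl
  have e1 : p₁ = p₂ := Nat.Partition.ext hpp
  have e2 : q₁ = q₂ := Nat.Partition.ext hq
  rw [e1, e2]

end

lemma sum_le_sum_inj {ι κ : Type*} [DecidableEq κ] (S : Finset ι) (T : Finset κ)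
    (f : ι → ℝ) (g : κ → ℝ) (F : ι → κ) (hmem : ∀ z ∈ S, F z ∈ T)
    (hinj : ∀ z₁ ∈ S, ∀ z₂ ∈ S, F z₁ = F z₂ → z₁ = z₂)
    (hle : ∀ z ∈ S, f z ≤ g (F z)) (hg : ∀ t ∈ T, 0 ≤ g t) :
    ∑ z ∈ S, f z ≤ ∑ t ∈ T, g t := by
  calc ∑ z ∈ S, f z ≤ ∑ z ∈ S, g (F z) := Finset.sum_le_sum hle
  _ = ∑ t ∈ S.image F, g t := (Finset.sum_image hinj).symm
  _ ≤ ∑ t ∈ T, g t := by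
      apply Finset.sum_le_sum_of_subset_of_nonneg
      · intro t ht
        obtain ⟨z, hz, rfl⟩ := Finset.mem_image.mp ht
        exact hmem z hz
      · intro t ht _
        exact hg t ht

end WRB

/-- For `1 ≤ a < b ≤ m`, `x ≥ 1`, `y ≥ 0` and all `n ≥ 0`,
`p_n(a,b,m;x,y) ≥ p_n(b,a,m;x,y)`. -/
theorem weighted_residue_bias (a b m : ℕ) (ha : 1 ≤ a) (hab : a < b)
    (hbm : b ≤ m) (x y : ℝ) (hx : 1 ≤ x) (hy : 0 ≤ y) (n : ℕ) :
    pw b a m x y n ≤ pw a b m x y n := by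
  classical
  unfold pw
  rw [Finset.sum_sigma', Finset.sum_sigma']
  refine WRB.sum_le_sum_inj _ _ _ _ (WRB.Fm a b m ha hab hbm)
    (fun z hz => WRB.Fm_mem ha hab hbm n z hz)
    (fun z₁ h₁ z₂ h₂ h => WRB.Fm_inj ha hab hbm n z₁ z₂ h₁ h₂ h)
    (fun z hz => ?_) (fun t ht => ?_)
  · have hc1 : Multiset.card ((WRB.Fm a b m ha hab hbm z).2.1.parts)
        = Multiset.card z.2.1.parts + WRB.Kof a b m z := by
      show Multiset.card (WRB.Lof a b m z) = _
      rw [WRB.Lof, Multiset.card_add, Multiset.card_map, Multiset.card_replicate]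
    have hc2 : Multiset.card ((WRB.Fm a b m ha hab hbm z).2.2.parts)
        = Multiset.card z.2.2.parts := by
      show Multiset.card (WRB.Mof a b m z) = _
      rw [WRB.Mof, Multiset.card_map]
    rw [hc1, hc2]
    exact mul_le_mul_of_nonneg_right
      (pow_le_pow_right₀ hx (Nat.le_add_right _ _)) (pow_nonneg hy _)
  · exact mul_nonneg (pow_nonneg (le_trans zero_le_one hx) _) (pow_nonneg hy _)
end

section
/- Let m be an even positive integer and a, b odd integers with 1 ≤ a < b ≤ m. Then for all n ≥ 0, the number of partitions of n into distinct parts having more parts congruent to a mod m than parts congruent to b mod m is at least the number of partitions of n into distinct parts having more parts congruent to b mod m than parts congruent to a mod m. -/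
namespace DistinctBias

lemma countRes_cons (m a p : ℕ) (s : Multiset ℕ) :
    countRes m a (p ::ₘ s) =
      (if p % m = a % m then 1 else 0) + countRes m a s := by
  by_cases h : p % m = a % m
  · rw [countRes, countRes, Multiset.filter_cons_of_pos (p := fun p => p % m = a % m) s h,
      Multiset.card_cons, if_pos h]
    omega
  · rw [countRes, countRes, Multiset.filter_cons_of_neg (p := fun p => p % m = a % m) s h,
      if_neg h]
    omega

/-- The residue–swap map on parts. -/
def f (m a b : ℕ) (p : ℕ) : ℕ :=
  if p % m = a then p + (b - a) else if p % m = b then p - (b - a) else p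

/-- Partial inverse of `f`. -/
def g (m a b : ℕ) (q : ℕ) : ℕ :=
  if q % m = b then q - (b - a) else if q % m = a then q + (b - a) else q

section FLemmas

variable {m a b : ℕ} (h1 : 1 ≤ a) (hab : a < b) (hbm : b < m)

include h1 hab hbm

lemma f_mod_a {p : ℕ} (hp : p % m = a) : f m a b p % m = b := by
  have hd := Nat.div_add_mod p m
  have hfa : f m a b p = m * (p / m) + b := by
    unfold f; rw [if_pos hp]; omega
  rw [hfa, Nat.mul_add_mod]
  exact Nat.mod_eq_of_lt hbm

lemma f_mod_b {p : ℕ} (hp : p % m = b) : f m a b p % m = a := by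
  have hd := Nat.div_add_mod p m
  have hpa : ¬ (p % m = a) := by omega
  have hfb : f m a b p = m * (p / m) + a := by
    unfold f; rw [if_neg hpa, if_pos hp]; omega
  rw [hfb, Nat.mul_add_mod]
  exact Nat.mod_eq_of_lt (by omega)

lemma f_mod_o {p : ℕ} (hpa : ¬ p % m = a) (hpb : ¬ p % m = b) : f m a b p = p := by
  unfold f; rw [if_neg hpa, if_neg hpb]

lemma g_f (p : ℕ) : g m a b (f m a b p) = p := by
  by_cases hpa : p % m = a
  · have h2 := f_mod_a h1 hab hbm hpa
    have hfa : f m a b p = p + (b - a) := by unfold f; rw [if_pos hpa]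
    unfold g
    rw [h2, if_pos rfl]
    omega
  · by_cases hpb : p % m = b
    · have h2 := f_mod_b h1 hab hbm hpb
      have hple : p % m ≤ p := Nat.mod_le p m
      have hfb : f m a b p = p - (b - a) := by unfold f; rw [if_neg hpa, if_pos hpb]
      unfold g
      rw [h2]
      have hne : ¬ (a = b) := by omega
      rw [if_neg hne, if_pos rfl]
      omega
    · have hfo := f_mod_o h1 hab hbm hpa hpb
      unfold g
      rw [hfo, if_neg hpb, if_neg hpa]

lemma f_inj : Function.Injective (f m a b) :=
  Function.LeftInverse.injective (g_f h1 hab hbm)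

lemma f_pos {p : ℕ} (hp : 1 ≤ p) : 1 ≤ f m a b p := by
  unfold f
  by_cases hpa : p % m = a
  · rw [if_pos hpa]; omega
  · rw [if_neg hpa]
    by_cases hpb : p % m = b
    · rw [if_pos hpb]
      have hple : p % m ≤ p := Nat.mod_le p m
      omega
    · rw [if_neg hpb]; exact hp

lemma f_mod_a_iff {p : ℕ} : f m a b p % m = a ↔ p % m = b := by
  constructor
  · intro h
    by_cases hpa : p % m = a
    · have := f_mod_a h1 hab hbm hpa; omega
    · by_cases hpb : p % m = b
      · exact hpb
      · rw [f_mod_o h1 hab hbm hpa hpb] at h; omega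
  · exact fun h => f_mod_b h1 hab hbm h

lemma f_mod_b_iff {p : ℕ} : f m a b p % m = b ↔ p % m = a := by
  constructor
  · intro h
    by_cases hpa : p % m = a
    · exact hpa
    · by_cases hpb : p % m = b
      · have := f_mod_b h1 hab hbm hpb; omega
      · rw [f_mod_o h1 hab hbm hpa hpb] at h; omega
  · exact fun h => f_mod_a h1 hab hbm h

lemma countRes_map_a (s : Multiset ℕ) :
    countRes m a (s.map (f m a b)) = countRes m b s := by
  have hamod : a % m = a := Nat.mod_eq_of_lt (by omega)
  have hbmod : b % m = b := Nat.mod_eq_of_lt hbm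
  induction s using Multiset.induction_on with
  | empty => simp [countRes]
  | cons p s ih =>
    rw [Multiset.map_cons, countRes_cons, countRes_cons, ih, hamod, hbmod]
    congr 1
    by_cases hpb : p % m = b
    · rw [if_pos hpb, if_pos ((f_mod_a_iff h1 hab hbm).mpr hpb)]
    · rw [if_neg hpb, if_neg (fun h => hpb ((f_mod_a_iff h1 hab hbm).mp h))]

lemma countRes_map_b (s : Multiset ℕ) :
    countRes m b (s.map (f m a b)) = countRes m a s := by
  have hamod : a % m = a := Nat.mod_eq_of_lt (by omega)
  have hbmod : b % m = b := Nat.mod_eq_of_lt hbm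
  induction s using Multiset.induction_on with
  | empty => simp [countRes]
  | cons p s ih =>
    rw [Multiset.map_cons, countRes_cons, countRes_cons, ih, hamod, hbmod]
    congr 1
    by_cases hpa : p % m = a
    · rw [if_pos hpa, if_pos ((f_mod_b_iff h1 hab hbm).mpr hpa)]
    · rw [if_neg hpa, if_neg (fun h => hpa ((f_mod_b_iff h1 hab hbm).mp h))]

lemma sum_map_f (s : Multiset ℕ) :
    (s.map (f m a b)).sum + (b - a) * countRes m b s
      = s.sum + (b - a) * countRes m a s := by
  have hamod : a % m = a := Nat.mod_eq_of_lt (by omega)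
  have hbmod : b % m = b := Nat.mod_eq_of_lt hbm
  induction s using Multiset.induction_on with
  | empty => simp [countRes]
  | cons p s ih =>
    rw [Multiset.map_cons, Multiset.sum_cons, Multiset.sum_cons,
      countRes_cons, countRes_cons, hamod, hbmod, mul_add, mul_add]
    have hple : p % m ≤ p := Nat.mod_le p m
    by_cases hpa : p % m = a
    · have hfa : f m a b p = p + (b - a) := by unfold f; rw [if_pos hpa]
      have hpb : ¬ p % m = b := by omega
      rw [hfa, if_pos hpa, if_neg hpb]
      omega
    · by_cases hpb : p % m = b
      · have hfb : f m a b p = p - (b - a) := by unfold f; rw [if_neg hpa, if_pos hpb]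
        rw [hfb, if_pos hpb, if_neg hpa]
        omega
      · rw [f_mod_o h1 hab hbm hpa hpb, if_neg hpa, if_neg hpb]
        omega

end FLemmas

/-! ### The "add to the largest even part" operation -/

/-- Largest even member of `s` (or `0` if none). -/
def maxEven (s : Multiset ℕ) : ℕ := (s.filter (fun x => x % 2 = 0)).fold max 0

def addE (e : ℕ) (s : Multiset ℕ) : Multiset ℕ :=
  if maxEven s = 0 then e ::ₘ s else (maxEven s + e) ::ₘ s.erase (maxEven s)

lemma le_fold_max {x : ℕ} {t : Multiset ℕ} (h : x ∈ t) : x ≤ t.fold max 0 := by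
  induction t using Multiset.induction_on with
  | empty => simp at h
  | cons p t ih =>
    rw [Multiset.fold_cons_left]
    rcases Multiset.mem_cons.mp h with rfl | h
    · exact le_max_left _ _
    · exact le_trans (ih h) (le_max_right _ _)

lemma fold_max_mem (t : Multiset ℕ) : t.fold max 0 = 0 ∨ t.fold max 0 ∈ t := by
  induction t using Multiset.induction_on with
  | empty => simp
  | cons p t ih =>
    rw [Multiset.fold_cons_left]
    rcases Nat.le_total p (t.fold max 0) with h | h
    · rw [max_eq_right h]
      rcases ih with h0 | hmem
      · exact Or.inl h0
      · exact Or.inr (Multiset.mem_cons_of_mem hmem)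
    · rw [max_eq_left h]
      exact Or.inr (Multiset.mem_cons_self p t)

lemma le_maxEven {x : ℕ} {s : Multiset ℕ} (hx : x ∈ s) (hx2 : x % 2 = 0) :
    x ≤ maxEven s :=
  le_fold_max (Multiset.mem_filter.mpr ⟨hx, hx2⟩)

lemma maxEven_spec (s : Multiset ℕ) :
    maxEven s = 0 ∨ (maxEven s ∈ s ∧ maxEven s % 2 = 0) := by
  rcases fold_max_mem (s.filter (fun x => x % 2 = 0)) with h | h
  · exact Or.inl h
  · exact Or.inr (Multiset.mem_filter.mp h)

lemma maxEven_addE {e : ℕ} (s : Multiset ℕ) (he1 : 1 ≤ e) (he2 : e % 2 = 0) :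
    maxEven (addE e s) = maxEven s + e := by
  unfold addE
  by_cases h : maxEven s = 0
  · rw [if_pos h, h]
    unfold maxEven at h ⊢
    rw [Multiset.filter_cons_of_pos (p := fun x => x % 2 = 0) s he2, Multiset.fold_cons_left, h]
    omega
  · rw [if_neg h]
    obtain ⟨hmem, hev⟩ := (maxEven_spec s).resolve_left h
    set M := maxEven s with hM
    have hMev : (M + e) % 2 = 0 := by omega
    show maxEven ((M + e) ::ₘ s.erase M) = M + e
    unfold maxEven
    rw [Multiset.filter_cons_of_pos (p := fun x => x % 2 = 0) (s.erase M) hMev, Multiset.fold_cons_left]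
    set R := ((s.erase M).filter (fun x => x % 2 = 0)).fold max 0 with hR
    have hRle : R ≤ M + e := by
      rcases fold_max_mem ((s.erase M).filter (fun x => x % 2 = 0)) with h0 | hmem'
      · omega
      · obtain ⟨hmm, hre⟩ := Multiset.mem_filter.mp hmem'
        have := le_maxEven (Multiset.mem_of_mem_erase hmm) hre
        omega
    exact max_eq_left hRle

lemma sum_addE (e : ℕ) (s : Multiset ℕ) : (addE e s).sum = e + s.sum := by
  unfold addE
  by_cases h : maxEven s = 0
  · rw [if_pos h, Multiset.sum_cons]
  · rw [if_neg h, Multiset.sum_cons]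
    obtain ⟨hmem, -⟩ := (maxEven_spec s).resolve_left h
    have hs : maxEven s + (s.erase (maxEven s)).sum = s.sum := by
      conv_rhs => rw [← Multiset.cons_erase hmem]
      rw [Multiset.sum_cons]
    omega

lemma pos_addE {e : ℕ} {s : Multiset ℕ} (he : 1 ≤ e) (hp : ∀ x ∈ s, 0 < x) :
    ∀ x ∈ addE e s, 0 < x := by
  intro x hx
  unfold addE at hx
  by_cases h : maxEven s = 0
  · rw [if_pos h] at hx
    rcases Multiset.mem_cons.mp hx with rfl | hx
    · omega
    · exact hp x hx
  · rw [if_neg h] at hx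
    rcases Multiset.mem_cons.mp hx with rfl | hx
    · omega
    · exact hp x (Multiset.mem_of_mem_erase hx)

lemma nodup_addE {e : ℕ} {s : Multiset ℕ} (he1 : 1 ≤ e) (he2 : e % 2 = 0)
    (hnd : s.Nodup) : (addE e s).Nodup := by
  unfold addE
  by_cases h : maxEven s = 0
  · rw [if_pos h]
    refine Multiset.nodup_cons.mpr ⟨?_, hnd⟩
    intro hmem
    have := le_maxEven hmem he2
    omega
  · rw [if_neg h]
    obtain ⟨-, hev⟩ := (maxEven_spec s).resolve_left h
    refine Multiset.nodup_cons.mpr ⟨?_, hnd.erase _⟩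
    intro hmem
    have := le_maxEven (Multiset.mem_of_mem_erase hmem) (by omega)
    omega

lemma countRes_addE {m a e : ℕ} (hm2 : m % 2 = 0) (ha2 : a % 2 = 1)
    (he2 : e % 2 = 0) (s : Multiset ℕ) :
    countRes m a (addE e s) = countRes m a s := by
  have hkey : ∀ x : ℕ, x % 2 = 0 → ¬ (x % m = a % m) := by
    intro x hx h
    have hx1 : x % m % 2 = x % 2 := Nat.mod_mod_of_dvd x (by omega : (2:ℕ) ∣ m)
    have hx2 : a % m % 2 = a % 2 := Nat.mod_mod_of_dvd a (by omega : (2:ℕ) ∣ m)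
    omega
  unfold addE
  by_cases h : maxEven s = 0
  · rw [if_pos h, countRes_cons, if_neg (hkey e he2)]
    omega
  · obtain ⟨hmem, hev⟩ := (maxEven_spec s).resolve_left h
    rw [if_neg h, countRes_cons, if_neg (hkey _ (by omega : (maxEven s + e) % 2 = 0))]
    have hrhs : countRes m a s = countRes m a (maxEven s ::ₘ s.erase (maxEven s)) := by
      rw [Multiset.cons_erase hmem]
    rw [hrhs, countRes_cons, if_neg (hkey _ hev)]

lemma addE_inj {e : ℕ} (he1 : 1 ≤ e) (he2 : e % 2 = 0) {s₁ s₂ : Multiset ℕ}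
    (h : addE e s₁ = addE e s₂) : s₁ = s₂ := by
  have hM : maxEven s₁ = maxEven s₂ := by
    have hh := congrArg maxEven h
    rw [maxEven_addE s₁ he1 he2, maxEven_addE s₂ he1 he2] at hh
    omega
  unfold addE at h
  by_cases h0 : maxEven s₂ = 0
  · rw [hM, if_pos h0, if_pos h0] at h
    exact (Multiset.cons_inj_right _).mp h
  · obtain ⟨hmem₁, -⟩ := (maxEven_spec s₁).resolve_left (by omega : ¬ maxEven s₁ = 0)
    obtain ⟨hmem₂, -⟩ := (maxEven_spec s₂).resolve_left h0
    rw [hM] at hmem₁ h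
    rw [if_neg h0, if_neg h0] at h
    have h2 : s₁.erase (maxEven s₂) = s₂.erase (maxEven s₂) :=
      (Multiset.cons_inj_right _).mp h
    calc s₁ = maxEven s₂ ::ₘ s₁.erase (maxEven s₂) := (Multiset.cons_erase hmem₁).symm
      _ = maxEven s₂ ::ₘ s₂.erase (maxEven s₂) := by rw [h2]
      _ = s₂ := Multiset.cons_erase hmem₂

/-! ### The injection on partitions -/

lemma parts_sum_lemma {m a b : ℕ} (h1 : 1 ≤ a) (hab : a < b) (hbm : b < m)
    {s : Multiset ℕ} (hlt : countRes m a s < countRes m b s) :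
    (addE ((b - a) * (countRes m b s - countRes m a s)) (s.map (f m a b))).sum
      = s.sum := by
  rw [sum_addE]
  have hsum := sum_map_f h1 hab hbm s
  set Xa := countRes m a s with hXa
  set Xb := countRes m b s with hXb
  obtain ⟨u, hu⟩ : ∃ u, Xb = Xa + u := ⟨Xb - Xa, by omega⟩
  have h3 : Xb - Xa = u := by omega
  rw [hu, mul_add] at hsum
  rw [h3]
  generalize hP : (b - a) * Xa = P at hsum
  generalize hQ : (b - a) * u = Q at hsum ⊢
  omega

def Phi (m a b : ℕ) (h1 : 1 ≤ a) (hab : a < b) (hbm : b < m) {n : ℕ}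
    (μ : n.Partition) : n.Partition :=
  if h : μ.parts.Nodup ∧ countRes m a μ.parts < countRes m b μ.parts then
    { parts := addE ((b - a) * (countRes m b μ.parts - countRes m a μ.parts))
        (μ.parts.map (f m a b)),
      parts_pos := fun {i} hi => by
        refine pos_addE ?_ ?_ i hi
        · exact Nat.mul_pos (by omega) (by omega)
        · intro x hx
          obtain ⟨p, hp, rfl⟩ := Multiset.mem_map.mp hx
          exact f_pos h1 hab hbm (μ.parts_pos hp)
      parts_sum := by rw [parts_sum_lemma h1 hab hbm h.2]; exact μ.parts_sum }
  else μ

lemma Phi_parts {m a b : ℕ} (h1 : 1 ≤ a) (hab : a < b) (hbm : b < m) {n : ℕ}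
    (μ : n.Partition)
    (h : μ.parts.Nodup ∧ countRes m a μ.parts < countRes m b μ.parts) :
    (Phi m a b h1 hab hbm μ).parts
      = addE ((b - a) * (countRes m b μ.parts - countRes m a μ.parts))
          (μ.parts.map (f m a b)) := by
  unfold Phi
  rw [dif_pos h]

end DistinctBias

open DistinctBias in
/-- Let `m` be even and `a, b` odd with `1 ≤ a < b ≤ m`. Then for all `n ≥ 0`,
the number of partitions of `n` into distinct parts with more parts
`≡ a (mod m)` than parts `≡ b (mod m)` is at least the number with more parts
`≡ b (mod m)` than parts `≡ a (mod m)`. -/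
theorem distinct_residue_bias_even_modulus (m a b : ℕ) (hm : Even m)
    (ha : Odd a) (hb : Odd b) (h1 : 1 ≤ a) (hab : a < b) (hbm : b ≤ m) (n : ℕ) :
    (Finset.univ.filter (fun mu : n.Partition => mu.parts.Nodup ∧
        countRes m a mu.parts < countRes m b mu.parts)).card ≤
    (Finset.univ.filter (fun mu : n.Partition => mu.parts.Nodup ∧
        countRes m b mu.parts < countRes m a mu.parts)).card := by
  classical
  have hm2 : m % 2 = 0 := Nat.even_iff.mp hm
  have ha2 : a % 2 = 1 := Nat.odd_iff.mp ha
  have hb2 : b % 2 = 1 := Nat.odd_iff.mp hb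
  have hbm' : b < m := by omega
  -- statistics of the image
  have hstat : ∀ μ : n.Partition,
      (h : μ.parts.Nodup ∧ countRes m a μ.parts < countRes m b μ.parts) →
      countRes m a (Phi m a b h1 hab hbm' μ).parts = countRes m b μ.parts ∧
      countRes m b (Phi m a b h1 hab hbm' μ).parts = countRes m a μ.parts := by
    intro μ h
    have he1 : 1 ≤ (b - a) * (countRes m b μ.parts - countRes m a μ.parts) :=
      Nat.mul_pos (by omega) (by omega)
    have he2 : ((b - a) * (countRes m b μ.parts - countRes m a μ.parts)) % 2 = 0 := by
      rw [Nat.mul_mod]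
      have : (b - a) % 2 = 0 := by omega
      rw [this]
      omega
    rw [Phi_parts h1 hab hbm' μ h]
    constructor
    · rw [countRes_addE hm2 ha2 he2, countRes_map_a h1 hab hbm']
    · rw [countRes_addE hm2 hb2 he2, countRes_map_b h1 hab hbm']
  apply Finset.card_le_card_of_injOn (Phi m a b h1 hab hbm')
  · intro μ hμ
    rw [Finset.mem_coe, Finset.mem_filter] at hμ ⊢
    obtain ⟨-, h⟩ := hμ
    obtain ⟨hsa, hsb⟩ := hstat μ h
    refine ⟨Finset.mem_univ _, ?_, by omega⟩
    rw [Phi_parts h1 hab hbm' μ h]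
    refine nodup_addE ?_ ?_ (h.1.map (f_inj h1 hab hbm'))
    · exact Nat.mul_pos (by omega) (by omega)
    · rw [Nat.mul_mod]
      have : (b - a) % 2 = 0 := by omega
      rw [this]
      omega
  · intro μ₁ hμ₁ μ₂ hμ₂ heq
    rw [Finset.mem_coe, Finset.mem_filter] at hμ₁ hμ₂
    obtain ⟨-, hc₁⟩ := hμ₁
    obtain ⟨-, hc₂⟩ := hμ₂
    obtain ⟨h1a, h1b⟩ := hstat μ₁ hc₁
    obtain ⟨h2a, h2b⟩ := hstat μ₂ hc₂
    have hparts : (Phi m a b h1 hab hbm' μ₁).parts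
        = (Phi m a b h1 hab hbm' μ₂).parts := congrArg Nat.Partition.parts heq
    have hXb : countRes m b μ₁.parts = countRes m b μ₂.parts := by
      rw [← h1a, ← h2a, hparts]
    have hXa : countRes m a μ₁.parts = countRes m a μ₂.parts := by
      rw [← h1b, ← h2b, hparts]
    rw [Phi_parts h1 hab hbm' μ₁ hc₁, Phi_parts h1 hab hbm' μ₂ hc₂,
      hXa, hXb] at hparts
    have he1 : 1 ≤ (b - a) * (countRes m b μ₂.parts - countRes m a μ₂.parts) :=
      Nat.mul_pos (by omega) (by omega)
    have he2 : ((b - a) * (countRes m b μ₂.parts - countRes m a μ₂.parts)) % 2 = 0 := by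
      rw [Nat.mul_mod]
      have : (b - a) % 2 = 0 := by omega
      rw [this]
      omega
    have hmap := addE_inj he1 he2 hparts
    have hps : μ₁.parts = μ₂.parts :=
      Multiset.map_injective (f_inj h1 hab hbm') hmap
    cases μ₁
    cases μ₂
    simpa using hps
end

section
/- Let a, b, m be integers with 1 ≤ a < b ≤ m such that there exists a positive integer k dividing b − a with the property that for all h ≥ 1, 2^h·k ≢ a (mod m) and 2^h·k ≢ b (mod m). Then for every real x ≥ 0 and all integers n ≥ 0, p_n(a,b,m;x,1) ≥ p_n(b,a,m;x,1), where p_n(a,b,m;x,y) = Σ x^{ℓ(λ)} y^{ℓ(μ)} over pairs (λ,μ) ∈ (partitions) × (distinct-parts partitions) with |λ|+|μ| = n and ℓ_{a,m}(λ)+ℓ_{a,m}(μ) > ℓ_{b,m}(λ)+ℓ_{b,m}(μ). -/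
/-!
Swapping the residue classes of `a` and `b` modulo `m` (adding `b - a` to the parts `≡ a` and
subtracting it from the parts `≡ b`) exchanges `ℓ_{a,m}` and `ℓ_{b,m}` and keeps `ℓ(λ)`, but lowers
`|λ| + |μ|` by `(b - a) D`, where `D = ℓ_{b,m} - ℓ_{a,m} > 0`. This deficit is a multiple of `k`, and
it is paid back inside the distinct-parts partition `μ` with parts lying in neither class: the
chips `2 ^ (j + 1) k` and one odd multiple `k u` of `k`, the marker. The chips and the marker of
`μ` encode the number `N = (their sum) / k` (the marker is the parity, the chips the binary digits
of the rest), so replacing them by the code of `N + (b - a) / k * D` keeps `μ` distinct and can be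
undone. This gives a weight-preserving injection from the pairs counted by `p_n(b,a,m;x,1)` into
those counted by `p_n(a,b,m;x,1)`.
-/

theorem Finset.sum_le_sum_of_injOn {ι κ M : Type*} [AddCommMonoid M] [PartialOrder M]
    [IsOrderedAddMonoid M] {s : Finset ι} {t : Finset κ} (e : ι → κ) (he : Set.MapsTo e s t)
    (hinj : Set.InjOn e s) {f : κ → M} (hf : ∀ j ∈ t, 0 ≤ f j) :
    ∑ i ∈ s, f (e i) ≤ ∑ j ∈ t, f j := by
  classical
  rw [← Finset.sum_image hinj]
  exact Finset.sum_le_sum_of_subset_of_nonneg (Finset.image_subset_iff.2 he)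
    fun j hj _ => hf j hj

namespace ResidueBias

def resSwap (a b m p : ℕ) : ℕ :=
  if p % m = a % m then p + (b - a) else if p % m = b % m then p - (b - a) else p

lemma countRes_add (m c : ℕ) (s t : Multiset ℕ) :
    countRes m c (s + t) = countRes m c s + countRes m c t := by
  simp only [countRes, Multiset.filter_add, Multiset.card_add]

lemma countRes_cons (m c p : ℕ) (s : Multiset ℕ) :
    countRes m c (p ::ₘ s) = countRes m c s + if p % m = c % m then 1 else 0 := by
  unfold countRes
  split_ifs with h <;> simp [h, add_comm]

lemma countRes_eq_zero {m c : ℕ} {s : Multiset ℕ} (h : ∀ p ∈ s, p % m ≠ c % m) :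
    countRes m c s = 0 := by
  rw [countRes, Multiset.card_eq_zero, Multiset.filter_eq_nil]
  exact h

lemma le_of_mod_eq_mod {b m p : ℕ} (hbm : b ≤ m) (hp : p % m = b % m) (hpos : 0 < p) :
    b ≤ p := by
  rcases hbm.eq_or_lt with rfl | hbm
  · exact Nat.le_of_dvd hpos (Nat.dvd_of_mod_eq_zero (by rwa [Nat.mod_self] at hp))
  · rw [Nat.mod_eq_of_lt hbm] at hp
    exact hp ▸ Nat.mod_le p m

section Swap

variable {a b m : ℕ} (ha : 1 ≤ a) (hab : a < b) (hbm : b ≤ m)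
include ha hab hbm

lemma mod_ne_mod : b % m ≠ a % m := by
  rcases hbm.eq_or_lt with rfl | hbm
  · rw [Nat.mod_self, Nat.mod_eq_of_lt hab]; omega
  · rw [Nat.mod_eq_of_lt hbm, Nat.mod_eq_of_lt (hab.trans hbm)]; omega

lemma resSwap_cases {p : ℕ} (hpos : 0 < p) :
    (p % m = a % m ∧ resSwap a b m p = p + (b - a) ∧ resSwap a b m p % m = b % m) ∨
    (p % m = b % m ∧ b ≤ p ∧ resSwap a b m p = p - (b - a) ∧ resSwap a b m p % m = a % m) ∨
    (p % m ≠ a % m ∧ p % m ≠ b % m ∧ resSwap a b m p = p) := by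
  unfold resSwap
  by_cases hpa : p % m = a % m
  · refine .inl ⟨hpa, if_pos hpa, ?_⟩
    rw [if_pos hpa, Nat.add_mod, hpa, ← Nat.add_mod, Nat.add_sub_cancel' hab.le]
  by_cases hpb : p % m = b % m
  · have hbp := le_of_mod_eq_mod hbm hpb hpos
    refine .inr (.inl ⟨hpb, hbp, by rw [if_neg hpa, if_pos hpb], ?_⟩)
    rw [if_neg hpa, if_pos hpb]
    refine Nat.ModEq.add_right_cancel' (b - a) ?_
    rw [Nat.sub_add_cancel (by omega), Nat.add_sub_cancel' hab.le]
    exact hpb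
  · exact .inr (.inr ⟨hpa, hpb, by rw [if_neg hpa, if_neg hpb]⟩)

lemma resSwap_pos {p : ℕ} (hpos : 0 < p) : 0 < resSwap a b m p := by
  rcases resSwap_cases ha hab hbm hpos with ⟨-, h, -⟩ | ⟨-, hbp, h, -⟩ | ⟨-, -, h⟩ <;> omega

lemma resSwap_resSwap {p : ℕ} (hpos : 0 < p) : resSwap a b m (resSwap a b m p) = p := by
  have hne := mod_ne_mod ha hab hbm
  have hq := resSwap_cases ha hab hbm (resSwap_pos ha hab hbm hpos)
  rcases resSwap_cases ha hab hbm hpos with ⟨-, h2, h3⟩ | ⟨-, hbp, h3, h4⟩ | ⟨-, -, h3⟩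
  · rcases hq with ⟨h1', -⟩ | ⟨-, -, h3', -⟩ | ⟨h1', h2', -⟩ <;> omega
  · rcases hq with ⟨-, h2', -⟩ | ⟨h1', -⟩ | ⟨h1', -⟩ <;> omega
  · rw [h3, h3]

lemma mod_resSwap_eq_left_iff {p : ℕ} (hpos : 0 < p) :
    resSwap a b m p % m = a % m ↔ p % m = b % m := by
  have hne := mod_ne_mod ha hab hbm
  rcases resSwap_cases ha hab hbm hpos with ⟨h1, -, h3⟩ | ⟨h1, -, -, h4⟩ | ⟨h1, h2, h3⟩
  · omega
  · omega
  · rw [h3]; omega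

lemma mod_resSwap_eq_right_iff {p : ℕ} (hpos : 0 < p) :
    resSwap a b m p % m = b % m ↔ p % m = a % m := by
  have hne := mod_ne_mod ha hab hbm
  rcases resSwap_cases ha hab hbm hpos with ⟨h1, -, h3⟩ | ⟨h1, -, -, h4⟩ | ⟨h1, h2, h3⟩
  · omega
  · omega
  · rw [h3]; omega

variable {M : Multiset ℕ} (hM : ∀ p ∈ M, 0 < p)
include hM

lemma countRes_map_resSwap_left : countRes m a (M.map (resSwap a b m)) = countRes m b M := by
  rw [countRes, Multiset.filter_map, Multiset.card_map, countRes]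
  exact congrArg _ <|
    Multiset.filter_congr fun p hp => mod_resSwap_eq_left_iff ha hab hbm (hM p hp)

lemma countRes_map_resSwap_right : countRes m b (M.map (resSwap a b m)) = countRes m a M := by
  rw [countRes, Multiset.filter_map, Multiset.card_map, countRes]
  exact congrArg _ <|
    Multiset.filter_congr fun p hp => mod_resSwap_eq_right_iff ha hab hbm (hM p hp)

lemma sum_map_resSwap :
    (M.map (resSwap a b m)).sum + (b - a) * countRes m b M =
      M.sum + (b - a) * countRes m a M := by
  have hne := mod_ne_mod ha hab hbm
  induction M using Multiset.induction_on with
  | empty => rfl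
  | cons p M ih =>
    have ih := ih fun q hq => hM q (Multiset.mem_cons_of_mem hq)
    simp only [Multiset.map_cons, Multiset.sum_cons, countRes_cons, mul_add]
    rcases resSwap_cases ha hab hbm (hM p (Multiset.mem_cons_self p M)) with
      ⟨h1, h2, -⟩ | ⟨h1, hbp, h2, -⟩ | ⟨h1, h2, h3⟩
    · rw [if_pos h1, if_neg (h1 ▸ hne.symm)]; omega
    · rw [if_pos h1, if_neg (h1 ▸ hne)]; omega
    · rw [if_neg h1, if_neg h2]; omega

lemma map_resSwap_map_resSwap : (M.map (resSwap a b m)).map (resSwap a b m) = M := by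
  rw [Multiset.map_map]
  exact (Multiset.map_congr rfl fun p hp => resSwap_resSwap ha hab hbm (hM p hp)).trans M.map_id

lemma nodup_map_resSwap (hnd : M.Nodup) : (M.map (resSwap a b m)).Nodup :=
  hnd.map_on fun p hp q hq h => by
    rw [← resSwap_resSwap ha hab hbm (hM p hp), h, resSwap_resSwap ha hab hbm (hM q hq)]

end Swap

def IsChip (k p : ℕ) : Prop := ∃ j, p = 2 * k * 2 ^ j

def chips (k T : ℕ) : Multiset ℕ := T.bitIndices.toFinset.val.map fun j => 2 * k * 2 ^ j

section Chips

variable {k : ℕ}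

lemma sum_chips (T : ℕ) : (chips k T).sum = 2 * k * T := by
  change ∑ j ∈ T.bitIndices.toFinset, 2 * k * 2 ^ j = _
  rw [← Finset.mul_sum, Finset.sum_toFinset_bitIndices_two_pow]

lemma isChip_of_mem_chips {T p : ℕ} (hp : p ∈ chips k T) : IsChip k p := by
  obtain ⟨j, -, rfl⟩ := Multiset.mem_map.1 hp
  exact ⟨j, rfl⟩

lemma pos_of_isChip (hk : 0 < k) {p : ℕ} (hp : IsChip k p) : 0 < p := by
  obtain ⟨j, rfl⟩ := hp
  positivity

lemma nodup_chips (hk : 0 < k) (T : ℕ) : (chips k T).Nodup :=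
  T.bitIndices.toFinset.nodup.map
    fun _ _ h => Nat.pow_right_injective le_rfl (Nat.eq_of_mul_eq_mul_left (by omega) h)

lemma eq_chips_of_nodup (hk : 0 < k) {S : Multiset ℕ} (hS : S.Nodup)
    (h : ∀ p ∈ S, IsChip k p) :
    S = chips k (S.sum / (2 * k)) := by
  choose! e he using h
  have hSe : (S.map e).map (fun j => 2 * k * 2 ^ j) = S := by
    rw [Multiset.map_map]
    exact (Multiset.map_congr rfl fun p hp => (he p hp).symm).trans S.map_id
  have hnd : (S.map e).Nodup := by
    rw [← hSe] at hS
    exact Multiset.Nodup.of_map _ hS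
  set E : Finset ℕ := ⟨S.map e, hnd⟩
  have hsum : S.sum = 2 * k * ∑ j ∈ E, 2 ^ j := by
    rw [Finset.mul_sum, ← hSe]
    rfl
  rw [hsum, Nat.mul_div_cancel_left _ (by omega), chips, Finset.toFinset_bitIndices_sum_two_pow]
  exact hSe.symm

end Chips

def IsCodePart (k u p : ℕ) : Prop := IsChip k p ∨ p = k * u

def codeParts (k u N : ℕ) : Multiset ℕ :=
  Multiset.replicate (N % 2) (k * u) + chips k ((N - u * (N % 2)) / 2)

section CodeParts

variable {k u : ℕ}

lemma isCodePart_of_mem_codeParts {N p : ℕ} (hp : p ∈ codeParts k u N) : IsCodePart k u p := by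
  rcases Multiset.mem_add.1 hp with hp | hp
  · exact .inr (Multiset.eq_of_mem_replicate hp)
  · exact .inl (isChip_of_mem_chips hp)

variable (hu : Odd u)
include hu

lemma sum_codeParts {N : ℕ} (hN : N % 2 = 1 → u ≤ N) : (codeParts k u N).sum = k * N := by
  have hsplit : u * (N % 2) + 2 * ((N - u * (N % 2)) / 2) = N := by
    rw [Nat.odd_iff] at hu
    rcases Nat.mod_two_eq_zero_or_one N with h | h
    · rw [h]; omega
    · have := hN h
      rw [h]; omega
  rw [codeParts, Multiset.sum_add, Multiset.sum_replicate, sum_chips, smul_eq_mul]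
  calc _ = k * (u * (N % 2) + 2 * ((N - u * (N % 2)) / 2)) := by ring
    _ = k * N := by rw [hsplit]

variable (hk : 0 < k)
include hk

lemma not_isChip_mul : ¬ IsChip k (k * u) := by
  rintro ⟨j, hj⟩
  rw [mul_comm 2 k, mul_assoc] at hj
  have := Nat.eq_of_mul_eq_mul_left hk hj
  rw [this, Nat.odd_iff] at hu
  omega

lemma pos_of_isCodePart {p : ℕ} (hp : IsCodePart k u p) : 0 < p := by
  rcases hp with hp | rfl
  · exact pos_of_isChip hk hp
  · exact Nat.mul_pos hk hu.pos

lemma nodup_codeParts (N : ℕ) : (codeParts k u N).Nodup := by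
  refine Multiset.nodup_add.2 ⟨?_, nodup_chips hk _, ?_⟩
  · rw [← Multiset.coe_replicate, Multiset.coe_nodup, List.nodup_replicate]
    omega
  · exact Multiset.disjoint_left.2 fun hp hp' =>
      Multiset.eq_of_mem_replicate hp ▸ not_isChip_mul hu hk <| isChip_of_mem_chips hp'

open scoped Classical in
lemma eq_codeParts_of_nodup {S : Multiset ℕ} (hS : S.Nodup)
    (h : ∀ p ∈ S, IsCodePart k u p) :
    S = codeParts k u (S.sum / k) := by
  have hsplit : S = Multiset.replicate (S.count (k * u)) (k * u) + S.filter (IsChip k) := by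
    conv_lhs => rw [← Multiset.filter_add_not (· = k * u) S]
    rw [Multiset.filter_eq']
    congr 1
    refine Multiset.filter_congr fun p hp => ?_
    rcases h p hp with hc | rfl
    · exact iff_of_true (fun he => not_isChip_mul hu hk (he ▸ hc)) hc
    · exact iff_of_false (not_not_intro rfl) (not_isChip_mul hu hk)
  set V := S.count (k * u)
  set T := (S.filter (IsChip k)).sum / (2 * k)
  have hchips : S.filter (IsChip k) = chips k T :=
    eq_chips_of_nodup hk (hS.filter _) fun p hp => (Multiset.mem_filter.1 hp).2
  rw [hchips] at hsplit
  have hV : V ≤ 1 := Multiset.nodup_iff_count_le_one.1 hS _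
  have hsum : S.sum / k = u * V + 2 * T := by
    rw [hsplit, Multiset.sum_add, Multiset.sum_replicate, sum_chips, smul_eq_mul]
    rw [show V * (k * u) + 2 * k * T = k * (u * V + 2 * T) by ring, Nat.mul_div_cancel_left _ hk]
  have hmod : (u * V + 2 * T) % 2 = V := by
    rw [Nat.odd_iff] at hu
    obtain hV | hV : V = 0 ∨ V = 1 := by omega
    all_goals rw [hV]; omega
  rwa [hsum, codeParts, hmod, mul_comm u V, Nat.add_sub_cancel_left,
    Nat.mul_div_cancel_left _ two_pos]

end CodeParts

section Shift

open scoped Classical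

noncomputable def code (k u : ℕ) (ρ : Multiset ℕ) : ℕ := (ρ.filter (IsCodePart k u)).sum / k

noncomputable def shiftCode (k u s : ℕ) (ρ : Multiset ℕ) : Multiset ℕ :=
  ρ.filter (fun p => ¬ IsCodePart k u p) + codeParts k u (code k u ρ + s)

variable {k u s : ℕ} {ρ : Multiset ℕ}

lemma filter_isCodePart_shiftCode :
    (shiftCode k u s ρ).filter (IsCodePart k u) = codeParts k u (code k u ρ + s) := by
  have h₁ : (ρ.filter fun p => ¬ IsCodePart k u p).filter (IsCodePart k u) = 0 :=
    Multiset.filter_eq_nil.2 fun _ hp => (Multiset.mem_filter.1 hp).2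
  have h₂ : (codeParts k u (code k u ρ + s)).filter (IsCodePart k u) =
      codeParts k u (code k u ρ + s) :=
    Multiset.filter_eq_self.2 fun _ hp => isCodePart_of_mem_codeParts hp
  rw [shiftCode, Multiset.filter_add, h₁, h₂, zero_add]

lemma filter_not_isCodePart_shiftCode :
    (shiftCode k u s ρ).filter (fun p => ¬ IsCodePart k u p) =
      ρ.filter (fun p => ¬ IsCodePart k u p) := by
  have h₁ : (ρ.filter fun p => ¬ IsCodePart k u p).filter (fun p => ¬ IsCodePart k u p) =
      ρ.filter fun p => ¬ IsCodePart k u p :=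
    Multiset.filter_eq_self.2 fun _ hp => (Multiset.mem_filter.1 hp).2
  have h₂ : (codeParts k u (code k u ρ + s)).filter (fun p => ¬ IsCodePart k u p) = 0 :=
    Multiset.filter_eq_nil.2 fun _ hp hn => hn (isCodePart_of_mem_codeParts hp)
  rw [shiftCode, Multiset.filter_add, h₁, h₂, add_zero]

lemma sum_filter_isCodePart : (ρ.filter (IsCodePart k u)).sum = k * code k u ρ := by
  refine (Nat.mul_div_cancel' (Multiset.dvd_sum fun p hp => ?_)).symm
  rcases (Multiset.mem_filter.1 hp).2 with ⟨j, rfl⟩ | rfl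
  · exact ⟨2 * 2 ^ j, by ring⟩
  · exact dvd_mul_right k u

variable (hu : Odd u)
include hu

lemma sum_shiftCode (hs : u ≤ s) : (shiftCode k u s ρ).sum = ρ.sum + k * s := by
  conv_rhs => rw [← Multiset.filter_add_not (IsCodePart k u) ρ]
  rw [shiftCode, Multiset.sum_add, Multiset.sum_add, sum_codeParts hu (by omega),
    sum_filter_isCodePart]
  ring

variable (hk : 0 < k)
include hk

lemma filter_isCodePart_eq_codeParts (hρ : ρ.Nodup) :
    ρ.filter (IsCodePart k u) = codeParts k u (code k u ρ) :=
  eq_codeParts_of_nodup hu hk (hρ.filter _) fun _ hp => (Multiset.mem_filter.1 hp).2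

lemma code_shiftCode (hs : u ≤ s) : code k u (shiftCode k u s ρ) = code k u ρ + s := by
  rw [code, filter_isCodePart_shiftCode, sum_codeParts hu (by omega),
    Nat.mul_div_cancel_left _ hk]

lemma eq_of_shiftCode (hρ : ρ.Nodup) (hs : u ≤ s) :
    ρ = (shiftCode k u s ρ).filter (fun p => ¬ IsCodePart k u p) +
      codeParts k u (code k u (shiftCode k u s ρ) - s) := by
  rw [filter_not_isCodePart_shiftCode, code_shiftCode hu hk hs, Nat.add_sub_cancel,
    ← filter_isCodePart_eq_codeParts hu hk hρ, add_comm, Multiset.filter_add_not]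

lemma nodup_shiftCode (hρ : ρ.Nodup) : (shiftCode k u s ρ).Nodup :=
  Multiset.nodup_add.2 ⟨hρ.filter _, nodup_codeParts hu hk _, Multiset.disjoint_left.2
    fun hp hp' => (Multiset.mem_filter.1 hp).2 (isCodePart_of_mem_codeParts hp')⟩

lemma pos_of_mem_shiftCode (hρ : ∀ p ∈ ρ, 0 < p) {p : ℕ} (hp : p ∈ shiftCode k u s ρ) :
    0 < p := by
  rcases Multiset.mem_add.1 hp with hp | hp
  · exact hρ p (Multiset.mem_of_mem_filter hp)
  · exact pos_of_isCodePart hu hk (isCodePart_of_mem_codeParts hp)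

lemma countRes_shiftCode {m c : ℕ} (hchip : ∀ p, IsChip k p → p % m ≠ c % m)
    (hmarker : Odd s → k * u % m ≠ c % m) (hρ : ρ.Nodup) :
    countRes m c (shiftCode k u s ρ) = countRes m c ρ := by
  have hcode (N : ℕ) : countRes m c (codeParts k u N) =
      countRes m c (Multiset.replicate (N % 2) (k * u)) := by
    rw [codeParts, countRes_add, countRes_eq_zero fun p hp => hchip p (isChip_of_mem_chips hp),
      add_zero]
  conv_rhs => rw [← Multiset.filter_add_not (IsCodePart k u) ρ,
    filter_isCodePart_eq_codeParts hu hk hρ]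
  rw [shiftCode, countRes_add, countRes_add, hcode, hcode, add_comm]
  congr 1
  rcases Nat.even_or_odd s with hs | hs
  · rw [Nat.even_iff] at hs
    rw [show (code k u ρ + s) % 2 = code k u ρ % 2 by omega]
  · have hzero (n : ℕ) : countRes m c (Multiset.replicate n (k * u)) = 0 :=
      countRes_eq_zero fun p hp => Multiset.eq_of_mem_replicate hp ▸ hmarker hs
    rw [hzero, hzero]

end Shift

/- The marker `k * u` has to avoid the classes of `a` and `b` whenever its multiplicity can change,
that is when `(b - a) / k` is odd. `u = 1` does unless `k ≡ a`; then `k = a`, and `u = (b - a) / k`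
does, because `b - a ≡ a` would give `b ≡ 2 k`. -/
def markerMul (a b m k : ℕ) : ℕ :=
  if k % m = a % m ∧ Odd ((b - a) / k) then (b - a) / k else 1

noncomputable def biasSwap (a b m k : ℕ) (p : Multiset ℕ × Multiset ℕ) :
    Multiset ℕ × Multiset ℕ :=
  (p.1.map (resSwap a b m),
    shiftCode k (markerMul a b m k)
      ((b - a) / k * (countRes m b (p.1 + p.2) - countRes m a (p.1 + p.2)))
      (p.2.map (resSwap a b m)))

def IsBiasedPair (a b m n : ℕ) (p : Multiset ℕ × Multiset ℕ) : Prop :=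
  (∀ i ∈ p.1, 0 < i) ∧ (∀ i ∈ p.2, 0 < i) ∧ p.2.Nodup ∧ p.1.sum + p.2.sum = n ∧
    countRes m b (p.1 + p.2) < countRes m a (p.1 + p.2)

lemma odd_markerMul (a b m k : ℕ) : Odd (markerMul a b m k) := by
  unfold markerMul
  split_ifs with h
  exacts [h.2, odd_one]

section Bias

variable {a b m k : ℕ} (ha : 1 ≤ a) (hab : a < b) (hbm : b ≤ m) (hk : 1 ≤ k)
  (hkd : k ∣ b - a)
  (hcong : ∀ h : ℕ, 1 ≤ h → ¬(2 ^ h * k ≡ a [MOD m]) ∧ ¬(2 ^ h * k ≡ b [MOD m]))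

include hcong in
lemma mod_ne_of_isChip {p : ℕ} (hp : IsChip k p) : p % m ≠ a % m ∧ p % m ≠ b % m := by
  obtain ⟨j, rfl⟩ := hp
  rw [show 2 * k * 2 ^ j = 2 ^ (j + 1) * k by ring]
  exact hcong (j + 1) (by omega)

include ha hab hbm hk hkd hcong in
lemma mul_markerMul_mod_ne (hodd : Odd ((b - a) / k)) :
    k * markerMul a b m k % m ≠ a % m ∧ k * markerMul a b m k % m ≠ b % m := by
  have hkb : k ≤ b - a := Nat.le_of_dvd (by omega) hkd
  have ham : a % m = a := Nat.mod_eq_of_lt (by omega)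
  have hkm : k % m = k := Nat.mod_eq_of_lt (by omega)
  unfold markerMul
  split_ifs with hka
  · have hka : k = a := by rw [← hkm, ← ham, hka.1]
    rw [Nat.mul_div_cancel' hkd]
    constructor
    · intro h
      refine (hcong 1 le_rfl).2 ?_
      calc 2 ^ 1 * k = a + a := by omega
        _ ≡ b - a + a [MOD m] := Nat.ModEq.add_right a h.symm
        _ = b := Nat.sub_add_cancel hab.le
    · intro h
      have h0 : a ≡ 0 [MOD m] := Nat.ModEq.add_left_cancel' (b - a) <|
        calc b - a + a = b := Nat.sub_add_cancel hab.le
          _ ≡ b - a [MOD m] := h.symm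
      rw [Nat.ModEq, ham, Nat.zero_mod] at h0
      omega
  · rw [mul_one]
    refine ⟨fun h => hka ⟨h, hodd⟩, fun h => ?_⟩
    rw [hkm] at h
    rcases hbm.eq_or_lt with rfl | hbm
    · rw [Nat.mod_self] at h; omega
    · rw [Nat.mod_eq_of_lt hbm] at h; omega

include ha hab hbm hk hkd hcong in
lemma countRes_shiftCode_markerMul {c : ℕ} (hc : c = a ∨ c = b) (D : ℕ) {ρ : Multiset ℕ}
    (hρ : ρ.Nodup) :
    countRes m c (shiftCode k (markerMul a b m k) ((b - a) / k * D) ρ) = countRes m c ρ := by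
  refine countRes_shiftCode (odd_markerMul a b m k) (by omega) (fun p hp => ?_) (fun hodd => ?_) hρ
  · have := mod_ne_of_isChip hcong hp
    rcases hc with rfl | rfl
    exacts [this.1, this.2]
  · have := mul_markerMul_mod_ne ha hab hbm hk hkd hcong (Nat.Odd.of_mul_left hodd)
    rcases hc with rfl | rfl
    exacts [this.1, this.2]

include hab hk hkd in
lemma markerMul_le_shift {x y : ℕ} (hxy : x < y) :
    markerMul a b m k ≤ (b - a) / k * (y - x) := by
  have : 0 < (b - a) / k := Nat.div_pos (Nat.le_of_dvd (by omega) hkd) hk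
  refine le_trans ?_ (Nat.le_mul_of_pos_right _ (by omega))
  unfold markerMul
  split_ifs <;> omega

section Counts

variable {p : Multiset ℕ × Multiset ℕ} (hL : ∀ i ∈ p.1, 0 < i) (hM : ∀ i ∈ p.2, 0 < i)
include ha hab hbm hL hM

include hk hkd in
lemma sum_biasSwap (hlt : countRes m a (p.1 + p.2) < countRes m b (p.1 + p.2)) :
    (biasSwap a b m k p).1.sum + (biasSwap a b m k p).2.sum = p.1.sum + p.2.sum := by
  have hD : (b - a) * countRes m b p.1 + (b - a) * countRes m b p.2 =
      (b - a) * countRes m a p.1 + (b - a) * countRes m a p.2 +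
        (b - a) * (countRes m b (p.1 + p.2) - countRes m a (p.1 + p.2)) := by
    simp only [← mul_add, ← countRes_add]
    congr 1
    omega
  have hL' := sum_map_resSwap ha hab hbm hL
  have hM' := sum_map_resSwap ha hab hbm hM
  simp only [biasSwap]
  rw [sum_shiftCode (odd_markerMul a b m k)
    (markerMul_le_shift (m := m) hab hk hkd hlt), ← mul_assoc,
    Nat.mul_div_cancel' hkd]
  omega

variable (hnd : p.2.Nodup)
include hk hkd hcong hnd

lemma countRes_biasSwap_left :
    countRes m a ((biasSwap a b m k p).1 + (biasSwap a b m k p).2) = countRes m b (p.1 + p.2) := by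
  rw [biasSwap, countRes_add, countRes_shiftCode_markerMul ha hab hbm hk hkd hcong (.inl rfl) _
    (nodup_map_resSwap ha hab hbm hM hnd), countRes_map_resSwap_left ha hab hbm hL,
    countRes_map_resSwap_left ha hab hbm hM, countRes_add]

lemma countRes_biasSwap_right :
    countRes m b ((biasSwap a b m k p).1 + (biasSwap a b m k p).2) = countRes m a (p.1 + p.2) := by
  rw [biasSwap, countRes_add, countRes_shiftCode_markerMul ha hab hbm hk hkd hcong (.inr rfl) _
    (nodup_map_resSwap ha hab hbm hM hnd), countRes_map_resSwap_right ha hab hbm hL,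
    countRes_map_resSwap_right ha hab hbm hM, countRes_add]

end Counts

include ha hab hbm hk hkd hcong

lemma isBiasedPair_biasSwap {n : ℕ} {p : Multiset ℕ × Multiset ℕ} (hp : IsBiasedPair b a m n p) :
    IsBiasedPair a b m n (biasSwap a b m k p) := by
  obtain ⟨hL, hM, hnd, hsum, hlt⟩ := hp
  have hρ := nodup_map_resSwap ha hab hbm hM hnd
  refine ⟨fun i hi => ?_, fun i hi => ?_, nodup_shiftCode (odd_markerMul a b m k) hk hρ, ?_, ?_⟩
  · obtain ⟨j, hj, rfl⟩ := Multiset.mem_map.1 hi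
    exact resSwap_pos ha hab hbm (hL j hj)
  · refine pos_of_mem_shiftCode (odd_markerMul a b m k) hk (fun x hx => ?_) hi
    obtain ⟨j, hj, rfl⟩ := Multiset.mem_map.1 hx
    exact resSwap_pos ha hab hbm (hM j hj)
  · rw [sum_biasSwap ha hab hbm hk hkd hL hM hlt, hsum]
  · rw [countRes_biasSwap_left ha hab hbm hk hkd hcong hL hM hnd,
      countRes_biasSwap_right ha hab hbm hk hkd hcong hL hM hnd]
    exact hlt

lemma biasSwap_injOn (n : ℕ) : Set.InjOn (biasSwap a b m k) {p | IsBiasedPair b a m n p} := by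
  rintro p ⟨hL, hM, hnd, -, hlt⟩ q ⟨hL', hM', hnd', -, -⟩ h
  have hD : countRes m b (p.1 + p.2) - countRes m a (p.1 + p.2) =
      countRes m b (q.1 + q.2) - countRes m a (q.1 + q.2) := by
    rw [← countRes_biasSwap_left ha hab hbm hk hkd hcong hL hM hnd,
      ← countRes_biasSwap_right ha hab hbm hk hkd hcong hL hM hnd, h,
      countRes_biasSwap_left ha hab hbm hk hkd hcong hL' hM' hnd',
      countRes_biasSwap_right ha hab hbm hk hkd hcong hL' hM' hnd']
  have hs := markerMul_le_shift (m := m) hab hk hkd hlt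
  have hfst : p.1.map (resSwap a b m) = q.1.map (resSwap a b m) := congrArg Prod.fst h
  have hshift := congrArg Prod.snd h
  simp only [biasSwap, ← hD] at hshift
  have hρ : p.2.map (resSwap a b m) = q.2.map (resSwap a b m) := by
    rw [eq_of_shiftCode (odd_markerMul a b m k) hk (nodup_map_resSwap ha hab hbm hM hnd) hs,
      hshift, ← eq_of_shiftCode (odd_markerMul a b m k) hk
        (nodup_map_resSwap ha hab hbm hM' hnd') hs]
  refine Prod.ext ?_ ?_
  · rw [← map_resSwap_map_resSwap ha hab hbm hL, hfst,
      map_resSwap_map_resSwap ha hab hbm hL']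
  · rw [← map_resSwap_map_resSwap ha hab hbm hM, hρ, map_resSwap_map_resSwap ha hab hbm hM']

end Bias

lemma parts_injective :
    Function.Injective fun z : (kl : ℕ × ℕ) × (kl.1.Partition × kl.2.Partition) =>
      (z.2.1.parts, z.2.2.parts) := by
  rintro ⟨⟨i, j⟩, μ, ν⟩ ⟨⟨i', j'⟩, μ', ν'⟩ h
  simp only [Prod.mk.injEq] at h
  obtain rfl : i = i' := μ.parts_sum.symm.trans (h.1 ▸ μ'.parts_sum)
  obtain rfl : j = j' := ν.parts_sum.symm.trans (h.2 ▸ ν'.parts_sum)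
  rw [Nat.Partition.ext h.1, Nat.Partition.ext h.2]

def biasedPairs (a b m n : ℕ) : Finset (Multiset ℕ × Multiset ℕ) :=
  ((Finset.HasAntidiagonal.antidiagonal n).sigma fun kl =>
    (Finset.univ : Finset (kl.1.Partition × kl.2.Partition)).filter
      (fun p => p.2.parts.Nodup ∧
        countRes m b p.1.parts + countRes m b p.2.parts <
          countRes m a p.1.parts + countRes m a p.2.parts)).image
    fun z => (z.2.1.parts, z.2.2.parts)

lemma pw_eq_sum_biasedPairs (a b m : ℕ) (x y : ℝ) (n : ℕ) :
    pw a b m x y n = ∑ p ∈ biasedPairs a b m n, x ^ Multiset.card p.1 * y ^ Multiset.card p.2 := by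
  rw [pw, Finset.sum_sigma', biasedPairs, Finset.sum_image parts_injective.injOn]

lemma mem_biasedPairs {a b m n : ℕ} {p : Multiset ℕ × Multiset ℕ} :
    p ∈ biasedPairs a b m n ↔ IsBiasedPair a b m n p := by
  simp only [biasedPairs, IsBiasedPair, Finset.mem_image, Finset.mem_sigma,
    Finset.HasAntidiagonal.mem_antidiagonal, Finset.mem_filter, Finset.mem_univ, true_and,
    countRes_add]
  constructor
  · rintro ⟨⟨⟨i, j⟩, μ, ν⟩, ⟨hij, hnd, hlt⟩, rfl⟩
    exact ⟨fun _ => μ.parts_pos, fun _ => ν.parts_pos, hnd,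
      by rw [μ.parts_sum, ν.parts_sum, hij], hlt⟩
  · rintro ⟨hL, hM, hnd, hsum, hlt⟩
    exact ⟨⟨(p.1.sum, p.2.sum), ⟨p.1, hL _, rfl⟩, ⟨p.2, hM _, rfl⟩⟩, ⟨hsum, hnd, hlt⟩, rfl⟩

end ResidueBias

open ResidueBias in
/-- Let `1 ≤ a < b ≤ m` and suppose there is a positive integer `k` dividing
`b - a` such that `2^h·k ≢ a (mod m)` and `2^h·k ≢ b (mod m)` for all `h ≥ 1`.
Then for all reals `x ≥ 0` and all `n ≥ 0`, `p_n(a,b,m;x,1) ≥ p_n(b,a,m;x,1)`. -/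
theorem distinct_weighted_residue_bias (a b m k : ℕ) (ha : 1 ≤ a) (hab : a < b)
    (hbm : b ≤ m) (hk : 1 ≤ k) (hkd : k ∣ (b - a))
    (hcong : ∀ h : ℕ, 1 ≤ h → ¬(2 ^ h * k ≡ a [MOD m]) ∧ ¬(2 ^ h * k ≡ b [MOD m]))
    (x : ℝ) (hx : 0 ≤ x) (n : ℕ) :
    pw b a m x 1 n ≤ pw a b m x 1 n := by
  rw [pw_eq_sum_biasedPairs, pw_eq_sum_biasedPairs]
  calc ∑ p ∈ biasedPairs b a m n, x ^ Multiset.card p.1 * 1 ^ Multiset.card p.2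
      = ∑ p ∈ biasedPairs b a m n, x ^ Multiset.card (biasSwap a b m k p).1 *
          1 ^ Multiset.card (biasSwap a b m k p).2 :=
        Finset.sum_congr rfl fun p _ => by simp only [biasSwap, Multiset.card_map, one_pow]
    _ ≤ _ := Finset.sum_le_sum_of_injOn
        (f := fun p => x ^ Multiset.card p.1 * 1 ^ Multiset.card p.2) (biasSwap a b m k)
        (fun p hp => mem_biasedPairs.2 <|
          isBiasedPair_biasSwap ha hab hbm hk hkd hcong (mem_biasedPairs.1 hp))
        (fun p hp q hq => biasSwap_injOn ha hab hbm hk hkd hcong n (mem_biasedPairs.1 hp)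
          (mem_biasedPairs.1 hq))
        fun _ _ => by positivity
end

section
/- Let a, b, m be positive integers with 1 ≤ a < b ≤ m and (a, b) ≠ (1, 2), and let x ≥ 1, y ≥ 0 be reals. Then all Taylor coefficients about q = 0 of f(q) = (1 − q^{b−a}) · ∏_{j≥1} (1 + y q^j)/(1 − x q^j) · ∏_{j≥0} (1 − x q^{a+jm})(1 − x q^{b+jm}) / ((1 + y q^{a+jm})(1 + y q^{b+jm})) are non-negative. -/
open PowerSeries Finset

/-! For `e ∈ {a + jm, b + jm}` the factor `(1 + y q^e)/(1 - x q^e)` of the first product cancels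
against the reciprocal factor of the second; the surviving reciprocals all have exponent `> N`, so
they do not affect the coefficient of `q^N`, and the surviving factors of the first product have
nonnegative coefficients since `x, y ≥ 0`. The negative term of `1 - q^{b-a}` is absorbed by a
surviving factor `1/(1 - x q^c)` with `c ∣ b - a` (`c = 1` if `a > 1`, `c = b - 1` if `a = 1`),
because for `x ≥ 1`
`(1 - q^{ck})/(1 - x q^c) = (1 + q^c + ⋯ + q^{c(k-1)}) (1 + (x - 1) q^c/(1 - x q^c))`. -/

theorem Finset.prod_mul_prod_eq_prod_sdiff_mul_prod_sdiff {ι M : Type*} [CommMonoid M]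
    [DecidableEq ι] {s t : Finset ι} {f g : ι → M} (h : ∀ i ∈ s ∩ t, f i * g i = 1) :
    (∏ i ∈ s, f i) * ∏ i ∈ t, g i = (∏ i ∈ s \ t, f i) * ∏ i ∈ t \ s, g i := by
  rw [← prod_inter_mul_prod_sdiff s t f, ← prod_inter_mul_prod_sdiff t s g, inter_comm t s,
    mul_mul_mul_comm, ← prod_mul_distrib, prod_eq_one h, one_mul]

theorem Finset.prod_range_add_one_eq_prod_Icc {M : Type*} [CommMonoid M] (f : ℕ → M) (n : ℕ) :
    ∏ j ∈ range n, f (j + 1) = ∏ e ∈ Icc 1 n, f e := by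
  have h := prod_Ico_add' f 0 n 1
  rwa [zero_add, ← range_eq_Ico, Ico_add_one_right_eq_Icc] at h

namespace PowerSeries

section Nonneg

variable (R : Type*) [Semiring R] [PartialOrder R] [IsOrderedRing R]

def nonnegCoeffs : Subsemiring R⟦X⟧ where
  carrier := {f | ∀ n, 0 ≤ coeff n f}
  mul_mem' {f g} hf hg n := by
    rw [coeff_mul]
    exact sum_nonneg fun p _ => mul_nonneg (hf p.1) (hg p.2)
  one_mem' n := by
    rw [coeff_one]
    split_ifs <;> simp
  add_mem' hf hg n := by
    rw [map_add]
    exact add_nonneg (hf n) (hg n)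
  zero_mem' n := by simp

variable {R}

theorem C_mem_nonnegCoeffs {r : R} (hr : 0 ≤ r) : C r ∈ nonnegCoeffs R := fun n => by
  rw [coeff_C]
  split_ifs <;> simp [hr]

theorem X_mem_nonnegCoeffs : X ∈ nonnegCoeffs R := fun n => by
  rw [coeff_X]
  split_ifs <;> simp

end Nonneg

section Congruence

variable (R : Type*) [CommRing R]

def oneModXPow (n : ℕ) : Submonoid R⟦X⟧ where
  carrier := {f | X ^ n ∣ f - 1}
  one_mem' := by simp
  mul_mem' {f g} hf hg := by
    have h : f * g - 1 = f * (g - 1) + (f - 1) := by ring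
    change X ^ n ∣ f * g - 1
    rw [h]
    exact dvd_add (dvd_mul_of_dvd_right hg f) hf

variable {R}

theorem one_add_mem_oneModXPow {n : ℕ} {g : R⟦X⟧} (hg : X ^ n ∣ g) : 1 + g ∈ oneModXPow R n := by
  simpa [oneModXPow] using hg

theorem one_sub_mem_oneModXPow {n : ℕ} {g : R⟦X⟧} (hg : X ^ n ∣ g) : 1 - g ∈ oneModXPow R n := by
  simpa [oneModXPow] using hg

theorem coeff_mul_of_mem_oneModXPow {N : ℕ} {E : R⟦X⟧} (hE : E ∈ oneModXPow R (N + 1))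
    (K : R⟦X⟧) : coeff N (K * E) = coeff N K := by
  have hdvd : X ^ (N + 1) ∣ K * E - K := by
    simpa [mul_sub] using dvd_mul_of_dvd_right hE K
  rw [← sub_eq_zero, ← map_sub]
  exact X_pow_dvd_iff.1 hdvd N N.lt_succ_self

theorem inv_mem_oneModXPow {k : Type*} [Field k] {n : ℕ} {f : k⟦X⟧} (hf : f ∈ oneModXPow k n) :
    f⁻¹ ∈ oneModXPow k n := by
  rcases n.eq_zero_or_pos with rfl | hn
  · simp [oneModXPow]
  have hf0 : constantCoeff f = 1 := by
    have := X_dvd_iff.1 ((dvd_pow_self X hn.ne').trans hf)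
    rwa [map_sub, map_one, sub_eq_zero] at this
  have h : f⁻¹ - 1 = -(f⁻¹ * (f - 1)) := by
    rw [mul_sub, PowerSeries.inv_mul_cancel _ (by simp [hf0])]
    ring
  change X ^ n ∣ f⁻¹ - 1
  rw [h]
  exact (dvd_mul_of_dvd_right hf _).neg_right

theorem prod_mem_oneModXPow_of_le {k : Type*} [Field k] (x y : k) {n : ℕ} {s : Finset ℕ}
    (hs : ∀ e ∈ s, n ≤ e) :
    ∏ e ∈ s, (1 - C x * X ^ e) * (1 + C y * X ^ e)⁻¹ ∈ oneModXPow k n :=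
  prod_mem fun e he =>
    have hdvd := pow_dvd_pow (X : k⟦X⟧) (hs e he)
    mul_mem (one_sub_mem_oneModXPow (hdvd.mul_left _))
      (inv_mem_oneModXPow (one_add_mem_oneModXPow (hdvd.mul_left _)))

end Congruence

section Field

variable {k : Type*} [Field k] [PartialOrder k] [IsOrderedRing k]

theorem inv_one_sub_mem_nonnegCoeffs {g : k⟦X⟧} (hg : g ∈ nonnegCoeffs k)
    (hg0 : constantCoeff g = 0) : (1 - g)⁻¹ ∈ nonnegCoeffs k := by
  set h := (1 - g)⁻¹
  have hrec : h = 1 + g * h := by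
    have : (1 - g) * h = 1 := PowerSeries.mul_inv_cancel _ (by simp [hg0])
    linear_combination this
  intro n
  induction n using Nat.strong_induction_on with
  | _ n ih =>
    rw [hrec, map_add, coeff_mul]
    refine add_nonneg (one_mem (nonnegCoeffs k) n) (sum_nonneg fun p hp => ?_)
    rcases Nat.eq_zero_or_pos p.1 with h0 | hpos
    · simp [h0, hg0]
    · exact mul_nonneg (hg _) (ih _ (by have := mem_antidiagonal.1 hp; omega))

theorem one_sub_X_pow_mul_inv_mem_nonnegCoeffs {x : k} (hx : 1 ≤ x) {c d : ℕ} (hc : 0 < c)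
    (hcd : c ∣ d) : (1 - X ^ d) * (1 - C x * X ^ c)⁻¹ ∈ nonnegCoeffs k := by
  obtain ⟨n, rfl⟩ := hcd
  set h := (1 - C x * X ^ c)⁻¹
  have hinv : (1 - C x * X ^ c) * h = 1 := PowerSeries.mul_inv_cancel _ (by simp [hc.ne'])
  have hh : h ∈ nonnegCoeffs k :=
    inv_one_sub_mem_nonnegCoeffs
      (mul_mem (C_mem_nonnegCoeffs (zero_le_one.trans hx)) (pow_mem X_mem_nonnegCoeffs _))
      (by simp [hc.ne'])
  have hsplit : (1 - X ^ (c * n)) * h =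
      (∑ i ∈ range n, (X ^ c) ^ i) * (1 + C (x - 1) * X ^ c * h) := by
    rw [pow_mul, ← mul_neg_geom_sum, map_sub, map_one]
    linear_combination (∑ i ∈ range n, (X ^ c : k⟦X⟧) ^ i) * hinv
  rw [hsplit]
  refine mul_mem (sum_mem fun i _ => pow_mem (pow_mem X_mem_nonnegCoeffs _) _)
    (add_mem (one_mem _) (mul_mem (mul_mem ?_ (pow_mem X_mem_nonnegCoeffs _)) hh))
  exact C_mem_nonnegCoeffs (sub_nonneg.2 hx)

noncomputable def ratioFactor (x y : k) (e : ℕ) : k⟦X⟧ :=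
  (1 + C y * X ^ e) * (1 - C x * X ^ e)⁻¹

theorem ratioFactor_mem_nonnegCoeffs {x y : k} (hx : 0 ≤ x) (hy : 0 ≤ y) {e : ℕ} (he : 0 < e) :
    ratioFactor x y e ∈ nonnegCoeffs k :=
  mul_mem (add_mem (one_mem _) (mul_mem (C_mem_nonnegCoeffs hy) (pow_mem X_mem_nonnegCoeffs _)))
    (inv_one_sub_mem_nonnegCoeffs
      (mul_mem (C_mem_nonnegCoeffs hx) (pow_mem X_mem_nonnegCoeffs _)) (by simp [he.ne']))

theorem ratioFactor_mul_inv (x y : k) {e : ℕ} (he : 0 < e) :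
    ratioFactor x y e * ((1 - C x * X ^ e) * (1 + C y * X ^ e)⁻¹) = 1 := by
  calc _ = ((1 + C y * X ^ e) * (1 + C y * X ^ e)⁻¹) *
          ((1 - C x * X ^ e)⁻¹ * (1 - C x * X ^ e)) := by
        rw [ratioFactor]
        ring
    _ = 1 := by
        rw [PowerSeries.mul_inv_cancel _ (by simp [he.ne']),
          PowerSeries.inv_mul_cancel _ (by simp [he.ne']), one_mul]

theorem one_sub_X_pow_mul_prod_ratioFactor_mem_nonnegCoeffs {x y : k} (hx : 1 ≤ x) (hy : 0 ≤ y)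
    {s : Finset ℕ} (hs : ∀ e ∈ s, 0 < e) {c d : ℕ} (hc : c ∈ s) (hcd : c ∣ d) :
    (1 - X ^ d) * ∏ e ∈ s, ratioFactor x y e ∈ nonnegCoeffs k := by
  rw [← mul_prod_erase s _ hc]
  have hregroup : (1 - X ^ d) * (ratioFactor x y c * ∏ e ∈ s.erase c, ratioFactor x y e) =
      (1 + C y * X ^ c) * ((1 - X ^ d) * (1 - C x * X ^ c)⁻¹) *
        ∏ e ∈ s.erase c, ratioFactor x y e := by
    rw [ratioFactor]
    ring
  rw [hregroup]
  refine mul_mem (mul_mem ?_ (one_sub_X_pow_mul_inv_mem_nonnegCoeffs hx (hs c hc) hcd))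
    (prod_mem fun e he => ratioFactor_mem_nonnegCoeffs (zero_le_one.trans hx) hy
      (hs e (mem_of_mem_erase he)))
  exact add_mem (one_mem _) (mul_mem (C_mem_nonnegCoeffs hy) (pow_mem X_mem_nonnegCoeffs _))

end Field

end PowerSeries

def twoProgressions (a b m n : ℕ) : Finset ℕ :=
  (range n).image (a + · * m) ∪ (range n).image (b + · * m)

theorem mem_twoProgressions {a b m n e : ℕ} :
    e ∈ twoProgressions a b m n ↔ ∃ j < n, a + j * m = e ∨ b + j * m = e := by
  simp only [twoProgressions, mem_union, mem_image, mem_range, and_or_left, exists_or]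

theorem prod_twoProgressions {M : Type*} [CommMonoid M] (g : ℕ → M) {a b m : ℕ} (hm : 0 < m)
    (hab : a % m ≠ b % m) (n : ℕ) :
    ∏ j ∈ range n, g (a + j * m) * g (b + j * m) = ∏ e ∈ twoProgressions a b m n, g e := by
  have hinj (c : ℕ) : Set.InjOn (c + · * m) (range n) := fun i _ j _ h =>
    Nat.eq_of_mul_eq_mul_right hm (Nat.add_left_cancel h)
  have hdisj : Disjoint ((range n).image (a + · * m)) ((range n).image (b + · * m)) := by
    simp only [disjoint_left, mem_image]
    rintro _ ⟨i, -, rfl⟩ ⟨j, -, h⟩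
    apply hab
    simpa [Nat.add_mul_mod_self_right] using congrArg (· % m) h.symm
  rw [twoProgressions, prod_union hdisj, prod_image (hinj a), prod_image (hinj b),
    prod_mul_distrib]

theorem mod_ne_mod_of_lt_of_le {a b m : ℕ} (ha : 0 < a) (hab : a < b) (hbm : b ≤ m) :
    a % m ≠ b % m := by
  rw [Nat.mod_eq_of_lt (by omega)]
  rcases hbm.lt_or_eq with hbm | rfl
  · rw [Nat.mod_eq_of_lt hbm]
    omega
  · rw [Nat.mod_self]
    omega

theorem exists_dvd_sub_not_mem_twoProgressions {a b m : ℕ} (ha : 1 ≤ a) (hab : a < b)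
    (hbm : b ≤ m) (hne : ¬(a = 1 ∧ b = 2)) :
    ∃ c, 0 < c ∧ c ∣ b - a ∧ ∀ n, c ∉ twoProgressions a b m n := by
  by_cases ha1 : a = 1
  · subst ha1
    refine ⟨b - 1, by omega, dvd_rfl, fun n hc => ?_⟩
    obtain ⟨j, -, h | h⟩ := mem_twoProgressions.1 hc
    · rcases j.eq_zero_or_pos with rfl | hj
      · omega
      · have := Nat.le_mul_of_pos_left m hj
        omega
    · omega
  · refine ⟨1, one_pos, one_dvd _, fun n hc => ?_⟩
    obtain ⟨j, -, h | h⟩ := mem_twoProgressions.1 hc <;> omega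

/-- Let `1 ≤ a < b ≤ m` with `(a, b) ≠ (1, 2)`, and `x ≥ 1`, `y ≥ 0`. Then all
Taylor coefficients about `q = 0` of
`f(q) = (1 − q^{b−a}) · ∏_{j≥1} (1 + y q^j)/(1 − x q^j)
          · ∏_{j≥0} (1 − x q^{a+jm})(1 − x q^{b+jm})/((1 + y q^{a+jm})(1 + y q^{b+jm}))`
are non-negative.  The coefficient of `q^N` of the infinite product is captured
faithfully by the finite truncation below, since every omitted factor is of the
form `1 + O(q^{N+1})` and hence does not affect the coefficients up to `q^N`. -/
theorem coeffs_nonneg_f (a b m : ℕ) (ha : 1 ≤ a) (hab : a < b) (hbm : b ≤ m)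
    (hne : ¬(a = 1 ∧ b = 2)) (x y : ℝ) (hx : 1 ≤ x) (hy : 0 ≤ y) (N : ℕ) :
    0 ≤ coeff (R := ℝ) N ((1 - X ^ (b - a)) *
      (∏ j ∈ Finset.range (N + 1),
        (1 + C (R := ℝ) y * X ^ (j + 1)) * (1 - C (R := ℝ) x * X ^ (j + 1))⁻¹) *
      (∏ j ∈ Finset.range (N + 1),
        (1 - C (R := ℝ) x * X ^ (a + j * m)) * (1 - C (R := ℝ) x * X ^ (b + j * m)) *
          (1 + C (R := ℝ) y * X ^ (a + j * m))⁻¹ * (1 + C (R := ℝ) y * X ^ (b + j * m))⁻¹)) := by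
  set I := Icc 1 (N + 1)
  set S := twoProgressions a b m (N + 1)
  have hI : ∀ e ∈ I \ S, 0 < e := fun e he => (mem_Icc.1 (mem_sdiff.1 he).1).1
  have hfirst : ∏ j ∈ range (N + 1), (1 + C y * X ^ (j + 1)) * (1 - C x * X ^ (j + 1))⁻¹ =
      ∏ e ∈ I, ratioFactor x y e :=
    prod_range_add_one_eq_prod_Icc (ratioFactor x y) (N + 1)
  set G : ℕ → ℝ⟦X⟧ := fun e => (1 - C x * X ^ e) * (1 + C y * X ^ e)⁻¹
  have hsecond : ∏ j ∈ range (N + 1), (1 - C x * X ^ (a + j * m)) * (1 - C x * X ^ (b + j * m)) *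
      (1 + C y * X ^ (a + j * m))⁻¹ * (1 + C y * X ^ (b + j * m))⁻¹ = ∏ e ∈ S, G e := by
    rw [← prod_twoProgressions G (by omega) (mod_ne_mod_of_lt_of_le ha hab hbm)]
    exact prod_congr rfl fun j _ => by ring
  have hE : ∏ e ∈ S \ I, G e ∈ oneModXPow ℝ (N + 1) := prod_mem_oneModXPow_of_le x y fun e he => by
    obtain ⟨heS, heI⟩ := mem_sdiff.1 he
    simp only [I, mem_Icc] at heI
    obtain ⟨j, -, rfl | rfl⟩ := mem_twoProgressions.1 heS <;> omega
  rw [hfirst, hsecond, mul_assoc, prod_mul_prod_eq_prod_sdiff_mul_prod_sdiff fun e he =>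
    ratioFactor_mul_inv x y (mem_Icc.1 (mem_inter.1 he).1).1]
  by_cases hd : b - a ≤ N
  · obtain ⟨c, hc, hcd, hcS⟩ := exists_dvd_sub_not_mem_twoProgressions ha hab hbm hne
    have hcI : c ∈ I \ S :=
      mem_sdiff.2 ⟨mem_Icc.2 ⟨hc, (Nat.le_of_dvd (by omega) hcd).trans (by omega)⟩, hcS _⟩
    rw [← mul_assoc, coeff_mul_of_mem_oneModXPow hE]
    exact one_sub_X_pow_mul_prod_ratioFactor_mem_nonnegCoeffs hx hy hI hcI hcd N
  · rw [mul_left_comm, coeff_mul_of_mem_oneModXPow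
      (mul_mem (one_sub_mem_oneModXPow (pow_dvd_pow X (by omega))) hE)]
    exact prod_mem (fun e he => ratioFactor_mem_nonnegCoeffs (zero_le_one.trans hx) hy (hI e he)) N
end

section
/- For all integers m, s ≥ 1, the formal power series Σ_{k≥0} q^k (1 − q^k)/((q^s; q^m)_k) has non-negative coefficients, where (t; q^m)_k = ∏_{0≤j<k} (1 − t q^{mj}). -/
open PowerSeries

/-!
Write `u_k = 1/(q^s; q^m)_k`, so that the series is `Σ_k q^k u_k − Σ_k q^{2k} u_k`. Each `u_k` is
a product of geometric series `1/(1 − q^e)`, so it has non-negative coefficients and constant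
term `1`; hence `u_k ≤ u_{2k}` coefficientwise. The negative term `q^{2k} u_k` is therefore
dominated by the positive term `q^{2k} u_{2k}` of index `2k`, and `k ↦ 2k` is injective.
-/

namespace Finset

theorem sum_range_comp_two_mul_le {M : Type*} [AddCommMonoid M] [PartialOrder M]
    [IsOrderedAddMonoid M] {a : ℕ → M} {N : ℕ} (ha : ∀ j, 0 ≤ a j)
    (ha_eq_zero : ∀ j, N < j → a j = 0) :
    ∑ k ∈ range (N + 1), a (2 * k) ≤ ∑ j ∈ range (N + 1), a j :=
  calc ∑ k ∈ range (N + 1), a (2 * k) = ∑ j ∈ (range (N + 1)).image (2 * ·), a j :=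
        (sum_image fun _ _ _ _ h => by omega).symm
    _ ≤ ∑ j ∈ range (N + 1 + N), a j :=
        sum_le_sum_of_subset_of_nonneg (fun j hj => by simp at hj ⊢; omega) fun j _ _ => ha j
    _ = ∑ j ∈ range (N + 1), a j := by
        rw [sum_range_add, sum_eq_zero fun j _ => ha_eq_zero (N + 1 + j) (by omega), add_zero]

end Finset

namespace PowerSeries

section OrderedSemiring

variable {R : Type*} [Semiring R] [PartialOrder R] [IsOrderedRing R]

theorem coeff_mul_nonneg {f g : R⟦X⟧} (hf : ∀ n, 0 ≤ coeff n f) (hg : ∀ n, 0 ≤ coeff n g)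
    (n : ℕ) : 0 ≤ coeff n (f * g) := by
  rw [coeff_mul]
  exact Finset.sum_nonneg fun p _ => mul_nonneg (hf p.1) (hg p.2)

theorem coeff_le_coeff_mul_of_constantCoeff_eq_one {f g : R⟦X⟧} (hf : ∀ n, 0 ≤ coeff n f)
    (hg : ∀ n, 0 ≤ coeff n g) (hg₀ : constantCoeff g = 1) (n : ℕ) :
    coeff n f ≤ coeff n (f * g) := by
  rw [coeff_mul]
  calc coeff n f = coeff n f * coeff 0 g := by rw [coeff_zero_eq_constantCoeff, hg₀, mul_one]
    _ ≤ _ := Finset.single_le_sum (f := fun p : ℕ × ℕ => coeff p.1 f * coeff p.2 g)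
        (fun p _ => mul_nonneg (hf p.1) (hg p.2))
        (by simp : (n, 0) ∈ Finset.HasAntidiagonal.antidiagonal n)

end OrderedSemiring

section OrderedRing

variable {R : Type*} [CommRing R] [PartialOrder R] [IsOrderedRing R]

theorem coeff_sum_X_pow_mul_one_sub_X_pow_mul_nonneg (u : ℕ → R⟦X⟧)
    (hu : ∀ k n, 0 ≤ coeff n (u k)) (hu_mono : ∀ n, Monotone fun k => coeff n (u k)) (N : ℕ) :
    0 ≤ coeff N (∑ k ∈ Finset.range (N + 1), X ^ k * (1 - X ^ k) * u k) := by
  set a : ℕ → R := fun j => coeff N (X ^ j * u j) with ha_def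
  have ha : ∀ j, 0 ≤ a j := fun j => by
    simp only [ha_def, coeff_X_pow_mul']
    split_ifs
    exacts [hu _ _, le_rfl]
  have ha_eq_zero : ∀ j, N < j → a j = 0 := fun j hj => by
    simp only [ha_def, coeff_X_pow_mul', if_neg (show ¬j ≤ N by omega)]
  have hterm : ∀ k, coeff N (X ^ k * (1 - X ^ k) * u k) = a k - coeff N (X ^ (2 * k) * u k) :=
    fun k => by rw [mul_sub, mul_one, ← pow_add, sub_mul, map_sub, two_mul]
  have hneg : ∀ k, coeff N (X ^ (2 * k) * u k) ≤ a (2 * k) := fun k => by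
    simp only [ha_def, coeff_X_pow_mul']
    split_ifs
    exacts [hu_mono _ (by omega), le_rfl]
  rw [map_sum, Finset.sum_congr rfl fun k _ => hterm k, Finset.sum_sub_distrib, sub_nonneg]
  exact (Finset.sum_le_sum fun k _ => hneg k).trans (Finset.sum_range_comp_two_mul_le ha ha_eq_zero)

end OrderedRing

section Field

variable {K : Type*} [Field K]

theorem constantCoeff_one_sub_X_pow {e : ℕ} (he : e ≠ 0) :
    constantCoeff (1 - X ^ e : K⟦X⟧) = 1 := by
  simp [zero_pow he]

theorem coeff_inv_one_sub_X_pow {e : ℕ} (he : e ≠ 0) (n : ℕ) :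
    coeff n (1 - X ^ e : K⟦X⟧)⁻¹ = if e ∣ n then 1 else 0 := by
  suffices (1 - X ^ e : K⟦X⟧)⁻¹ = mk fun n => if e ∣ n then 1 else 0 by rw [this, coeff_mk]
  rw [inv_eq_iff_mul_eq_one (by rw [constantCoeff_one_sub_X_pow he]; exact one_ne_zero)]
  ext n
  rw [mul_sub, mul_one, map_sub, coeff_mk, coeff_mul_X_pow', coeff_mk, coeff_one]
  rcases Nat.eq_zero_or_pos n with rfl | hn
  · simp [he]
  · by_cases hen : e ≤ n
    · simp [hen, hn.ne', Nat.dvd_sub_iff_left hen dvd_rfl]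
    · simp [hen, hn.ne', mt (Nat.le_of_dvd hn) hen]

theorem inv_prod_range_succ_one_sub_X_pow (e : ℕ → ℕ) (k : ℕ) :
    (∏ j ∈ Finset.range (k + 1), (1 - X ^ e j : K⟦X⟧))⁻¹ =
      (∏ j ∈ Finset.range k, (1 - X ^ e j : K⟦X⟧))⁻¹ * (1 - X ^ e k)⁻¹ := by
  rw [Finset.prod_range_succ, PowerSeries.mul_inv_rev, mul_comm]

end Field

section LinearOrderedField

variable {K : Type*} [Field K] [LinearOrder K] [IsStrictOrderedRing K]

theorem coeff_inv_one_sub_X_pow_nonneg {e : ℕ} (he : e ≠ 0) (n : ℕ) :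
    0 ≤ coeff n (1 - X ^ e : K⟦X⟧)⁻¹ := by
  rw [coeff_inv_one_sub_X_pow he]
  split_ifs <;> norm_num

variable {e : ℕ → ℕ} (he : ∀ j, e j ≠ 0)
include he

theorem coeff_inv_prod_one_sub_X_pow_nonneg (k n : ℕ) :
    0 ≤ coeff n (∏ j ∈ Finset.range k, (1 - X ^ e j : K⟦X⟧))⁻¹ := by
  induction k generalizing n with
  | zero =>
    rw [Finset.prod_range_zero, inv_one, coeff_one]
    split_ifs <;> norm_num
  | succ k ih =>
    rw [inv_prod_range_succ_one_sub_X_pow]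
    exact coeff_mul_nonneg ih (coeff_inv_one_sub_X_pow_nonneg (he k)) n

theorem monotone_coeff_inv_prod_one_sub_X_pow (n : ℕ) :
    Monotone fun k => coeff n (∏ j ∈ Finset.range k, (1 - X ^ e j : K⟦X⟧))⁻¹ :=
  monotone_nat_of_le_succ fun k => by
    rw [inv_prod_range_succ_one_sub_X_pow]
    refine coeff_le_coeff_mul_of_constantCoeff_eq_one (coeff_inv_prod_one_sub_X_pow_nonneg he k)
      (coeff_inv_one_sub_X_pow_nonneg (he k)) ?_ n
    rw [constantCoeff_inv, constantCoeff_one_sub_X_pow (he k), inv_one]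

end LinearOrderedField

end PowerSeries

theorem chern_binner_positivity_general (m s : ℕ) (hs : 1 ≤ s) (N : ℕ) :
    0 ≤ coeff (R := ℝ) N (∑ k ∈ Finset.range (N + 1),
      X ^ k * (1 - X ^ k) *
        (∏ j ∈ Finset.range k, (1 - (X : PowerSeries ℝ) ^ (s + m * j)))⁻¹) := by
  have he : ∀ j, s + m * j ≠ 0 := fun j => by omega
  exact coeff_sum_X_pow_mul_one_sub_X_pow_mul_nonneg _
    (coeff_inv_prod_one_sub_X_pow_nonneg he) (monotone_coeff_inv_prod_one_sub_X_pow he) N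

/-- For all integers `m, s ≥ 1`, the formal power series
`Σ_{k≥0} q^k (1 − q^k)/((q^s; q^m)_k)`, where
`(t; q^m)_k = ∏_{0≤j<k}(1 − t q^{mj})`, has non-negative coefficients.
The `k`-th summand has order at least `k`, so the coefficient of `q^N` of the
infinite sum is captured faithfully by the finite sum over `k ≤ N` below. -/
theorem chern_binner_positivity (m s : ℕ) (hm : 1 ≤ m) (hs : 1 ≤ s) (N : ℕ) :
    0 ≤ coeff (R := ℝ) N (∑ k ∈ Finset.range (N + 1),
      X ^ k * (1 - X ^ k) *
        (∏ j ∈ Finset.range k, (1 - (X : PowerSeries ℝ) ^ (s + m * j)))⁻¹) :=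
  chern_binner_positivity_general m s hs N
end

section
/- Let x ≥ 1, y ≥ 0 be reals and a, b, m, s positive integers. Then the formal power series Σ_{k≥0} (−yq^s/x; q^m)_k x^k q^{a(k+1)} / (q^s; q^m)_{k+1} − Σ_{k≥0} (−yq^s/x; q^m)_k x^k q^{ab(k+1)} / (q^s; q^m)_{k+1} has non-negative coefficients, where (t; q^m)_k = ∏_{0≤j<k}(1 − t q^{mj}). (When x = 0 the factor (−yq^s/x;q^m)_k x^k is interpreted as ∏_{0≤j<k}(x + y q^{s+mj}) with x = 0.) -/
open PowerSeries

/-!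
Write `T_c(k) = ∏_{j<k} (x + y q^{s+mj}) · q^{c(k+1)} / (q^s; q^m)_{k+1}` for the `k`-th summand.
For `b ≥ 1`, passing from `T_{ab}(k)` to `T_a(b(k+1) - 1)` keeps the power `q^{ab(k+1)}` and only
multiplies by further factors `x + y q^e` and `1 / (1 - q^e)`, each of which is `1` plus a series
with non-negative coefficients when `x ≥ 1`, `y ≥ 0`. So `T_{ab}(k)` is coefficientwise at most
`T_a(b(k+1) - 1)`, and since `k ↦ b(k+1) - 1` is injective and all summands are non-negative,
the `ab`-series is dominated by the `a`-series. Truncating both at `k ≤ N` is harmless for the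
coefficient of `q^N`, since `q^{a(k+1)}` divides `T_a(k)`.
-/

theorem Finset.sum_le_sum_of_le_comp_of_injOn {ι κ M : Type*} [DecidableEq κ] [AddCommMonoid M]
    [PartialOrder M] [IsOrderedAddMonoid M] {s : Finset ι} {t : Finset κ} {f : ι → M}
    {g : κ → M} (φ : ι → κ) (hφ : Set.InjOn φ s) (hfg : ∀ i ∈ s, f i ≤ g (φ i))
    (hg : ∀ j, 0 ≤ g j) (hgt : ∀ j ∉ t, g j = 0) :
    ∑ i ∈ s, f i ≤ ∑ j ∈ t, g j :=
  calc ∑ i ∈ s, f i ≤ ∑ i ∈ s, g (φ i) := Finset.sum_le_sum hfg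
    _ = ∑ j ∈ s.image φ, g j := (Finset.sum_image hφ).symm
    _ ≤ ∑ j ∈ s.image φ ∪ t, g j :=
      Finset.sum_le_sum_of_subset_of_nonneg Finset.subset_union_left fun j _ _ => hg j
    _ = ∑ j ∈ t, g j :=
      (Finset.sum_subset Finset.subset_union_right fun j _ hj => hgt j hj).symm

namespace PowerSeries

variable {K : Type*} [Field K]

theorem inv_one_sub_eq {g : K⟦X⟧} (hg : constantCoeff g = 0) :
    (1 - g)⁻¹ = 1 + g * (1 - g)⁻¹ := by
  have := PowerSeries.mul_inv_cancel (1 - g) (by simp [hg])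
  linear_combination this

theorem inv_prod_range (n : ℕ) (f : ℕ → K⟦X⟧) :
    (∏ j ∈ Finset.range n, f j)⁻¹ = ∏ j ∈ Finset.range n, (f j)⁻¹ := by
  induction n with
  | zero => simp
  | succ n ih => rw [Finset.prod_range_succ, Finset.prod_range_succ, PowerSeries.mul_inv_rev, ih,
      mul_comm]

variable [LinearOrder K]

def CoeffNonneg (f : K⟦X⟧) : Prop := ∀ n, 0 ≤ coeff n f

theorem coeffNonneg_C {c : K} (hc : 0 ≤ c) : CoeffNonneg (C c) := by
  intro n
  rw [coeff_C]
  split_ifs <;> simp [hc]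

variable [IsStrictOrderedRing K]

theorem coeffNonneg_one : CoeffNonneg (1 : K⟦X⟧) := by
  intro n
  rw [coeff_one]
  split_ifs <;> simp

theorem coeffNonneg_X_pow (e : ℕ) : CoeffNonneg (X ^ e : K⟦X⟧) := by
  intro n
  rw [coeff_X_pow]
  split_ifs <;> simp

namespace CoeffNonneg

variable {f g : K⟦X⟧}

theorem add (hf : CoeffNonneg f) (hg : CoeffNonneg g) : CoeffNonneg (f + g) := fun n => by
  rw [map_add]
  exact add_nonneg (hf n) (hg n)

theorem mul (hf : CoeffNonneg f) (hg : CoeffNonneg g) : CoeffNonneg (f * g) := fun n => by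
  rw [coeff_mul]
  exact Finset.sum_nonneg fun p _ => mul_nonneg (hf p.1) (hg p.2)

theorem of_sub_one (hf : CoeffNonneg (f - 1)) : CoeffNonneg f := by
  simpa using hf.add coeffNonneg_one

theorem mul_sub_one (hf : CoeffNonneg (f - 1)) (hg : CoeffNonneg (g - 1)) :
    CoeffNonneg (f * g - 1) := by
  rw [show f * g - 1 = (f - 1) * g + (g - 1) by ring]
  exact (hf.mul hg.of_sub_one).add hg

theorem prod_sub_one {ι : Type*} {s : Finset ι} {f : ι → K⟦X⟧}
    (hf : ∀ i ∈ s, CoeffNonneg (f i - 1)) : CoeffNonneg (∏ i ∈ s, f i - 1) :=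
  Finset.prod_induction f (fun g => CoeffNonneg (g - 1)) (fun _ _ => mul_sub_one)
    (by rw [sub_self]; exact fun _ => by simp) hf

theorem coeff_le_coeff_mul (hf : CoeffNonneg f) (hg : CoeffNonneg (g - 1)) (n : ℕ) :
    coeff n f ≤ coeff n (f * g) := by
  have := (hf.mul hg) n
  rwa [_root_.mul_sub_one, map_sub, sub_nonneg] at this

end CoeffNonneg

theorem coeffNonneg_inv_one_sub {g : K⟦X⟧} (hg₀ : constantCoeff g = 0) (hg : CoeffNonneg g) :
    CoeffNonneg (1 - g)⁻¹ := by
  intro n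
  induction n using Nat.strong_induction_on with
  | _ n ih =>
    rw [inv_one_sub_eq hg₀, map_add, coeff_mul]
    refine add_nonneg (coeffNonneg_one n) (Finset.sum_nonneg ?_)
    rintro ⟨i, j⟩ hij
    rw [Finset.HasAntidiagonal.mem_antidiagonal] at hij
    rcases Nat.eq_zero_or_pos i with rfl | hi
    · simp [hg₀]
    · exact mul_nonneg (hg i) (ih j (by omega))

theorem coeffNonneg_inv_one_sub_X_pow_sub_one {e : ℕ} (he : 1 ≤ e) :
    CoeffNonneg ((1 - X ^ e : K⟦X⟧)⁻¹ - 1) := by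
  have hX : constantCoeff (X ^ e : K⟦X⟧) = 0 := by
    rw [map_pow, constantCoeff_X, zero_pow (by omega)]
  rw [inv_one_sub_eq hX, add_sub_cancel_left]
  exact (coeffNonneg_X_pow e).mul (coeffNonneg_inv_one_sub hX (coeffNonneg_X_pow e))

theorem coeffNonneg_inv_prod_one_sub_X_pow_sub_one {n : ℕ} {e : ℕ → ℕ}
    (he : ∀ j, 1 ≤ e j) :
    CoeffNonneg ((∏ j ∈ Finset.range n, (1 - X ^ e j : K⟦X⟧))⁻¹ - 1) := by
  rw [inv_prod_range]
  exact CoeffNonneg.prod_sub_one fun j _ => coeffNonneg_inv_one_sub_X_pow_sub_one (he j)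

theorem coeffNonneg_C_add_C_mul_X_pow_sub_one {x y : K} (hx : 1 ≤ x) (hy : 0 ≤ y) (e : ℕ) :
    CoeffNonneg (C x + C y * X ^ e - 1) := by
  rw [show C x + C y * X ^ e - 1 = C (x - 1) + C y * X ^ e by
    rw [map_sub, map_one]; ring]
  exact (coeffNonneg_C (by linarith)).add ((coeffNonneg_C hy).mul (coeffNonneg_X_pow e))

end PowerSeries

section

variable {K : Type*} [Field K]

noncomputable def qSummand (x y : K) (m s c k : ℕ) : K⟦X⟧ :=
  (∏ j ∈ Finset.range k, (C x + C y * X ^ (s + m * j))) * X ^ (c * (k + 1)) *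
    (∏ j ∈ Finset.range (k + 1), (1 - X ^ (s + m * j)))⁻¹

theorem coeff_qSummand_eq_zero (x y : K) (m s : ℕ) {c k n : ℕ} (h : n < c * (k + 1)) :
    coeff n (qSummand x y m s c k) = 0 := by
  rw [qSummand, mul_comm _ (X ^ _), mul_assoc, coeff_X_pow_mul', if_neg (by omega)]

theorem qSummand_add (x y : K) (m s c k d : ℕ) :
    qSummand x y m s c (k + d) = qSummand x y m s c k * X ^ (c * d) *
      ((∏ i ∈ Finset.range d, (C x + C y * X ^ (s + m * (k + i)))) *
        (∏ i ∈ Finset.range d, (1 - X ^ (s + m * (k + 1 + i))))⁻¹) := by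
  rw [qSummand, qSummand, Finset.prod_range_add, show k + d + 1 = k + 1 + d by omega,
    Finset.prod_range_add, PowerSeries.mul_inv_rev]
  ring

variable [LinearOrder K] [IsStrictOrderedRing K]

theorem coeffNonneg_qSummand {x y : K} (hx : 0 ≤ x) (hy : 0 ≤ y) {s : ℕ} (hs : 1 ≤ s)
    (m c k : ℕ) : CoeffNonneg (qSummand x y m s c k) := by
  refine (CoeffNonneg.mul ?_ (coeffNonneg_X_pow _)).mul ?_
  · exact Finset.prod_induction _ CoeffNonneg (fun _ _ => CoeffNonneg.mul) coeffNonneg_one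
      fun j _ => (coeffNonneg_C hx).add ((coeffNonneg_C hy).mul (coeffNonneg_X_pow _))
  · exact (coeffNonneg_inv_prod_one_sub_X_pow_sub_one fun j => by omega).of_sub_one

theorem coeff_qSummand_le {x y : K} (hx : 1 ≤ x) (hy : 0 ≤ y) {s : ℕ} (hs : 1 ≤ s)
    (m c b k n : ℕ) :
    coeff n (qSummand x y m s (c * (b + 1)) k) ≤
      coeff n (qSummand x y m s c (k + b * (k + 1))) := by
  have hshift :
      qSummand x y m s (c * (b + 1)) k = qSummand x y m s c k * X ^ (c * (b * (k + 1))) := by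
    rw [qSummand, qSummand, show c * (b + 1) * (k + 1) = c * (k + 1) + c * (b * (k + 1)) by ring,
      pow_add]
    ring
  rw [hshift, qSummand_add]
  refine CoeffNonneg.coeff_le_coeff_mul
    ((coeffNonneg_qSummand (by linarith) hy hs m c k).mul (coeffNonneg_X_pow _)) ?_ n
  exact (CoeffNonneg.prod_sub_one fun i _ =>
    coeffNonneg_C_add_C_mul_X_pow_sub_one hx hy _).mul_sub_one
      (coeffNonneg_inv_prod_one_sub_X_pow_sub_one fun i => by omega)

end

theorem qseries_difference_nonneg_general (x y : ℝ) (hx : 1 ≤ x) (hy : 0 ≤ y)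
    (a b m s : ℕ) (ha : 1 ≤ a) (hb : 1 ≤ b) (hs : 1 ≤ s) (N : ℕ) :
    0 ≤ coeff (R := ℝ) N
      ((∑ k ∈ Finset.range (N + 1),
          (∏ j ∈ Finset.range k, (C (R := ℝ) x + C (R := ℝ) y * X ^ (s + m * j))) *
            X ^ (a * (k + 1)) *
            (∏ j ∈ Finset.range (k + 1), (1 - (X : PowerSeries ℝ) ^ (s + m * j)))⁻¹) -
       (∑ k ∈ Finset.range (N + 1),
          (∏ j ∈ Finset.range k, (C (R := ℝ) x + C (R := ℝ) y * X ^ (s + m * j))) *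
            X ^ (a * b * (k + 1)) *
            (∏ j ∈ Finset.range (k + 1), (1 - (X : PowerSeries ℝ) ^ (s + m * j)))⁻¹)) := by
  obtain ⟨b, rfl⟩ := Nat.exists_eq_add_one.mpr hb
  rw [map_sub, sub_nonneg, map_sum, map_sum]
  change ∑ k ∈ Finset.range (N + 1), coeff N (qSummand x y m s (a * (b + 1)) k) ≤
    ∑ k ∈ Finset.range (N + 1), coeff N (qSummand x y m s a k)
  have hinj : Function.Injective fun k => k + b * (k + 1) := fun u v huv => by
    simp only at huv
    nlinarith
  refine Finset.sum_le_sum_of_le_comp_of_injOn _ hinj.injOn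
    (fun k _ => coeff_qSummand_le hx hy hs m a b k N)
    (fun j => coeffNonneg_qSummand (by linarith) hy hs m a j N) fun j hj => ?_
  rw [Finset.mem_range, not_lt] at hj
  exact coeff_qSummand_eq_zero x y m s (by nlinarith)

/-- Let `x ≥ 1`, `y ≥ 0` and `a, b, m, s ≥ 1`. Then the formal power series
`Σ_{k≥0} (−yq^s/x; q^m)_k x^k q^{a(k+1)}/(q^s; q^m)_{k+1}
  − Σ_{k≥0} (−yq^s/x; q^m)_k x^k q^{ab(k+1)}/(q^s; q^m)_{k+1}`
has non-negative coefficients, where `(t; q^m)_k = ∏_{0≤j<k}(1 − t q^{mj})` and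
`(−yq^s/x; q^m)_k x^k = ∏_{0≤j<k}(x + y q^{s+mj})`.
The `k`-th summand of each series has order at least `k + 1`, so the
coefficient of `q^N` of each infinite sum is captured faithfully by the finite
sum over `k ≤ N` below. -/
theorem qseries_difference_nonneg (x y : ℝ) (hx : 1 ≤ x) (hy : 0 ≤ y)
    (a b m s : ℕ) (ha : 1 ≤ a) (hb : 1 ≤ b) (hm : 1 ≤ m) (hs : 1 ≤ s) (N : ℕ) :
    0 ≤ coeff (R := ℝ) N
      ((∑ k ∈ Finset.range (N + 1),
          (∏ j ∈ Finset.range k, (C (R := ℝ) x + C (R := ℝ) y * X ^ (s + m * j))) *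
            X ^ (a * (k + 1)) *
            (∏ j ∈ Finset.range (k + 1), (1 - (X : PowerSeries ℝ) ^ (s + m * j)))⁻¹) -
       (∑ k ∈ Finset.range (N + 1),
          (∏ j ∈ Finset.range k, (C (R := ℝ) x + C (R := ℝ) y * X ^ (s + m * j))) *
            X ^ (a * b * (k + 1)) *
            (∏ j ∈ Finset.range (k + 1), (1 - (X : PowerSeries ℝ) ^ (s + m * j)))⁻¹)) :=
  qseries_difference_nonneg_general x y hx hy a b m s ha hb hs N
end

section
/- For real x ≥ 1, y ≥ 0 and positive integers h, a_0 < b_0 with a_0 dividing b_0, the formal power series (1 + y q^{a_0})/(1 − x q^{a_0}) · (x q^{a_0})^h − (1 + y q^{b_0})/(1 − x q^{b_0}) · (x q^{b_0})^h has non-negative coefficients. -/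
/-!
Both series are `G(q^{a₀})` and `G(q^{b₀})` for `G = (1 + y q)(x q)^h / (1 - x q)`, so the
`N`-th coefficients are `g (N / a₀)` and `g (N / b₀)` (or `0` when the divisibility fails), where
`g n` is the `n`-th coefficient of `G`. From `(1 - x q) G = (1 + y q)(x q)^h` one gets
`g (n + 1) = x g n + r (n + 1)` with `r ≥ 0`, so `g` is non-negative and, as `x ≥ 1`, monotone.
Since `a₀ ∣ b₀`, whenever `b₀ ∣ N` also `a₀ ∣ N`, and `N / b₀ ≤ N / a₀`.
-/

open PowerSeries

namespace PowerSeries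

theorem expand_inv {k : Type*} [Field k] (p : ℕ) (hp : p ≠ 0) (φ : k⟦X⟧)
    (hφ : constantCoeff φ ≠ 0) : expand p hp φ⁻¹ = (expand p hp φ)⁻¹ := by
  rw [eq_inv_iff_mul_eq_one (by simpa), ← map_mul, PowerSeries.inv_mul_cancel _ hφ, map_one]

theorem coeff_succ_of_one_sub_C_mul_X_mul {R : Type*} [CommRing R] {x : R} {φ ψ : R⟦X⟧}
    (h : (1 - C x * X) * φ = ψ) (n : ℕ) :
    coeff (n + 1) φ = x * coeff n φ + coeff (n + 1) ψ := by
  rw [← h, sub_mul, one_mul, mul_assoc, map_sub, coeff_C_mul, coeff_succ_X_mul]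
  ring

section Ordered

variable {R : Type*} [CommRing R] [PartialOrder R] [IsOrderedRing R]

theorem coeff_mul_nonneg_s11 {φ ψ : R⟦X⟧} (hφ : ∀ n, 0 ≤ coeff n φ) (hψ : ∀ n, 0 ≤ coeff n ψ)
    (n : ℕ) : 0 ≤ coeff n (φ * ψ) := by
  rw [coeff_mul]
  exact Finset.sum_nonneg fun i _ => mul_nonneg (hφ _) (hψ _)

variable {x : R} {φ ψ : R⟦X⟧}

theorem coeff_nonneg_of_one_sub_C_mul_X_mul (hx : 0 ≤ x) (h : (1 - C x * X) * φ = ψ)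
    (hψ : ∀ n, 0 ≤ coeff n ψ) (n : ℕ) : 0 ≤ coeff n φ := by
  induction n with
  | zero =>
    simpa [← h, sub_mul, mul_assoc] using hψ 0
  | succ n ih =>
    rw [coeff_succ_of_one_sub_C_mul_X_mul h]
    exact add_nonneg (mul_nonneg hx ih) (hψ _)

theorem monotone_coeff_of_one_sub_C_mul_X_mul (hx : 1 ≤ x) (h : (1 - C x * X) * φ = ψ)
    (hψ : ∀ n, 0 ≤ coeff n ψ) : Monotone fun n => coeff n φ := by
  refine monotone_nat_of_le_succ fun n => ?_
  have hφn := coeff_nonneg_of_one_sub_C_mul_X_mul (zero_le_one.trans hx) h hψ n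
  rw [coeff_succ_of_one_sub_C_mul_X_mul h]
  calc coeff n φ = 1 * coeff n φ := (one_mul _).symm
    _ ≤ x * coeff n φ := mul_le_mul_of_nonneg_right hx hφn
    _ ≤ x * coeff n φ + coeff (n + 1) ψ := le_add_of_nonneg_right (hψ _)

end Ordered

end PowerSeries

section AndrewsBase

variable (x y : ℝ) (h : ℕ)

noncomputable def andrewsBaseSeries : ℝ⟦X⟧ :=
  (1 + C y * X) * (1 - C x * X)⁻¹ * (C x * X) ^ h

theorem expand_andrewsBaseSeries (c : ℕ) (hc : c ≠ 0) :
    expand c hc (andrewsBaseSeries x y h) =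
      (1 + C y * X ^ c) * (1 - C x * X ^ c)⁻¹ * (C x * X ^ c) ^ h := by
  rw [andrewsBaseSeries, map_mul, map_mul, expand_inv _ _ _ (by simp)]
  simp [expand_C]

theorem one_sub_C_mul_X_mul_andrewsBaseSeries :
    (1 - C x * X) * andrewsBaseSeries x y h = (1 + C y * X) * (C x * X) ^ h := by
  rw [andrewsBaseSeries, mul_comm (1 + C y * X), ← mul_assoc, ← mul_assoc,
    PowerSeries.mul_inv_cancel _ (by simp), one_mul]

variable {x y}

theorem coeff_one_add_C_mul_X_mul_C_mul_X_pow_nonneg (hx : 0 ≤ x) (hy : 0 ≤ y) (n : ℕ) :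
    0 ≤ coeff n ((1 + C y * X) * (C x * X) ^ h) := by
  refine coeff_mul_nonneg_s11 (fun m => ?_) (fun m => ?_) n
  · rw [map_add, coeff_one, coeff_C_mul, coeff_X]
    split_ifs <;> positivity
  · rw [mul_pow, ← map_pow, coeff_C_mul_X_pow]
    split_ifs <;> positivity

theorem monotone_coeff_andrewsBaseSeries (hx : 1 ≤ x) (hy : 0 ≤ y) :
    Monotone fun n => coeff n (andrewsBaseSeries x y h) :=
  monotone_coeff_of_one_sub_C_mul_X_mul hx (one_sub_C_mul_X_mul_andrewsBaseSeries x y h)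
    (coeff_one_add_C_mul_X_mul_C_mul_X_pow_nonneg h (zero_le_one.trans hx) hy)

theorem coeff_andrewsBaseSeries_nonneg (hx : 0 ≤ x) (hy : 0 ≤ y) (n : ℕ) :
    0 ≤ coeff n (andrewsBaseSeries x y h) :=
  coeff_nonneg_of_one_sub_C_mul_X_mul hx (one_sub_C_mul_X_mul_andrewsBaseSeries x y h)
    (coeff_one_add_C_mul_X_mul_C_mul_X_pow_nonneg h hx hy) n

end AndrewsBase

theorem andrews_analogue_base_general (x y : ℝ) (hx : 1 ≤ x) (hy : 0 ≤ y)
    (h a₀ b₀ : ℕ) (ha : 0 < a₀) (hab : a₀ < b₀) (hdvd : a₀ ∣ b₀)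
    (N : ℕ) :
    0 ≤ coeff N
      ((1 + C y * X ^ a₀) * (1 - C x * X ^ a₀)⁻¹ * (C x * X ^ a₀) ^ h -
        (1 + C y * X ^ b₀) * (1 - C x * X ^ b₀)⁻¹ * (C x * X ^ b₀) ^ h) := by
  rw [← expand_andrewsBaseSeries x y h a₀ ha.ne',
    ← expand_andrewsBaseSeries x y h b₀ (ha.trans hab).ne',
    map_sub, coeff_expand, coeff_expand, sub_nonneg]
  by_cases hbN : b₀ ∣ N
  · rw [if_pos hbN, if_pos (hdvd.trans hbN)]
    exact monotone_coeff_andrewsBaseSeries h hx hy (Nat.div_le_div_left hab.le ha)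
  · rw [if_neg hbN]
    split_ifs
    exacts [coeff_andrewsBaseSeries_nonneg h (zero_le_one.trans hx) hy _, le_rfl]

/-- For reals `x ≥ 1`, `y ≥ 0` and positive integers `h` and `a₀ < b₀` with
`a₀ ∣ b₀`, the formal power series
`(1 + y q^{a₀})/(1 − x q^{a₀}) · (x q^{a₀})^h
  − (1 + y q^{b₀})/(1 − x q^{b₀}) · (x q^{b₀})^h`
has non-negative coefficients. -/
theorem andrews_analogue_base (x y : ℝ) (hx : 1 ≤ x) (hy : 0 ≤ y)
    (h a₀ b₀ : ℕ) (hh : 0 < h) (ha : 0 < a₀) (hab : a₀ < b₀) (hdvd : a₀ ∣ b₀)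
    (N : ℕ) :
    0 ≤ coeff N
      ((1 + C y * X ^ a₀) * (1 - C x * X ^ a₀)⁻¹ * (C x * X ^ a₀) ^ h -
        (1 + C y * X ^ b₀) * (1 - C x * X ^ b₀)⁻¹ * (C x * X ^ b₀) ^ h) :=
  andrews_analogue_base_general x y hx hy h a₀ b₀ ha hab hdvd N
end

section
/- As formal power series (or for |q| < 1 and ζ ≠ 0), (−ζ; q)_∞ (−q/ζ; q)_∞ (q; q)_∞ = Σ_{n∈ℤ} q^{n(n−1)/2} ζ^n (the Jacobi triple product identity). -/
/-!
Cauchy's finite form of the identity comes from the `q`-binomial theorem applied to the `2N`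
factors `1 + ζ q^(j - N)`, `j < 2N`: after pulling `ζ q^(-(j+1))` out of the lower half,
`(-ζ; q)_N (-q/ζ; q)_N = ∑_{|n| ≤ N} [2N, N + n]_q q^(n(n-1)/2) ζ^n`.
As `N → ∞` the Gaussian binomial coefficients tend to `1 / (q; q)_∞` and stay uniformly bounded,
so Tannery's theorem lets the limit pass inside the sum.
-/

open Finset Filter Topology

section Algebra

variable {R K : Type*} [CommRing R] [Field K]

def qPochhammer (a q : R) (m : ℕ) : R := ∏ j ∈ range m, (1 - a * q ^ j)

@[simp]
theorem qPochhammer_zero (a q : R) : qPochhammer a q 0 = 1 := prod_range_zero _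

theorem qPochhammer_succ (a q : R) (m : ℕ) :
    qPochhammer a q (m + 1) = qPochhammer a q m * (1 - a * q ^ m) :=
  prod_range_succ _ m

theorem one_sub_self_mul_pow_ne_zero {q : K} (hq : ∀ j, q ^ (j + 1) ≠ 1) (j : ℕ) :
    1 - q * q ^ j ≠ 0 := by
  rw [← pow_succ', sub_ne_zero]
  exact (hq j).symm

theorem qPochhammer_self_ne_zero {q : K} (hq : ∀ j, q ^ (j + 1) ≠ 1) (m : ℕ) :
    qPochhammer q q m ≠ 0 :=
  prod_ne_zero_iff.2 fun j _ ↦ one_sub_self_mul_pow_ne_zero hq j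

def qBinomial (q : K) (m k : ℕ) : K :=
  if k ≤ m then qPochhammer q q m / (qPochhammer q q k * qPochhammer q q (m - k)) else 0

section qBinomial

variable {q : K}

theorem qBinomial_of_le {m k : ℕ} (h : k ≤ m) :
    qBinomial q m k = qPochhammer q q m / (qPochhammer q q k * qPochhammer q q (m - k)) :=
  if_pos h

theorem qBinomial_add_left (a b : ℕ) :
    qBinomial q (a + b) a = qPochhammer q q (a + b) / (qPochhammer q q a * qPochhammer q q b) := by
  rw [qBinomial_of_le (Nat.le_add_right a b), Nat.add_sub_cancel_left]

theorem qBinomial_of_lt {m k : ℕ} (h : m < k) : qBinomial q m k = 0 :=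
  if_neg h.not_ge

theorem qBinomial_zero_right (hq : ∀ j, q ^ (j + 1) ≠ 1) (m : ℕ) : qBinomial q m 0 = 1 := by
  rw [qBinomial_of_le m.zero_le, qPochhammer_zero, one_mul, Nat.sub_zero,
    div_self (qPochhammer_self_ne_zero hq m)]

theorem qBinomial_self (hq : ∀ j, q ^ (j + 1) ≠ 1) (m : ℕ) : qBinomial q m m = 1 := by
  rw [qBinomial_of_le le_rfl, Nat.sub_self, qPochhammer_zero, mul_one,
    div_self (qPochhammer_self_ne_zero hq m)]

theorem qBinomial_succ_succ (hq : ∀ j, q ^ (j + 1) ≠ 1) {m k : ℕ} (h : k ≤ m) :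
    qBinomial q (m + 1) (k + 1) = qBinomial q m (k + 1) + q ^ (m - k) * qBinomial q m k := by
  obtain ⟨d, rfl⟩ := Nat.exists_eq_add_of_le h
  rcases d with _ | d
  · simp [qBinomial_self hq, qBinomial_of_lt]
  · have hP := qPochhammer_self_ne_zero hq
    have hk := one_sub_self_mul_pow_ne_zero hq k
    have hd := one_sub_self_mul_pow_ne_zero hq d
    rw [qBinomial_of_le (by omega), qBinomial_of_le (by omega), qBinomial_of_le (by omega),
      show k + (d + 1) + 1 - (k + 1) = d + 1 by omega, show k + (d + 1) - (k + 1) = d by omega,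
      show k + (d + 1) - k = d + 1 by omega, qPochhammer_succ q q (k + (d + 1)),
      qPochhammer_succ q q k, qPochhammer_succ q q d]
    field_simp
    ring

theorem qPochhammer_neg_eq_sum (hq : ∀ j, q ^ (j + 1) ≠ 1) (x : K) (m : ℕ) :
    qPochhammer (-x) q m = ∑ k ∈ range (m + 1), qBinomial q m k * q ^ k.choose 2 * x ^ k := by
  induction m with
  | zero => simp [qBinomial_zero_right hq]
  | succ m ih =>
    have hpascal : ∀ k ∈ range (m + 1),
        qBinomial q (m + 1) (k + 1) * q ^ (k + 1).choose 2 * x ^ (k + 1) =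
          qBinomial q m (k + 1) * q ^ (k + 1).choose 2 * x ^ (k + 1) +
            qBinomial q m k * q ^ k.choose 2 * x ^ k * (x * q ^ m) := by
      intro k hk
      have hkm : k ≤ m := Nat.lt_succ_iff.1 (mem_range.1 hk)
      rw [qBinomial_succ_succ hq hkm, Nat.choose_succ_succ', Nat.choose_one_right]
      have hpow : q ^ (m - k) * q ^ k = q ^ m := by rw [← pow_add, Nat.sub_add_cancel hkm]
      linear_combination qBinomial q m k * q ^ k.choose 2 * x ^ (k + 1) * hpow
    have hshift : qPochhammer (-x) q m =
        ∑ k ∈ range (m + 1), qBinomial q m (k + 1) * q ^ (k + 1).choose 2 * x ^ (k + 1) + 1 := by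
      rw [ih, sum_range_succ', sum_range_succ, qBinomial_of_lt m.lt_succ_self,
        qBinomial_zero_right hq]
      simp
    rw [sum_range_succ', sum_congr rfl hpascal, sum_add_distrib, ← sum_mul, ← ih,
      qBinomial_zero_right hq, qPochhammer_succ, Nat.choose_zero_succ]
    linear_combination hshift

end qBinomial

theorem Int.natCast_choose_two (n : ℕ) : (n.choose 2 : ℤ) = n * (n - 1) / 2 := by
  rw [Nat.choose_two_right, Int.natCast_div]
  rcases n with _ | n
  · rfl
  · push_cast
    ring_nf

variable {q ζ : K}

theorem qPochhammer_neg_div_pow_two_mul (hq0 : q ≠ 0) (hζ : ζ ≠ 0) (N : ℕ) :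
    qPochhammer (-(ζ / q ^ N)) q (2 * N) =
      ζ ^ N / q ^ (N + 1).choose 2 * (qPochhammer (-ζ) q N * qPochhammer (-q / ζ) q N) := by
  have hlow : ∀ j ∈ range N,
      1 - -(ζ / q ^ N) * q ^ (N - 1 - j) = ζ / q ^ (j + 1) * (1 - -q / ζ * q ^ j) := by
    intro j hj
    have hjN := mem_range.1 hj
    rw [show q ^ N = q ^ (N - 1 - j) * q ^ (j + 1) by
      rw [← pow_add, show N - 1 - j + (j + 1) = N by omega]]
    field_simp
    ring
  have hhigh : ∀ j ∈ range N, 1 - -(ζ / q ^ N) * q ^ (N + j) = 1 - -ζ * q ^ j := by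
    intro j _
    rw [pow_add]
    field_simp
  have hexp : ∑ j ∈ range N, (j + 1) = (N + 1).choose 2 := by
    rw [Nat.choose_two_right, ← sum_range_id, sum_range_succ']
    simp
  rw [qPochhammer, two_mul, prod_range_add,
    ← prod_range_reflect (fun j ↦ 1 - -(ζ / q ^ N) * q ^ j) N, prod_congr rfl hlow,
    prod_congr rfl hhigh, prod_mul_distrib, prod_div_distrib, prod_const, card_range,
    prod_pow_eq_pow_sum, hexp, qPochhammer, qPochhammer]
  ring

theorem pow_choose_two_mul_div_pow_pow (hq0 : q ≠ 0) (hζ : ζ ≠ 0) (N k : ℕ) :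
    q ^ k.choose 2 * (ζ / q ^ N) ^ k =
      ζ ^ N / q ^ (N + 1).choose 2 *
        (q ^ (((k : ℤ) - N) * ((k : ℤ) - N - 1) / 2) * ζ ^ ((k : ℤ) - N)) := by
  have hexp : ((k : ℤ) - N) * ((k : ℤ) - N - 1) / 2 =
      ((k.choose 2 + (N + 1).choose 2 : ℕ) : ℤ) - ((N * k : ℕ) : ℤ) := by
    have hk := Int.ediv_two_mul_two_of_even (Int.even_mul_pred_self k)
    have hN := Int.ediv_two_mul_two_of_even (Int.even_mul_pred_self (N + 1))
    have hkN := Int.ediv_two_mul_two_of_even (Int.even_mul_pred_self (k - N))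
    push_cast [Int.natCast_choose_two]
    linarith
  rw [hexp, zpow_sub₀ hq0, zpow_sub₀ hζ, zpow_natCast, zpow_natCast, zpow_natCast, zpow_natCast,
    pow_add, div_pow, ← pow_mul]
  field_simp

theorem qPochhammer_mul_qPochhammer_eq_sum (hq : ∀ j, q ^ (j + 1) ≠ 1) (hq0 : q ≠ 0)
    (hζ : ζ ≠ 0) (N : ℕ) :
    qPochhammer (-ζ) q N * qPochhammer (-q / ζ) q N =
      ∑ n ∈ Icc (-N : ℤ) N,
        qBinomial q (2 * N) (n + N).toNat * (q ^ (n * (n - 1) / 2) * ζ ^ n) := by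
  refine mul_left_cancel₀ (div_ne_zero (pow_ne_zero N hζ) (pow_ne_zero ((N + 1).choose 2) hq0)) ?_
  rw [← qPochhammer_neg_div_pow_two_mul hq0 hζ, qPochhammer_neg_eq_sum hq, mul_sum]
  refine sum_nbij' (fun k ↦ (k : ℤ) - N) (fun n ↦ (n + N).toNat) ?_ ?_ ?_ ?_ ?_
  · intro k hk
    simp only [mem_range, mem_Icc] at hk ⊢
    omega
  · intro n hn
    simp only [mem_range, mem_Icc] at hn ⊢
    omega
  · intro k _
    simp
  · intro n hn
    simp only [mem_Icc] at hn
    omega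
  · intro k _
    rw [mul_assoc, pow_choose_two_mul_div_pow_pow hq0 hζ, sub_add_cancel, Int.toNat_natCast]
    ring

end Algebra

section Analysis

variable {𝕜 : Type*} [NormedField 𝕜] {q : 𝕜}

theorem pow_succ_ne_one_of_norm_lt_one (hq : ‖q‖ < 1) (j : ℕ) : q ^ (j + 1) ≠ 1 := by
  refine ne_of_apply_ne norm ?_
  rw [norm_pow, norm_one]
  exact (pow_lt_one₀ (norm_nonneg q) hq j.succ_ne_zero).ne

theorem summable_norm_mul_pow (hq : ‖q‖ < 1) (a : 𝕜) : Summable fun j : ℕ ↦ ‖a * q ^ j‖ := by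
  simpa [norm_mul, norm_pow] using (summable_geometric_of_lt_one (norm_nonneg q) hq).mul_left ‖a‖

theorem summable_norm_pow_choose_two_mul_pow (hq : ‖q‖ < 1) (z : 𝕜) :
    Summable fun n : ℕ ↦ ‖q ^ n.choose 2 * z ^ n‖ := by
  refine summable_of_ratio_norm_eventually_le one_half_lt_one ?_
  have h : Tendsto (fun n : ℕ ↦ ‖q‖ ^ n * ‖z‖) atTop (𝓝 0) := by
    simpa using (tendsto_pow_atTop_nhds_zero_of_lt_one (norm_nonneg q) hq).mul_const ‖z‖
  filter_upwards [h.eventually (ge_mem_nhds one_half_pos)] with n hn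
  calc ‖‖q ^ (n + 1).choose 2 * z ^ (n + 1)‖‖ = ‖q‖ ^ n * ‖z‖ * ‖‖q ^ n.choose 2 * z ^ n‖‖ := by
        simp only [norm_norm, norm_mul, norm_pow, Nat.choose_succ_succ', Nat.choose_one_right]
        ring
    _ ≤ 1 / 2 * ‖‖q ^ n.choose 2 * z ^ n‖‖ := by gcongr

theorem summable_norm_pow_mul_zpow (hq : ‖q‖ < 1) (ζ : 𝕜) :
    Summable fun n : ℤ ↦ ‖q ^ (n * (n - 1) / 2) * ζ ^ n‖ := by
  refine Summable.of_nat_of_neg ?_ ?_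
  · simpa [← Int.natCast_choose_two] using summable_norm_pow_choose_two_mul_pow hq ζ
  · refine (summable_norm_pow_choose_two_mul_pow hq (q / ζ)).congr fun n ↦ ?_
    have hexp : (-n : ℤ) * (-n - 1) / 2 = ((n + 1).choose 2 : ℕ) := by
      rw [Int.natCast_choose_two]
      push_cast
      ring_nf
    rw [hexp, zpow_natCast, zpow_neg, zpow_natCast, Nat.choose_succ_succ', Nat.choose_one_right,
      pow_add, div_pow, div_eq_mul_inv]
    ring_nf

variable [CompleteSpace 𝕜]

theorem multipliable_one_sub_mul_pow (hq : ‖q‖ < 1) (a : 𝕜) :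
    Multipliable fun j : ℕ ↦ 1 - a * q ^ j := by
  simpa [sub_eq_add_neg] using
    multipliable_one_add_of_summable (f := fun j ↦ -(a * q ^ j))
      (by simpa using summable_norm_mul_pow hq a)

theorem tendsto_qPochhammer (hq : ‖q‖ < 1) (a : 𝕜) :
    Tendsto (qPochhammer a q) atTop (𝓝 (∏' j : ℕ, (1 - a * q ^ j))) :=
  (multipliable_one_sub_mul_pow hq a).hasProd.tendsto_prod_nat

theorem tprod_one_sub_self_mul_pow_ne_zero (hq : ‖q‖ < 1) : ∏' j : ℕ, (1 - q * q ^ j) ≠ 0 := by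
  simpa [sub_eq_add_neg] using tprod_one_add_ne_zero_of_summable (f := fun j ↦ -(q * q ^ j))
    (fun j ↦ by
      rw [← sub_eq_add_neg]
      exact one_sub_self_mul_pow_ne_zero (pow_succ_ne_one_of_norm_lt_one hq) j)
    (by simpa using summable_norm_mul_pow hq q)

theorem exists_norm_qBinomial_le (hq : ‖q‖ < 1) : ∃ C, ∀ m k, ‖qBinomial q m k‖ ≤ C := by
  obtain ⟨A, hA⟩ := isBounded_iff_forall_norm_le.1
    (Metric.isBounded_range_of_tendsto _ (tendsto_qPochhammer hq q))
  obtain ⟨B, hB⟩ := isBounded_iff_forall_norm_le.1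
    (Metric.isBounded_range_of_tendsto _
      ((tendsto_qPochhammer hq q).inv₀ (tprod_one_sub_self_mul_pow_ne_zero hq)))
  have hA0 : 0 ≤ A := (norm_nonneg _).trans (hA _ ⟨0, rfl⟩)
  have hB0 : 0 ≤ B := (norm_nonneg _).trans (hB _ ⟨0, rfl⟩)
  refine ⟨A * B * B, fun m k ↦ ?_⟩
  unfold qBinomial
  split_ifs
  · rw [div_mul_eq_div_div, div_eq_mul_inv, div_eq_mul_inv, norm_mul, norm_mul]
    gcongr
    exacts [hA _ ⟨m, rfl⟩, hB _ ⟨k, rfl⟩, hB _ ⟨m - k, rfl⟩]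
  · rw [norm_zero]
    positivity

theorem tendsto_qBinomial_add (hq : ‖q‖ < 1) {α : Type*} {l : Filter α} {a b : α → ℕ}
    (ha : Tendsto a l atTop) (hb : Tendsto b l atTop) :
    Tendsto (fun x ↦ qBinomial q (a x + b x) (a x)) l (𝓝 (∏' j : ℕ, (1 - q * q ^ j))⁻¹) := by
  have hP := tendsto_qPochhammer hq q
  have hP0 := tprod_one_sub_self_mul_pow_ne_zero hq
  have hab : Tendsto (fun x ↦ a x + b x) l atTop :=
    tendsto_atTop_mono (fun x ↦ Nat.le_add_right _ _) ha
  have h := (hP.comp hab).div ((hP.comp ha).mul (hP.comp hb)) (mul_ne_zero hP0 hP0)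
  rw [div_mul_cancel_left₀ hP0] at h
  exact h.congr fun x ↦ (qBinomial_add_left _ _).symm

theorem tendsto_qPochhammer_mul_qPochhammer (hq0 : q ≠ 0) (hq1 : ‖q‖ < 1) {ζ : 𝕜}
    (hζ : ζ ≠ 0) :
    Tendsto (fun N ↦ qPochhammer (-ζ) q N * qPochhammer (-q / ζ) q N) atTop
      (𝓝 (∑' n : ℤ, (∏' j : ℕ, (1 - q * q ^ j))⁻¹ * (q ^ (n * (n - 1) / 2) * ζ ^ n))) := by
  obtain ⟨C, hC⟩ := exists_norm_qBinomial_le hq1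
  let F : ℕ → ℤ → 𝕜 := fun N n ↦ if n ∈ Icc (-N : ℤ) N then
    qBinomial q (2 * N) (n + N).toNat * (q ^ (n * (n - 1) / 2) * ζ ^ n) else 0
  have hF : ∀ N, ∑' n, F N n = qPochhammer (-ζ) q N * qPochhammer (-q / ζ) q N := by
    intro N
    rw [tsum_eq_sum (s := Icc (-N : ℤ) N) fun n hn ↦ if_neg hn,
      qPochhammer_mul_qPochhammer_eq_sum (pow_succ_ne_one_of_norm_lt_one hq1) hq0 hζ]
    exact sum_congr rfl fun n hn ↦ if_pos hn
  have hlim : ∀ n : ℤ, Tendsto (F · n) atTop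
      (𝓝 ((∏' j : ℕ, (1 - q * q ^ j))⁻¹ * (q ^ (n * (n - 1) / 2) * ζ ^ n))) := by
    intro n
    have ha : Tendsto (fun N : ℕ ↦ (n + N).toNat) atTop atTop :=
      tendsto_atTop_atTop.2 fun b ↦ ⟨b + n.natAbs, fun N hN ↦ by omega⟩
    have hb : Tendsto (fun N : ℕ ↦ (N - n).toNat) atTop atTop :=
      tendsto_atTop_atTop.2 fun b ↦ ⟨b + n.natAbs, fun N hN ↦ by omega⟩
    refine ((tendsto_qBinomial_add hq1 ha hb).mul_const _).congr' ?_
    filter_upwards [eventually_ge_atTop n.natAbs] with N hN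
    have h2N : 2 * N = (n + N).toNat + (N - n).toNat := by omega
    simp only [F]
    rw [if_pos (mem_Icc.2 ⟨by omega, by omega⟩), h2N]
  have hbound : ∀ N n, ‖F N n‖ ≤ C * ‖q ^ (n * (n - 1) / 2) * ζ ^ n‖ := by
    intro N n
    unfold F
    split_ifs
    · rw [norm_mul]
      exact mul_le_mul_of_nonneg_right (hC _ _) (norm_nonneg _)
    · rw [norm_zero]
      exact mul_nonneg ((norm_nonneg _).trans (hC 0 0)) (norm_nonneg _)
  simpa only [hF] using tendsto_tsum_of_dominated_convergence
    ((summable_norm_pow_mul_zpow hq1 ζ).mul_left C) hlim (.of_forall hbound)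

end Analysis

/-- The Jacobi triple product identity: for `0 < |q| < 1` and `ζ ≠ 0`,
`(−ζ; q)_∞ (−q/ζ; q)_∞ (q; q)_∞ = Σ_{n∈ℤ} q^{n(n−1)/2} ζ^n`,
where `(t; q)_∞ = ∏_{j≥0}(1 − t q^j)`. -/
theorem jacobi_triple_product (q ζ : ℂ) (hq0 : 0 < ‖q‖)
    (hq1 : ‖q‖ < 1) (hζ : ζ ≠ 0) :
    (∏' j : ℕ, (1 - (-ζ) * q ^ j)) * (∏' j : ℕ, (1 - (-q / ζ) * q ^ j)) *
        (∏' j : ℕ, (1 - q * q ^ j)) =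
      ∑' n : ℤ, q ^ (n * (n - 1) / 2) * ζ ^ n := by
  have hprod := tendsto_nhds_unique
    ((tendsto_qPochhammer hq1 (-ζ)).mul (tendsto_qPochhammer hq1 (-q / ζ)))
    (tendsto_qPochhammer_mul_qPochhammer (norm_pos_iff.1 hq0) hq1 hζ)
  rw [hprod, tsum_mul_left, mul_comm,
    mul_inv_cancel_left₀ (tprod_one_sub_self_mul_pow_ne_zero hq1)]
end
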